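/- arXiv:2112.04743 — 4 statements merged into one kernel-verified Lean document; each statement's English description precedes it below -/
import Mathlib

section
/- Pentagon relation (Proposition 2.2(2)): For all n, n' ∈ N⁺ and all c ∈ ℚ with c ≠ 0 and ω(n', n) = 1/c, one has Ψ_c[n'] ∘ Ψ_c[n] = Ψ_c[n] ∘ Ψ_c[n+n'] ∘ Ψ_c[n'] as ℚ-algebra endomorphisms of R. -/
open MvPowerSeries

noncomputable section

/-- `R = ℚ[[x₁, x₂]]`, formal power series in two variables over `ℚ`. -/
abbrev R2 : Type := MvPowerSeries (Fin 2) ℚ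

/-- The skew-symmetric bilinear form `ω((a₁,a₂),(b₁,b₂)) = λ(a₁b₂ - a₂b₁)`. -/
def omegaForm (lam : ℚ) (a b : ℤ × ℤ) : ℚ := lam * (a.1 * b.2 - a.2 * b.1)

/-- Inclusion `ℕ² → ℤ²`. -/
def nn2z (n : ℕ × ℕ) : ℤ × ℤ := ((n.1 : ℤ), (n.2 : ℤ))

/-- The exponent `(n₁, n₂)` as a finitely supported function on `Fin 2`. -/
def expOf (n : ℕ × ℕ) : Fin 2 →₀ ℕ := Finsupp.single 0 n.1 + Finsupp.single 1 n.2

open Classical in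
/-- The binomial series `(1 + x^n)^q = Σ_{k ≥ 0} binom(q, k) x^{k n}`. -/
def binomSeries (n : ℕ × ℕ) (q : ℚ) : R2 := fun d =>
  if h : ∃ k : ℕ, d = k • expOf n then Ring.choose q h.choose else 0

/-- The maximal ideal `m = (x₁, x₂)` of `R`. -/
def maxIdeal : Ideal R2 := Ideal.span {(X 0 : R2), X 1}

/-- `f` is continuous for the `m`-adic topology. -/
def IsCont (f : R2 →ₐ[ℚ] R2) : Prop :=
  ∀ d : ℕ, ∃ e : ℕ, ∀ r : R2, r ∈ maxIdeal ^ e → f r ∈ maxIdeal ^ d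

/-- The standard basis `e₁ = (1,0)`, `e₂ = (0,1)`. -/
def basisVec : Fin 2 → ℕ × ℕ := ![(1, 0), (0, 1)]

/-- `f` is the continuous `ℚ`-algebra endomorphism `Ψ_c[n]` of `R`,
characterized by `Ψ_c[n](xᵢ) = xᵢ · (1 + x^n)^{c·ω(n, eᵢ)}`. -/
def IsDilog (lam c : ℚ) (n : ℕ × ℕ) (f : R2 →ₐ[ℚ] R2) : Prop :=
  IsCont f ∧ ∀ i : Fin 2,
    f (X i) = X i * binomSeries n (c * omegaForm lam (nn2z n) (nn2z (basisVec i)))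

/-- `f ≡ g mod m^d`, i.e. `f(xᵢ) - g(xᵢ) ∈ m^d` for `i = 1, 2`. -/
def ModEq (d : ℕ) (f g : R2 →ₐ[ℚ] R2) : Prop :=
  ∀ i : Fin 2, f (X i) - g (X i) ∈ maxIdeal ^ d

/-- `∏→_{p=a}^{b} f p`: left-to-right composition `f a ∘ f (a+1) ∘ ⋯ ∘ f b`
(the rightmost factor applied first). -/
def prodFwd (f : ℕ → (R2 →ₐ[ℚ] R2)) (a b : ℕ) : R2 →ₐ[ℚ] R2 :=
  ((List.range (b + 1 - a)).map (fun p => f (a + p))).prod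

/-- `∏←_{p=a}^{b} f p`: left-to-right composition `f b ∘ f (b-1) ∘ ⋯ ∘ f a`
(the rightmost factor applied first). -/
def prodBwd (f : ℕ → (R2 →ₐ[ℚ] R2)) (a b : ℕ) : R2 →ₐ[ℚ] R2 :=
  ((List.range (b + 1 - a)).reverse.map (fun p => f (a + p))).prod



open MvPowerSeries

noncomputable section

namespace PentagonAux

open Finset Polynomial

/-- The polynomial whose evaluation at `q : ℚ` is `Ring.choose q m`. -/
def chPoly (m : ℕ) : Polynomial ℚ := (m.factorial : ℚ)⁻¹ • descPochhammer ℚ m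

lemma chPoly_eval (q : ℚ) (m : ℕ) : (chPoly m).eval q = Ring.choose q m := by
  have h : (descPochhammer ℤ m).smeval q = m.factorial • Ring.choose q m :=
    Ring.descPochhammer_eq_factorial_smul_choose q m
  have h2 : (descPochhammer ℚ m).eval q = (descPochhammer ℤ m).smeval q := by
    rw [← Polynomial.eval₂_smulOneHom_eq_smeval, ← descPochhammer_map (Int.castRingHom ℚ) m,
      Polynomial.eval_map]
    congr 1
    exact Subsingleton.elim _ _
  rw [h2.symm] at h
  have hne : (m.factorial : ℚ) ≠ 0 := Nat.cast_ne_zero.mpr m.factorial_ne_zero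
  rw [chPoly, Polynomial.eval_smul, smul_eq_mul, h, nsmul_eq_mul, ← mul_assoc,
    inv_mul_cancel₀ hne, one_mul]

/-- A finite sum of (polynomial in `q`)-weighted vectors vanishing at all naturals
vanishes everywhere. -/
lemma nat_dense {A : Type*} [AddCommGroup A] [Module ℚ A] {ι : Type*} (S : Finset ι)
    (c : ι → Polynomial ℚ) (u : ι → A)
    (h : ∀ k : ℕ, ∑ i ∈ S, (c i).eval (k : ℚ) • u i = 0) (q : ℚ) :
    ∑ i ∈ S, (c i).eval q • u i = 0 := by
  rw [← Module.forall_dual_apply_eq_zero_iff ℚ]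
  intro φ
  have key : ∀ x : ℚ, φ (∑ i ∈ S, (c i).eval x • u i) = (∑ i ∈ S, φ (u i) • c i).eval x := by
    intro x
    rw [map_sum, Polynomial.eval_finset_sum]
    refine Finset.sum_congr rfl fun i _ => ?_
    rw [map_smul, Polynomial.eval_smul, smul_eq_mul, smul_eq_mul, mul_comm]
  have hpol : (∑ i ∈ S, φ (u i) • c i) = 0 := by
    apply Polynomial.eq_zero_of_infinite_isRoot
    apply Set.infinite_of_injective_forall_mem (f := (Nat.cast : ℕ → ℚ)) Nat.cast_injective
    intro k
    simp only [Set.mem_setOf_eq, Polynomial.IsRoot, ← key, h k, map_zero]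
  rw [key, hpol, Polynomial.eval_zero]

lemma nat_dense₂ {A : Type*} [AddCommGroup A] [Module ℚ A] {ι κ : Type*}
    (S : Finset ι) (T : Finset κ) (c : ι → Polynomial ℚ) (u : ι → A)
    (c' : κ → Polynomial ℚ) (v : κ → A)
    (h : ∀ k : ℕ, ∑ i ∈ S, (c i).eval (k : ℚ) • u i = ∑ j ∈ T, (c' j).eval (k : ℚ) • v j)
    (q : ℚ) : ∑ i ∈ S, (c i).eval q • u i = ∑ j ∈ T, (c' j).eval q • v j := by
  have main := nat_dense (S.disjSum T) (Sum.elim c (fun j => -c' j)) (Sum.elim u v) ?_ q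
  · rw [Finset.sum_disjSum] at main
    simp only [Sum.elim_inl, Sum.elim_inr, Polynomial.eval_neg, neg_smul,
      Finset.sum_neg_distrib] at main
    rw [← sub_eq_zero, sub_eq_add_neg]
    exact main
  · intro k
    rw [Finset.sum_disjSum]
    simp only [Sum.elim_inl, Sum.elim_inr, Polynomial.eval_neg, neg_smul,
      Finset.sum_neg_distrib]
    rw [h k]
    abel

end PentagonAux

end
noncomputable section

namespace PentagonAux

open Finset Polynomial

set_option linter.unusedSectionVars false

variable {A : Type*} [CommRing A] [Algebra ℚ A]

/-- Truncated binomial series `∑_{m<M} (q choose m) σ^m`. -/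
def PSQ (M : ℕ) (σ : A) (q : ℚ) : A := ∑ m ∈ Finset.range M, Ring.choose q m • σ ^ m

lemma PSQ_eq (M : ℕ) (σ : A) (q : ℚ) :
    PSQ M σ q = ∑ m ∈ Finset.range M, (chPoly m).eval q • σ ^ m := by
  unfold PSQ; exact Finset.sum_congr rfl fun m _ => by rw [chPoly_eval]

variable {M : ℕ} {σ τ : A}

lemma pow_eq_zero_of_le (hσ : σ ^ M = 0) {m : ℕ} (hm : M ≤ m) : σ ^ m = 0 := by
  calc σ ^ m = σ ^ M * σ ^ (m - M) := by rw [← pow_add, Nat.add_sub_cancel' hm]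
  _ = 0 := by rw [hσ, zero_mul]

lemma PSQ_nat (hσ : σ ^ M = 0) (k : ℕ) : PSQ M σ (k : ℚ) = (1 + σ) ^ k := by
  have e1 : PSQ M σ (k : ℚ) = ∑ m ∈ Finset.range (max M (k+1)), (k.choose m : ℚ) • σ ^ m := by
    unfold PSQ
    rw [Finset.sum_subset (Finset.range_subset_range.2 (le_max_left M (k+1))) (fun m _ hm => by
      rw [Finset.mem_range, not_lt] at hm
      rw [pow_eq_zero_of_le hσ hm, smul_zero])]
    exact Finset.sum_congr rfl fun m _ => by rw [Ring.choose_natCast]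
  have e2 : (1 + σ) ^ k = ∑ m ∈ Finset.range (max M (k+1)), (k.choose m : ℚ) • σ ^ m := by
    rw [add_comm, add_pow]
    rw [show ∑ m ∈ Finset.range (max M (k+1)), (k.choose m : ℚ) • σ ^ m
        = ∑ m ∈ Finset.range (k+1), (k.choose m : ℚ) • σ ^ m from
      (Finset.sum_subset (Finset.range_subset_range.2 (le_max_right M (k+1))) (fun m _ hm => by
        rw [Finset.mem_range, not_lt] at hm
        rw [Nat.choose_eq_zero_of_lt (by omega), Nat.cast_zero, zero_smul])).symm]
    refine Finset.sum_congr rfl fun m _ => ?_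
    rw [one_pow, mul_one, Nat.cast_smul_eq_nsmul, nsmul_eq_mul]
    ring
  rw [e1, e2]

private lemma PSQ_mul_right (K : A) (x : ℚ) :
    PSQ M σ x * K = ∑ m ∈ Finset.range M, (chPoly m).eval x • (σ ^ m * K) := by
  rw [PSQ_eq, Finset.sum_mul]
  exact Finset.sum_congr rfl fun m _ => smul_mul_assoc _ _ _

private lemma PSQ_mul_left (K : A) (x : ℚ) :
    K * PSQ M σ x = ∑ m ∈ Finset.range M, (chPoly m).eval x • (K * σ ^ m) := by
  rw [PSQ_eq, Finset.mul_sum]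
  exact Finset.sum_congr rfl fun m _ => (mul_smul_comm _ _ _)

private lemma PSQ_shift (x y : ℚ) :
    ∑ m ∈ Finset.range M, ((chPoly m).comp (Polynomial.X + Polynomial.C y)).eval x • σ ^ m
      = PSQ M σ (x + y) := by
  rw [PSQ_eq]
  exact Finset.sum_congr rfl fun m _ => by rw [eval_comp, eval_add, eval_X, eval_C]

lemma PSQ_add_exp (hσ : σ ^ M = 0) (a b : ℚ) :
    PSQ M σ a * PSQ M σ b = PSQ M σ (a + b) := by
  have step1 : ∀ (k : ℕ) (x : ℚ), PSQ M σ x * PSQ M σ (k : ℚ) = PSQ M σ (x + k) := by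
    intro k x
    have main := nat_dense₂ (Finset.range M) (Finset.range M)
      chPoly (fun m => σ ^ m * PSQ M σ (k : ℚ))
      (fun m => (chPoly m).comp (Polynomial.X + Polynomial.C (k : ℚ))) (fun m => σ ^ m) ?_ x
    · rw [PSQ_mul_right, main, PSQ_shift]
    · intro j
      rw [← PSQ_mul_right, PSQ_shift, PSQ_nat hσ, PSQ_nat hσ, ← Nat.cast_add, PSQ_nat hσ,
        pow_add]
  have main := nat_dense₂ (Finset.range M) (Finset.range M)
    chPoly (fun m => PSQ M σ a * σ ^ m)
    (fun m => (chPoly m).comp (Polynomial.X + Polynomial.C a)) (fun m => σ ^ m) ?_ b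
  · rw [PSQ_mul_left, main, PSQ_shift, add_comm b a]
  · intro k
    rw [← PSQ_mul_left, PSQ_shift, add_comm (k:ℚ) a, step1 k a]

lemma PSQ_mul_base (hσ : σ ^ M = 0) (hτ : τ ^ M = 0)
    (hστ : (σ + τ + σ * τ) ^ M = 0) (q : ℚ) :
    PSQ M σ q * PSQ M τ q = PSQ M (σ + τ + σ * τ) q := by
  have expand : ∀ x : ℚ, PSQ M σ x * PSQ M τ x
      = ∑ p ∈ Finset.range M ×ˢ Finset.range M,
          (chPoly p.1 * chPoly p.2).eval x • (σ ^ p.1 * τ ^ p.2) := by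
    intro x
    rw [PSQ_eq, PSQ_eq, Finset.sum_mul_sum, ← Finset.sum_product']
    refine Finset.sum_congr rfl fun p _ => ?_
    rw [eval_mul, smul_mul_smul_comm]
  have main := nat_dense₂ (Finset.range M ×ˢ Finset.range M) (Finset.range M)
    (fun p => chPoly p.1 * chPoly p.2) (fun p => σ ^ p.1 * τ ^ p.2)
    chPoly (fun m => (σ + τ + σ * τ) ^ m) ?_ q
  · rw [expand, main, PSQ_eq]
  · intro k
    rw [← expand, PSQ_nat hσ, PSQ_nat hτ, ← PSQ_eq, PSQ_nat hστ, ← mul_pow]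
    congr 1
    ring

end PentagonAux

end
namespace PentagonAux

open Finset

/-- Total degree of an exponent. -/
def deg (d : Fin 2 →₀ ℕ) : ℕ := d 0 + d 1

lemma deg_add (a b : Fin 2 →₀ ℕ) : deg (a + b) = deg a + deg b := by
  simp only [deg, Finsupp.add_apply]; ring

lemma deg_eq_zero {d : Fin 2 →₀ ℕ} (h : deg d = 0) : d = 0 := by
  have h0 : d 0 = 0 ∧ d 1 = 0 := by unfold deg at h; omega
  ext j
  fin_cases j
  · exact h0.1
  · exact h0.2

lemma deg_zero : deg 0 = 0 := by simp [deg]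

/-- The ideal of power series whose coefficients vanish in total degree `< N`. -/
def Kid (N : ℕ) : Ideal R2 where
  carrier := {f | ∀ d, deg d < N → coeff d f = 0}
  zero_mem' := fun d _ => by simp
  add_mem' := fun hf hg d hd => by rw [map_add, hf d hd, hg d hd, add_zero]
  smul_mem' := fun c f hf => by
    intro d hd
    rw [smul_eq_mul, coeff_mul]
    apply Finset.sum_eq_zero
    intro p hp
    rw [Finset.HasAntidiagonal.mem_antidiagonal] at hp
    rw [hf p.2 ?_, mul_zero]
    have : deg p.1 + deg p.2 = deg d := by rw [← deg_add, hp]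
    omega

lemma mem_Kid {N : ℕ} {x : R2} : x ∈ Kid N ↔ ∀ d, deg d < N → coeff d x = 0 := Iff.rfl

lemma Kid_antitone {N M : ℕ} (h : N ≤ M) : Kid M ≤ Kid N :=
  fun _ hx d hd => hx d (by omega)

lemma Kid_mul {a b : ℕ} {x y : R2} (hx : x ∈ Kid a) (hy : y ∈ Kid b) :
    x * y ∈ Kid (a + b) := by
  intro d hd
  rw [coeff_mul]
  apply Finset.sum_eq_zero
  intro p hp
  rw [Finset.HasAntidiagonal.mem_antidiagonal] at hp
  have hdeg : deg p.1 + deg p.2 = deg d := by rw [← deg_add, hp]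
  rcases Nat.lt_or_ge (deg p.1) a with h1 | h1
  · rw [hx p.1 h1, zero_mul]
  · rw [hy p.2 (by omega), mul_zero]

lemma mem_Kid_one_iff {x : R2} : x ∈ Kid 1 ↔ constantCoeff x = 0 := by
  constructor
  · intro h
    rw [← coeff_zero_eq_constantCoeff_apply]
    exact h 0 (by rw [deg_zero]; omega)
  · intro h d hd
    have : d = 0 := deg_eq_zero (by omega)
    rw [this, coeff_zero_eq_constantCoeff_apply, h]

lemma pow_mem_Kid {x : R2} (hx : x ∈ Kid 1) (k : ℕ) : x ^ k ∈ Kid k := by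
  induction k with
  | zero => exact fun d hd => absurd hd (by omega)
  | succ k ih => rw [pow_succ]; exact Kid_mul ih hx

lemma X_mem_Kid_one (i : Fin 2) : (X i : R2) ∈ Kid 1 := by
  rw [mem_Kid_one_iff, constantCoeff_X]

lemma maxIdeal_le_Kid_one : maxIdeal ≤ Kid 1 := by
  rw [maxIdeal, Ideal.span_le]
  rintro y hy
  simp only [Set.mem_insert_iff, Set.mem_singleton_iff] at hy
  rcases hy with rfl | rfl <;> exact X_mem_Kid_one _

lemma maxIdeal_pow_le (N : ℕ) : maxIdeal ^ N ≤ Kid N := by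
  induction N with
  | zero => exact fun x _ d hd => absurd hd (by omega)
  | succ N ih =>
    rw [pow_succ]
    exact Ideal.mul_le.2 fun a ha b hb => Kid_mul (ih ha) (maxIdeal_le_Kid_one hb)

lemma X_mem_maxIdeal (i : Fin 2) : (X i : R2) ∈ maxIdeal := by
  apply Ideal.subset_span
  fin_cases i
  · exact Set.mem_insert _ _
  · exact Set.mem_insert_of_mem _ rfl

lemma Kid_le_maxIdeal_pow (N : ℕ) : Kid N ≤ maxIdeal ^ N := by
  induction N with
  | zero => intro x _; rw [pow_zero, Ideal.one_eq_top]; trivial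
  | succ N ih =>
    intro f hf
    set g0 : R2 := fun d => coeff (d + Finsupp.single 0 1) f with hg0
    set g1 : R2 := fun d => if d 0 = 0 then coeff (d + Finsupp.single 1 1) f else 0 with hg1
    have hX0 : ∀ (g : R2) (d : Fin 2 →₀ ℕ) (i : Fin 2), coeff d ((X i : R2) * g)
        = if Finsupp.single i 1 ≤ d then coeff (d - Finsupp.single i 1) g else 0 := by
      intro g d i
      rw [X, coeff_monomial_mul, one_mul]  -- may need X_def
    have hdec : f = X 0 * g0 + X 1 * g1 := by
      apply MvPowerSeries.ext
      intro d
      rw [map_add, hX0, hX0]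
      by_cases h0 : d 0 = 0
      · rw [if_neg (by rw [Finsupp.single_le_iff]; omega)]
        by_cases h1 : d 1 = 0
        · have hd0 : d = 0 := by
            ext j; fin_cases j
            · exact h0
            · exact h1
          rw [if_neg (by rw [Finsupp.single_le_iff]; omega)]
          rw [hd0, hf 0 (by rw [deg_zero]; omega)]
          ring
        · rw [if_pos (by rw [Finsupp.single_le_iff]; omega)]
          have hsub : d - Finsupp.single 1 1 + Finsupp.single 1 1 = d :=
            tsub_add_cancel_of_le (by rw [Finsupp.single_le_iff]; omega)
          have : coeff (d - Finsupp.single 1 1) g1 = coeff d f := by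
            rw [coeff_apply]
            simp only [hg1]
            have hc : ((d - Finsupp.single 1 1 : Fin 2 →₀ ℕ)) 0 = 0 := by
              rw [Finsupp.tsub_apply]
              omega
            rw [if_pos hc, hsub]
          rw [this]
          ring
      · rw [if_pos (by rw [Finsupp.single_le_iff]; omega)]
        have hsub : d - Finsupp.single 0 1 + Finsupp.single 0 1 = d :=
          tsub_add_cancel_of_le (by rw [Finsupp.single_le_iff]; omega)
        have e0 : coeff (d - Finsupp.single 0 1) g0 = coeff d f := by
          rw [coeff_apply]
          simp only [hg0]
          rw [hsub]
        rw [e0]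
        by_cases h1 : Finsupp.single (1 : Fin 2) 1 ≤ d
        · rw [if_pos h1]
          have hc : ((d - Finsupp.single 1 1 : Fin 2 →₀ ℕ)) 0 ≠ 0 := by
            rw [Finsupp.tsub_apply]
            have : Finsupp.single (1 : Fin 2) 1 0 = 0 := by
              rw [Finsupp.single_apply]; simp
            omega
          have : coeff (d - Finsupp.single 1 1) g1 = 0 := by
            rw [coeff_apply]
            simp only [hg1]
            rw [if_neg hc]
          rw [this]; ring
        · rw [if_neg h1]; ring
    have hg0m : g0 ∈ Kid N := by
      intro d hd
      rw [coeff_apply]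
      simp only [hg0]
      apply hf
      rw [deg_add]
      have : deg (Finsupp.single (0 : Fin 2) 1) = 1 := by
        simp [deg, Finsupp.single_apply]
      omega
    have hg1m : g1 ∈ Kid N := by
      intro d hd
      rw [coeff_apply]
      simp only [hg1]
      by_cases hc : d 0 = 0
      · rw [if_pos hc]
        apply hf
        rw [deg_add]
        have : deg (Finsupp.single (1 : Fin 2) 1) = 1 := by
          simp [deg, Finsupp.single_apply]
        omega
      · rw [if_neg hc]
    rw [hdec, pow_succ']
    exact add_mem (Ideal.mul_mem_mul (X_mem_maxIdeal 0) (ih hg0m))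
      (Ideal.mul_mem_mul (X_mem_maxIdeal 1) (ih hg1m))

lemma eq_zero_of_forall_Kid {x : R2} (h : ∀ N, x ∈ Kid N) : x = 0 := by
  apply MvPowerSeries.ext
  intro d
  rw [map_zero]
  exact h (deg d + 1) d (by omega)

end PentagonAux
namespace PentagonAux

open Finset

/-- Truncated binomial series in `R2`. -/
def PS (N : ℕ) (s : R2) (q : ℚ) : R2 := ∑ k ∈ Finset.range N, Ring.choose q k • s ^ k

/-- The power `(1+s)^q` for `s` without constant term. -/
def opow (s : R2) (q : ℚ) : R2 := fun d => coeff d (PS (deg d + 1) s q)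

lemma coeff_PS (N : ℕ) (s : R2) (q : ℚ) (d : Fin 2 →₀ ℕ) :
    coeff d (PS N s q) = ∑ k ∈ Finset.range N, Ring.choose q k * coeff d (s ^ k) := by
  rw [PS, map_sum]
  exact Finset.sum_congr rfl fun k _ => by rw [LinearMap.map_smul, smul_eq_mul]

lemma coeff_PS_stable {s : R2} (hs : s ∈ Kid 1) {N : ℕ} {d : Fin 2 →₀ ℕ} (hd : deg d < N)
    (q : ℚ) : coeff d (PS N s q) = coeff d (PS (deg d + 1) s q) := by
  rw [coeff_PS, coeff_PS]
  symm
  apply Finset.sum_subset (Finset.range_subset_range.2 (by omega))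
  intro k _ hk
  rw [Finset.mem_range, not_lt] at hk
  rw [pow_mem_Kid hs k d (by omega), mul_zero]

lemma coeff_opow {s : R2} (hs : s ∈ Kid 1) {N : ℕ} {d : Fin 2 →₀ ℕ} (hd : deg d < N)
    (q : ℚ) : coeff d (opow s q) = coeff d (PS N s q) := by
  rw [coeff_PS_stable hs hd]
  rfl

lemma opow_sub_PS {s : R2} (hs : s ∈ Kid 1) (N : ℕ) (q : ℚ) :
    opow s q - PS N s q ∈ Kid N := by
  intro d hd
  rw [map_sub, coeff_opow hs hd, sub_self]

/-- Quotient map to `R2 ⧸ Kid N`. -/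
def mkQ (N : ℕ) : R2 →ₐ[ℚ] R2 ⧸ Kid N := Ideal.Quotient.mkₐ ℚ (Kid N)

lemma mkQ_eq_zero_iff {N : ℕ} {x : R2} : mkQ N x = 0 ↔ x ∈ Kid N := by
  rw [mkQ, Ideal.Quotient.mkₐ_eq_mk, Ideal.Quotient.eq_zero_iff_mem]

lemma eq_of_forall_mkQ {x y : R2} (h : ∀ N, mkQ N x = mkQ N y) : x = y := by
  rw [← sub_eq_zero]
  apply eq_zero_of_forall_Kid
  intro N
  rw [← mkQ_eq_zero_iff, map_sub, h N, sub_self]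

lemma mkQ_nil {N : ℕ} {s : R2} (hs : s ∈ Kid 1) : (mkQ N s) ^ N = 0 := by
  rw [← map_pow, mkQ_eq_zero_iff]
  exact pow_mem_Kid hs N

lemma mkQ_PS (N : ℕ) (s : R2) (q : ℚ) : mkQ N (PS N s q) = PSQ N (mkQ N s) q := by
  rw [PS, PSQ, map_sum]
  exact Finset.sum_congr rfl fun k _ => by rw [map_smul, map_pow]

lemma mkQ_opow {N : ℕ} {s : R2} (hs : s ∈ Kid 1) (q : ℚ) :
    mkQ N (opow s q) = PSQ N (mkQ N s) q := by
  have h : mkQ N (opow s q) = mkQ N (PS N s q) := by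
    rw [← sub_eq_zero, ← map_sub, mkQ_eq_zero_iff]
    exact opow_sub_PS hs N q
  rw [h, mkQ_PS]

lemma opow_add {s : R2} (hs : s ∈ Kid 1) (a b : ℚ) :
    opow s a * opow s b = opow s (a + b) := by
  apply eq_of_forall_mkQ
  intro N
  rw [map_mul, mkQ_opow hs, mkQ_opow hs, mkQ_opow hs, PSQ_add_exp (mkQ_nil hs)]

lemma opow_mul_base {s t : R2} (hs : s ∈ Kid 1) (ht : t ∈ Kid 1) (q : ℚ) :
    opow s q * opow t q = opow (s + t + s * t) q := by
  have hst : s + t + s * t ∈ Kid 1 :=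
    add_mem (add_mem hs ht) (Ideal.mul_mem_right _ _ hs)
  apply eq_of_forall_mkQ
  intro N
  rw [map_mul, mkQ_opow hs, mkQ_opow ht, mkQ_opow hst]
  rw [PSQ_mul_base (mkQ_nil hs) (mkQ_nil ht) ?_]
  · rw [map_add, map_add, map_mul]
  · rw [show mkQ N s + mkQ N t + mkQ N s * mkQ N t = mkQ N (s + t + s * t) by
      rw [map_add, map_add, map_mul]]
    exact mkQ_nil hst

lemma opow_natCast {s : R2} (hs : s ∈ Kid 1) (k : ℕ) : opow s (k : ℚ) = (1 + s) ^ k := by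
  apply eq_of_forall_mkQ
  intro N
  rw [mkQ_opow hs, PSQ_nat (mkQ_nil hs), map_pow, map_add, map_one]

lemma opow_zero {s : R2} (hs : s ∈ Kid 1) : opow s 0 = 1 := by
  have := opow_natCast hs 0
  rw [Nat.cast_zero, pow_zero] at this
  exact this

lemma opow_one {s : R2} (hs : s ∈ Kid 1) : opow s 1 = 1 + s := by
  have := opow_natCast hs 1
  rw [Nat.cast_one, pow_one] at this
  exact this

lemma opow_pow {s : R2} (hs : s ∈ Kid 1) (q : ℚ) (k : ℕ) :
    (opow s q) ^ k = opow s (k * q) := by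
  induction k with
  | zero => rw [pow_zero, Nat.cast_zero, zero_mul, opow_zero hs]
  | succ k ih =>
    rw [pow_succ, ih, opow_add hs]
    congr 1
    push_cast
    ring

lemma map_opow (f : R2 →ₐ[ℚ] R2) (hf : IsCont f) {s : R2} (hs : s ∈ Kid 1)
    (hfs : f s ∈ Kid 1) (q : ℚ) : f (opow s q) = opow (f s) q := by
  rw [← sub_eq_zero]
  apply eq_zero_of_forall_Kid
  intro d
  obtain ⟨e, he⟩ := hf d
  set E := max (max e d) 1 with hE
  have h1 : opow s q - PS E s q ∈ maxIdeal ^ e := by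
    apply Ideal.pow_le_pow_right (le_trans (le_max_left e d) (le_max_left _ 1))
    exact Kid_le_maxIdeal_pow E (opow_sub_PS hs E q)
  have h2 : f (opow s q - PS E s q) ∈ Kid d := maxIdeal_pow_le d (he _ h1)
  have h3 : f (PS E s q) = PS E (f s) q := by
    rw [PS, PS, map_sum]
    exact Finset.sum_congr rfl fun k _ => by rw [map_smul, map_pow]
  have h4 : PS E (f s) q - opow (f s) q ∈ Kid d := by
    have := opow_sub_PS hfs E q
    have hneg : PS E (f s) q - opow (f s) q ∈ Kid E := by
      rw [show PS E (f s) q - opow (f s) q = -(opow (f s) q - PS E (f s) q) by ring]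
      exact neg_mem this
    exact Kid_antitone (le_trans (le_max_right e d) (le_max_left _ 1)) hneg
  have : f (opow s q) - opow (f s) q
      = f (opow s q - PS E s q) + (PS E (f s) q - opow (f s) q) := by
    rw [map_sub, h3]
    ring
  rw [this]
  exact add_mem h2 h4

end PentagonAux
namespace PentagonAux

open Finset

/-- `x^p = x₁^{p₁} x₂^{p₂}`. -/
def monX (p : ℕ × ℕ) : R2 := X 0 ^ p.1 * X 1 ^ p.2

lemma expOf_apply0 (p : ℕ × ℕ) : expOf p 0 = p.1 := by
  simp [expOf, Finsupp.single_apply]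

lemma expOf_apply1 (p : ℕ × ℕ) : expOf p 1 = p.2 := by
  simp [expOf, Finsupp.single_apply]

lemma monX_monomial (p : ℕ × ℕ) : monX p = monomial (expOf p) 1 := by
  rw [monX, X_pow_eq, X_pow_eq, monomial_mul_monomial, one_mul, expOf]

lemma monX_mem {p : ℕ × ℕ} (hp : p ≠ 0) : monX p ∈ Kid 1 := by
  rw [mem_Kid_one_iff, monX, map_mul, map_pow, map_pow, constantCoeff_X, constantCoeff_X]
  have : p.1 ≠ 0 ∨ p.2 ≠ 0 := by
    by_contra h
    push_neg at h
    exact hp (Prod.ext h.1 h.2)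
  rcases this with h | h
  · rw [zero_pow h, zero_mul]
  · rw [zero_pow h, mul_zero]

lemma monX_add (p p' : ℕ × ℕ) : monX (p + p') = monX p * monX p' := by
  simp only [monX, Prod.fst_add, Prod.snd_add, pow_add]
  ring

lemma deg_expOf (p : ℕ × ℕ) : deg (expOf p) = p.1 + p.2 := by
  rw [deg, expOf_apply0, expOf_apply1]

lemma binom_eq_opow {n : ℕ × ℕ} (hn : n ≠ 0) (q : ℚ) :
    binomSeries n q = opow (monX n) q := by
  classical
  have hn' : n.1 ≠ 0 ∨ n.2 ≠ 0 := by
    by_contra h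
    push_neg at h
    exact hn (Prod.ext h.1 h.2)
  have hdegE : 1 ≤ deg (expOf n) := by rw [deg_expOf]; omega
  have hpow : ∀ k : ℕ, monX n ^ k = monomial (k • expOf n) 1 := by
    intro k
    induction k with
    | zero =>
      rw [pow_zero, zero_smul]
      exact (MvPowerSeries.monomial_zero_one (σ := Fin 2) (R := ℚ)).symm
    | succ k ih =>
      rw [pow_succ, ih, monX_monomial, monomial_mul_monomial, one_mul, succ_nsmul]
  have hdeg_smul : ∀ k : ℕ, deg (k • expOf n) = k * deg (expOf n) := by
    intro k
    simp only [deg, Finsupp.smul_apply, smul_eq_mul]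
    ring
  have huniq : ∀ k k' : ℕ, k • expOf n = k' • expOf n → k = k' := by
    intro k k' h
    rcases hn' with h1 | h1
    · have := congrArg (fun e : Fin 2 →₀ ℕ => e 0) h
      simp only [Finsupp.smul_apply, smul_eq_mul, expOf_apply0] at this
      exact Nat.eq_of_mul_eq_mul_right (by omega) this
    · have := congrArg (fun e : Fin 2 →₀ ℕ => e 1) h
      simp only [Finsupp.smul_apply, smul_eq_mul, expOf_apply1] at this
      exact Nat.eq_of_mul_eq_mul_right (by omega) this
  apply MvPowerSeries.ext
  intro d
  have hR : coeff d (opow (monX n) q)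
      = ∑ k ∈ Finset.range (deg d + 1), Ring.choose q k
          * (if d = k • expOf n then 1 else 0) := by
    rw [show coeff d (opow (monX n) q) = coeff d (PS (deg d + 1) (monX n) q) from rfl,
      coeff_PS]
    exact Finset.sum_congr rfl fun k _ => by rw [hpow k, coeff_monomial]
  have hL : coeff d (binomSeries n q)
      = if h : ∃ k : ℕ, d = k • expOf n then Ring.choose q h.choose else 0 := by
    rw [coeff_apply]
    rfl
  rw [hL, hR]
  by_cases h : ∃ k : ℕ, d = k • expOf n
  · obtain ⟨k₀, hk₀⟩ := h
    have hex : ∃ k : ℕ, d = k • expOf n := ⟨k₀, hk₀⟩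
    have hch : hex.choose = k₀ := huniq _ _ (hex.choose_spec.symm.trans hk₀)
    rw [dif_pos hex]
    have hk₀le : k₀ < deg d + 1 := by
      rw [hk₀, hdeg_smul]
      have := Nat.le_mul_of_pos_right k₀ (by omega : 0 < deg (expOf n))
      omega
    have : ∀ k ∈ Finset.range (deg d + 1),
        Ring.choose q k * (if d = k • expOf n then 1 else 0)
          = if k = k₀ then Ring.choose q k else 0 := by
      intro k _
      by_cases hk : k = k₀
      · subst hk
        rw [if_pos rfl, if_pos hk₀, mul_one]
      · rw [if_neg hk, if_neg, mul_zero]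
        intro hd
        exact hk (huniq k k₀ (hd.symm.trans hk₀).symm.symm)
    rw [Finset.sum_congr rfl this, Finset.sum_ite_eq' (Finset.range (deg d + 1)) k₀,
      if_pos (Finset.mem_range.2 hk₀le), hch]
  · rw [dif_neg h]
    symm
    apply Finset.sum_eq_zero
    intro k _
    rw [if_neg (fun hd => h ⟨k, hd⟩), mul_zero]

/-- Truncation of a power series below total degree `e`. -/
def truncF (e : ℕ) (r : R2) : R2 :=
  ∑ p ∈ Finset.range e ×ˢ Finset.range e, coeff (expOf p) r • monX p

lemma expOf_pair (d : Fin 2 →₀ ℕ) : expOf (d 0, d 1) = d := by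
  ext j
  have h0 := expOf_apply0 (d 0, d 1)
  have h1 := expOf_apply1 (d 0, d 1)
  fin_cases j
  · simpa using h0
  · simpa using h1

lemma sub_truncF_mem (e : ℕ) (r : R2) : r - truncF e r ∈ Kid e := by
  intro d hd
  rw [map_sub]
  have key : coeff d (truncF e r) = coeff d r := by
    rw [truncF, map_sum]
    have conv : ∀ p ∈ Finset.range e ×ˢ Finset.range e,
        coeff d (coeff (expOf p) r • monX p)
          = if p = (d 0, d 1) then coeff d r else 0 := by
      intro p _
      rw [LinearMap.map_smul, monX_monomial, coeff_monomial, smul_eq_mul]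
      by_cases hp : p = (d 0, d 1)
      · subst hp
        rw [if_pos rfl, if_pos (expOf_pair d).symm, expOf_pair, mul_one]
      · rw [if_neg hp, if_neg, mul_zero]
        intro hde
        apply hp
        have h0 : p.1 = d 0 := by rw [hde, ← expOf_apply0 p]
        have h1 : p.2 = d 1 := by rw [hde, ← expOf_apply1 p]
        exact Prod.ext h0 h1
    rw [Finset.sum_congr rfl conv, Finset.sum_ite_eq' _ ((d 0, d 1) : ℕ × ℕ)]
    rw [if_pos]
    rw [Finset.mem_product, Finset.mem_range, Finset.mem_range]
    unfold deg at hd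
    constructor <;> omega
  rw [key, sub_self]

lemma map_truncF {f g : R2 →ₐ[ℚ] R2} (h : ∀ i, f (X i) = g (X i)) (e : ℕ) (r : R2) :
    f (truncF e r) = g (truncF e r) := by
  rw [truncF, map_sum, map_sum]
  refine Finset.sum_congr rfl fun p _ => ?_
  rw [map_smul, map_smul, monX, map_mul, map_mul, map_pow, map_pow, map_pow, map_pow,
    h 0, h 1]

lemma isCont_comp {f g : R2 →ₐ[ℚ] R2} (hf : IsCont f) (hg : IsCont g) :
    IsCont (f.comp g) := by
  intro d
  obtain ⟨e1, h1⟩ := hf d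
  obtain ⟨e2, h2⟩ := hg e1
  exact ⟨e2, fun r hr => by rw [AlgHom.comp_apply]; exact h1 _ (h2 _ hr)⟩

lemma algHom_ext_cont {f g : R2 →ₐ[ℚ] R2} (hf : IsCont f) (hg : IsCont g)
    (h : ∀ i, f (X i) = g (X i)) : f = g := by
  apply AlgHom.ext
  intro r
  rw [← sub_eq_zero]
  apply eq_zero_of_forall_Kid
  intro d
  obtain ⟨e1, h1⟩ := hf d
  obtain ⟨e2, h2⟩ := hg d
  set E := max e1 e2 with hE
  have hm : r - truncF E r ∈ maxIdeal ^ E := Kid_le_maxIdeal_pow E (sub_truncF_mem E r)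
  have hfr : f (r - truncF E r) ∈ Kid d :=
    maxIdeal_pow_le d (h1 _ (Ideal.pow_le_pow_right (le_max_left _ _) hm))
  have hgr : g (r - truncF E r) ∈ Kid d :=
    maxIdeal_pow_le d (h2 _ (Ideal.pow_le_pow_right (le_max_right _ _) hm))
  have key : f r - g r = f (r - truncF E r) - g (r - truncF E r) := by
    rw [map_sub, map_sub, map_truncF h]
    ring
  rw [key]
  exact sub_mem hfr hgr

end PentagonAux
namespace PentagonAux

lemma omega_skew (lam : ℚ) (x y : ℤ × ℤ) : omegaForm lam x y = -omegaForm lam y x := by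
  simp only [omegaForm]
  ring

lemma omega_self (lam : ℚ) (x : ℤ × ℤ) : omegaForm lam x x = 0 := by
  simp only [omegaForm]
  ring

lemma nn2z_add (p p' : ℕ × ℕ) : nn2z (p + p') = nn2z p + nn2z p' := by
  simp only [nn2z, Prod.fst_add, Prod.snd_add, Prod.mk_add_mk]
  push_cast
  rfl

lemma omega_add_left (lam : ℚ) (x y z : ℤ × ℤ) :
    omegaForm lam (x + y) z = omegaForm lam x z + omegaForm lam y z := by
  simp only [omegaForm, Prod.fst_add, Prod.snd_add]
  push_cast
  ring

lemma omega_add_right (lam : ℚ) (x y z : ℤ × ℤ) :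
    omegaForm lam x (y + z) = omegaForm lam x y + omegaForm lam x z := by
  simp only [omegaForm, Prod.fst_add, Prod.snd_add]
  push_cast
  ring

lemma map_monX {lam c : ℚ} {m : ℕ × ℕ} (hm : m ≠ 0) {f : R2 →ₐ[ℚ] R2}
    (hf : IsDilog lam c m f) (p : ℕ × ℕ) :
    f (monX p) = monX p * opow (monX m) (c * omegaForm lam (nn2z m) (nn2z p)) := by
  obtain ⟨-, hv⟩ := hf
  have h0 := hv 0
  have h1 := hv 1
  rw [binom_eq_opow hm] at h0 h1
  have hmem := monX_mem hm
  rw [show monX p = X 0 ^ p.1 * X 1 ^ p.2 from rfl]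
  rw [map_mul, map_pow, map_pow, h0, h1, mul_pow, mul_pow,
    opow_pow hmem, opow_pow hmem, mul_mul_mul_comm, opow_add hmem]
  congr 1
  simp only [omegaForm, nn2z, basisVec, Matrix.cons_val_zero, Matrix.cons_val_one,
    Matrix.head_cons]
  push_cast
  ring

end PentagonAux
open PentagonAux in
theorem pentagon_relation (lam : ℚ) (hlam : lam ≠ 0)
    (Psi : ℚ → ℕ × ℕ → (R2 →ₐ[ℚ] R2))
    (hPsi : ∀ (c : ℚ) (n : ℕ × ℕ), n ≠ 0 → IsDilog lam c n (Psi c n))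
    (n n' : ℕ × ℕ) (hn : n ≠ 0) (hn' : n' ≠ 0)
    (c : ℚ) (hc : c ≠ 0)
    (hw : omegaForm lam (nn2z n') (nn2z n) = 1 / c) :
    (Psi c n').comp (Psi c n) =
      ((Psi c n).comp (Psi c (n + n'))).comp (Psi c n') := by
  classical
  obtain ⟨hcf, hvf⟩ := hPsi c n hn
  obtain ⟨hcf', hvf'⟩ := hPsi c n' hn'
  have hnn' : n + n' ≠ 0 := by
    intro h
    rw [Prod.ext_iff] at h
    simp only [Prod.fst_add, Prod.snd_add, Prod.fst_zero, Prod.snd_zero] at h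
    apply hn
    rw [Prod.ext_iff]
    simp only [Prod.fst_zero, Prod.snd_zero]
    omega
  obtain ⟨hcg, hvg⟩ := hPsi c (n + n') hnn'
  -- memberships in `Kid 1`
  have hum : monX n ∈ Kid 1 := monX_mem hn
  have hvm : monX n' ∈ Kid 1 := monX_mem hn'
  have hwm : monX (n + n') ∈ Kid 1 := monX_mem hnn'
  -- scalar identities
  have hson : c * omegaForm lam (nn2z n') (nn2z n) = 1 := by
    rw [hw]; field_simp
  have hnos : c * omegaForm lam (nn2z n) (nn2z n') = -1 := by
    rw [omega_skew lam (nn2z n) (nn2z n'), hw]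
    field_simp
  have hgv_exp : c * omegaForm lam (nn2z (n + n')) (nn2z n') = -1 := by
    rw [nn2z_add, omega_add_left, omega_self, add_zero]
    exact hnos
  have hfw_exp : c * omegaForm lam (nn2z n) (nn2z (n + n')) = -1 := by
    rw [nn2z_add, omega_add_right, omega_self, zero_add]
    exact hnos
  -- values on monomials
  have hf'u := map_monX (lam := lam) (c := c) hn' ⟨hcf', hvf'⟩ n
  rw [hson, opow_one hvm] at hf'u
  have hfv := map_monX (lam := lam) (c := c) hn ⟨hcf, hvf⟩ n'
  rw [hnos] at hfv
  have hgv := map_monX (lam := lam) (c := c) hnn' ⟨hcg, hvg⟩ n'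
  rw [hgv_exp] at hgv
  have hfw := map_monX (lam := lam) (c := c) hn ⟨hcf, hvf⟩ (n + n')
  rw [hfw_exp] at hfw
  -- more memberships
  have hK1 : Psi c n' (monX n) ∈ Kid 1 := by
    rw [hf'u]; exact Ideal.mul_mem_right _ _ hum
  have hKgv : Psi c (n + n') (monX n') ∈ Kid 1 := by
    rw [hgv]; exact Ideal.mul_mem_right _ _ hvm
  have hKfw : Psi c n (monX (n + n')) ∈ Kid 1 := by
    rw [hfw]; exact Ideal.mul_mem_right _ _ hwm
  have hKt : monX n' * opow (monX (n + n')) (-1) ∈ Kid 1 :=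
    Ideal.mul_mem_right _ _ hvm
  have hft : Psi c n (monX n' * opow (monX (n + n')) (-1))
      = (monX n' * opow (monX n) (-1)) * opow (monX (n + n') * opow (monX n) (-1)) (-1) := by
    rw [map_mul, hfv, map_opow (Psi c n) hcf hwm hKfw, hfw]
  have hKft : Psi c n (monX n' * opow (monX (n + n')) (-1)) ∈ Kid 1 := by
    rw [hft]
    exact Ideal.mul_mem_right _ _ (Ideal.mul_mem_right _ _ hvm)
  -- values on X i
  apply algHom_ext_cont (isCont_comp hcf' hcf) (isCont_comp (isCont_comp hcf hcg) hcf')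
  intro i
  have hfX := hvf i
  rw [binom_eq_opow hn] at hfX
  have hf'X := hvf' i
  rw [binom_eq_opow hn'] at hf'X
  have hgX := hvg i
  rw [binom_eq_opow hnn'] at hgX
  have hab : c * omegaForm lam (nn2z (n + n')) (nn2z (basisVec i))
      = c * omegaForm lam (nn2z n) (nn2z (basisVec i))
        + c * omegaForm lam (nn2z n') (nn2z (basisVec i)) := by
    rw [nn2z_add, omega_add_left]
    ring
  rw [hab] at hgX
  simp only [AlgHom.comp_apply]
  -- expand the left-hand side
  rw [hfX]
  rw [map_mul, hf'X, map_opow (Psi c n') hcf' hum hK1, hf'u]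
  rw [show monX n * (1 + monX n') = monX n + monX n * monX n' from by ring]
  -- expand the right-hand side
  rw [map_mul, hgX, map_opow (Psi c (n + n')) hcg hvm hKgv, hgv]
  rw [map_mul, map_mul, hfX, map_opow (Psi c n) hcf hwm hKfw, hfw,
    map_opow (Psi c n) hcf hKt hKft, hft]
  -- now a pure `opow` identity
  rw [monX_add n n']
  -- auxiliary multiplicative inverses
  have huv : monX n * monX n' ∈ Kid 1 := Ideal.mul_mem_right _ _ hum
  have hUVI : monX n * monX n' * opow (monX n) (-1) ∈ Kid 1 :=
    Ideal.mul_mem_right _ _ huv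
  have hVIJ : monX n' * opow (monX n) (-1)
      * opow (monX n * monX n' * opow (monX n) (-1)) (-1) ∈ Kid 1 :=
    Ideal.mul_mem_right _ _ (Ideal.mul_mem_right _ _ hvm)
  have hI1 : opow (monX n) (-1) * (1 + monX n) = 1 := by
    rw [← opow_one hum, opow_add hum, show (-1 : ℚ) + 1 = 0 from by norm_num, opow_zero hum]
  have hJ1 : opow (monX n * monX n' * opow (monX n) (-1)) (-1)
      * (1 + monX n * monX n' * opow (monX n) (-1)) = 1 := by
    rw [← opow_one hUVI, opow_add hUVI, show (-1 : ℚ) + 1 = 0 from by norm_num,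
      opow_zero hUVI]
  have E1 : opow (monX n) (c * omegaForm lam (nn2z n) (nn2z (basisVec i)))
      * opow (monX n * monX n' * opow (monX n) (-1))
          (c * omegaForm lam (nn2z n) (nn2z (basisVec i)))
      = opow (monX n + monX n * monX n')
          (c * omegaForm lam (nn2z n) (nn2z (basisVec i))) := by
    have harg : monX n + monX n * monX n' * opow (monX n) (-1)
        + monX n * (monX n * monX n' * opow (monX n) (-1)) = monX n + monX n * monX n' := by
      linear_combination (monX n * monX n') * hI1
    rw [opow_mul_base hum hUVI, harg]
  have E2 : opow (monX n * monX n' * opow (monX n) (-1))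
          (c * omegaForm lam (nn2z n') (nn2z (basisVec i)))
      * opow (monX n' * opow (monX n) (-1)
          * opow (monX n * monX n' * opow (monX n) (-1)) (-1))
          (c * omegaForm lam (nn2z n') (nn2z (basisVec i)))
      = opow (monX n') (c * omegaForm lam (nn2z n') (nn2z (basisVec i))) := by
    have harg2 : monX n * monX n' * opow (monX n) (-1)
        + monX n' * opow (monX n) (-1) * opow (monX n * monX n' * opow (monX n) (-1)) (-1)
        + monX n * monX n' * opow (monX n) (-1)
          * (monX n' * opow (monX n) (-1) * opow (monX n * monX n' * opow (monX n) (-1)) (-1))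
        = monX n' := by
      linear_combination (monX n' * opow (monX n) (-1)) * hJ1 + monX n' * hI1
    rw [opow_mul_base hUVI hVIJ, harg2]
  rw [← opow_add hUVI, ← E1, ← E2]
  ring

end
end

section
/- Lemma 3.2, equality (b2): For all n, n' ∈ N⁺ and all c ∈ ℚ with c ≠ 0 and ω(n', n) = 1/c, one has Ψ_c[n'] ∘ Ψ_{2c}[n] = Ψ_{2c}[n] ∘ Ψ_c[2n+n'] ∘ Ψ_{2c}[n+n'] ∘ Ψ_c[n'] as ℚ-algebra endomorphisms of R. -/
open MvPowerSeries

noncomputable section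

/-! ### Auxiliary development -/

section Aux

open Finset

/-- The ideal of series all of whose coefficients in total degree `< d` vanish. -/
def J (d : ℕ) : Ideal R2 where
  carrier := {r | ∀ e : Fin 2 →₀ ℕ, e 0 + e 1 < d → coeff e r = 0}
  add_mem' := by
    intro a b ha hb e he
    rw [map_add, ha e he, hb e he, add_zero]
  zero_mem' := by intro e he; simp
  smul_mem' := by
    classical
    intro c x hx e he
    rw [smul_eq_mul, coeff_mul]
    refine Finset.sum_eq_zero fun p hp => ?_
    rw [Finset.HasAntidiagonal.mem_antidiagonal] at hp
    have h0 : p.1 0 + p.2 0 = e 0 := by rw [← hp]; simp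
    have h1 : p.1 1 + p.2 1 = e 1 := by rw [← hp]; simp
    rw [hx p.2 (by omega), mul_zero]

lemma mem_J {d : ℕ} {r : R2} :
    r ∈ J d ↔ ∀ e : Fin 2 →₀ ℕ, e 0 + e 1 < d → coeff e r = 0 := Iff.rfl

lemma J_le {a b : ℕ} (h : a ≤ b) : J b ≤ J a := by
  intro r hr e he
  exact hr e (lt_of_lt_of_le he h)

lemma mul_mem_J {a b : ℕ} {r s : R2} (hr : r ∈ J a) (hs : s ∈ J b) :
    r * s ∈ J (a + b) := by
  classical
  intro e he
  rw [coeff_mul]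
  refine Finset.sum_eq_zero fun p hp => ?_
  rw [Finset.HasAntidiagonal.mem_antidiagonal] at hp
  have h0 : p.1 0 + p.2 0 = e 0 := by rw [← hp]; simp
  have h1 : p.1 1 + p.2 1 = e 1 := by rw [← hp]; simp
  rcases lt_or_ge (p.1 0 + p.1 1) a with hlt | hge
  · rw [hr p.1 hlt, zero_mul]
  · rw [hs p.2 (by omega), mul_zero]

lemma pow_mem_J {r : R2} (hr : r ∈ J 1) (k : ℕ) : r ^ k ∈ J k := by
  induction k with
  | zero => intro e he; omega
  | succ k ih =>
    rw [pow_succ]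
    exact mul_mem_J ih hr

lemma e_eq_single (e : Fin 2 →₀ ℕ) :
    e = Finsupp.single 0 (e 0) + Finsupp.single 1 (e 1) := by
  ext i; fin_cases i <;> simp

lemma e_eq_zero {e : Fin 2 →₀ ℕ} (h0 : e 0 = 0) (h1 : e 1 = 0) : e = 0 := by
  rw [e_eq_single e, h0, h1]; simp

lemma X_mem_maxIdeal (i : Fin 2) : (X i : R2) ∈ maxIdeal := by
  fin_cases i
  · exact Ideal.subset_span (Set.mem_insert _ _)
  · exact Ideal.subset_span (Set.mem_insert_of_mem _ rfl)

lemma X_mem_J1 (i : Fin 2) : (X i : R2) ∈ J 1 := by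
  intro e he
  have h0 : e 0 = 0 := by omega
  have h1 : e 1 = 0 := by omega
  rw [e_eq_zero h0 h1]
  exact coeff_zero_X i

lemma maxIdeal_le_J1 : maxIdeal ≤ J 1 := by
  rw [maxIdeal, Ideal.span_le]
  rintro x (rfl | rfl)
  · exact X_mem_J1 0
  · exact X_mem_J1 1

lemma J_split {d : ℕ} {r : R2} (hr : r ∈ J (d + 1)) :
    ∃ a b : R2, a ∈ J d ∧ b ∈ J d ∧ r = X 0 * a + X 1 * b := by
  classical
  refine ⟨(@id R2 fun e => coeff (e + Finsupp.single 0 1) r : R2),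
    (@id R2 fun e => if e 0 = 0 then coeff (e + Finsupp.single 1 1) r else 0 : R2), ?_, ?_, ?_⟩
  · intro e he
    show coeff (e + Finsupp.single 0 1) r = 0
    refine hr _ ?_
    have h0 : ((e + Finsupp.single 0 1 : Fin 2 →₀ ℕ)) 0 = e 0 + 1 := by simp
    have h1 : ((e + Finsupp.single 0 1 : Fin 2 →₀ ℕ)) 1 = e 1 := by simp
    omega
  · intro e he
    show (if e 0 = 0 then coeff (e + Finsupp.single 1 1) r else 0) = 0
    by_cases h : e 0 = 0
    · rw [if_pos h]
      refine hr _ ?_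
      have h0 : ((e + Finsupp.single 1 1 : Fin 2 →₀ ℕ)) 0 = e 0 := by simp
      have h1 : ((e + Finsupp.single 1 1 : Fin 2 →₀ ℕ)) 1 = e 1 + 1 := by simp
      omega
    · rw [if_neg h]
  · apply MvPowerSeries.ext
    intro e
    rw [map_add, X_def, X_def]
    erw [coeff_monomial_mul, coeff_monomial_mul]
    simp only [coeff_apply, one_mul]
    simp only [id]
    have hle0 : Finsupp.single (0 : Fin 2) 1 ≤ e ↔ 1 ≤ e 0 := by
      rw [Finsupp.single_le_iff]
    have hle1 : Finsupp.single (1 : Fin 2) 1 ≤ e ↔ 1 ≤ e 1 := by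
      rw [Finsupp.single_le_iff]
    by_cases h0 : Finsupp.single (0 : Fin 2) 1 ≤ e
    · rw [if_pos h0, tsub_add_cancel_of_le h0]
      have he0 : 1 ≤ e 0 := hle0.mp h0
      by_cases h1 : Finsupp.single (1 : Fin 2) 1 ≤ e
      · rw [if_pos h1]
        have hs : ((e - Finsupp.single (1 : Fin 2) 1 : Fin 2 →₀ ℕ)) 0 = e 0 := by
          rw [Finsupp.tsub_apply]; simp
        rw [hs, if_neg (by omega)]
        ring
      · rw [if_neg h1, add_zero]
    · rw [if_neg h0]
      have he0 : e 0 = 0 := by by_contra hne; exact h0 (hle0.mpr (by omega))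
      by_cases h1 : Finsupp.single (1 : Fin 2) 1 ≤ e
      · rw [if_pos h1]
        have hs : ((e - Finsupp.single (1 : Fin 2) 1 : Fin 2 →₀ ℕ)) 0 = e 0 := by
          rw [Finsupp.tsub_apply]; simp
        rw [hs, if_pos he0, tsub_add_cancel_of_le h1, zero_add]
      · rw [if_neg h1]
        have he1 : e 1 = 0 := by by_contra hne; exact h1 (hle1.mpr (by omega))
        show coeff e r = 0 + 0
        rw [hr e (by omega), add_zero]

lemma J_le_maxIdeal_pow (d : ℕ) : J d ≤ maxIdeal ^ d := by
  induction d with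
  | zero => simp
  | succ d ih =>
    intro r hr
    obtain ⟨a, b, ha, hb, rfl⟩ := J_split hr
    rw [pow_succ']
    exact Ideal.add_mem _ (Ideal.mul_mem_mul (X_mem_maxIdeal 0) (ih ha))
      (Ideal.mul_mem_mul (X_mem_maxIdeal 1) (ih hb))

lemma maxIdeal_pow_le_J (d : ℕ) : maxIdeal ^ d ≤ J d := by
  induction d with
  | zero => intro r _ e he; omega
  | succ d ih =>
    rw [pow_succ]
    refine Ideal.mul_le.mpr fun r hr s hs => ?_
    exact mul_mem_J (ih hr) (maxIdeal_le_J1 hs)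

lemma maxIdeal_pow_eq_J (d : ℕ) : maxIdeal ^ d = J d :=
  le_antisymm (maxIdeal_pow_le_J d) (J_le_maxIdeal_pow d)

lemma eq_of_sub_mem_J {a b : R2} (h : ∀ d, a - b ∈ J d) : a = b := by
  apply MvPowerSeries.ext
  intro e
  have := h (e 0 + e 1 + 1) e (by omega)
  rw [map_sub, sub_eq_zero] at this
  exact this

end Aux

section PolyFun

/-- `F : ℚ → ℚ` is a polynomial function. -/
def IsPolyFun (F : ℚ → ℚ) : Prop := ∃ p : Polynomial ℚ, ∀ x, F x = p.eval x

lemma isPolyFun_const (c : ℚ) : IsPolyFun (fun _ => c) :=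
  ⟨Polynomial.C c, fun x => by simp⟩

lemma IsPolyFun.add {F G : ℚ → ℚ} (hF : IsPolyFun F) (hG : IsPolyFun G) :
    IsPolyFun (fun q => F q + G q) := by
  obtain ⟨p, hp⟩ := hF; obtain ⟨r, hr⟩ := hG
  exact ⟨p + r, fun x => by simp [hp, hr]⟩

lemma IsPolyFun.mul {F G : ℚ → ℚ} (hF : IsPolyFun F) (hG : IsPolyFun G) :
    IsPolyFun (fun q => F q * G q) := by
  obtain ⟨p, hp⟩ := hF; obtain ⟨r, hr⟩ := hG
  exact ⟨p * r, fun x => by simp [hp, hr]⟩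

lemma isPolyFun_sum {ι : Type*} (s : Finset ι) (F : ι → ℚ → ℚ)
    (h : ∀ i ∈ s, IsPolyFun (F i)) : IsPolyFun (fun q => ∑ i ∈ s, F i q) := by
  classical
  induction s using Finset.induction with
  | empty => exact ⟨0, by simp⟩
  | @insert a s hx ih =>
    simp only [Finset.sum_insert hx]
    exact (h a (Finset.mem_insert_self a s)).add
      (ih fun i hi => h i (Finset.mem_insert_of_mem hi))

lemma choose_eval (k : ℕ) (x : ℚ) :
    Ring.choose x k =
      Polynomial.eval x (Polynomial.C ((k.factorial : ℚ))⁻¹ * descPochhammer ℚ k) := by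
  have h := Ring.descPochhammer_eq_factorial_smul_choose x k
  rw [← Polynomial.aeval_eq_smeval] at h
  have h2 : Polynomial.aeval x (descPochhammer ℤ k) =
      Polynomial.eval x (descPochhammer ℚ k) := by
    rw [Polynomial.aeval_def, ← Polynomial.eval_map, descPochhammer_map]
  rw [Polynomial.eval_mul, Polynomial.eval_C, ← h2, h, nsmul_eq_mul]
  have : (k.factorial : ℚ) ≠ 0 := by positivity
  field_simp

lemma isPolyFun_choose_shift (a : ℚ) (k : ℕ) :
    IsPolyFun (fun q => Ring.choose (q + a) k) := by
  refine ⟨(Polynomial.C ((k.factorial : ℚ))⁻¹ * descPochhammer ℚ k).comp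
    (Polynomial.X + Polynomial.C a), fun x => ?_⟩
  rw [Polynomial.eval_comp]
  simp only [Polynomial.eval_add, Polynomial.eval_X, Polynomial.eval_C]
  exact choose_eval k (x + a)

lemma polyFun_ext {F G : ℚ → ℚ} (hF : IsPolyFun F) (hG : IsPolyFun G)
    (h : ∀ n : ℕ, F n = G n) (q : ℚ) : F q = G q := by
  obtain ⟨p, hp⟩ := hF; obtain ⟨r, hr⟩ := hG
  have : p = r := by
    apply Polynomial.eq_of_infinite_eval_eq
    apply Set.Infinite.mono (s := Set.range (Nat.cast : ℕ → ℚ))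
    · rintro x ⟨n, rfl⟩
      simp only [Set.mem_setOf_eq]
      rw [← hp, ← hr]
      exact h n
    · exact Set.infinite_range_of_injective Nat.cast_injective
  rw [hp, hr, this]

end PolyFun

section Pow1p

open Finset

/-- `(1+f)^q` for `f` with zero constant term: the binomial series in `f`. -/
def pow1p (q : ℚ) (f : R2) : R2 :=
  fun e => ∑ k ∈ Finset.range (e 0 + e 1 + 1), Ring.choose q k * coeff e (f ^ k)

lemma coeff_pow1p (q : ℚ) (f : R2) (e : Fin 2 →₀ ℕ) :
    coeff e (pow1p q f) =
      ∑ k ∈ Finset.range (e 0 + e 1 + 1), Ring.choose q k * coeff e (f ^ k) := rfl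

lemma coeff_pow1p_of_lt {f : R2} (hf : f ∈ J 1) (q : ℚ) {e : Fin 2 →₀ ℕ} {N : ℕ}
    (hN : e 0 + e 1 < N) :
    coeff e (pow1p q f) = ∑ k ∈ Finset.range N, Ring.choose q k * coeff e (f ^ k) := by
  rw [coeff_pow1p]
  refine Finset.sum_subset ?_ ?_
  · intro k hk
    rw [Finset.mem_range] at *
    omega
  · intro k _ hk
    rw [Finset.mem_range] at hk
    rw [pow_mem_J hf k e (by omega), mul_zero]

lemma pow1p_sub_partial {f : R2} (hf : f ∈ J 1) (q : ℚ) (N : ℕ) :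
    pow1p q f - ∑ k ∈ Finset.range N, Ring.choose q k • f ^ k ∈ J N := by
  intro e he
  rw [map_sub, coeff_pow1p_of_lt hf q he, map_sum, sub_eq_zero]
  refine Finset.sum_congr rfl fun k _ => ?_
  rw [map_smul, smul_eq_mul]

lemma isPolyFun_coeff_pow1p_shift (f : R2) (e : Fin 2 →₀ ℕ) (a : ℚ) :
    IsPolyFun (fun q => coeff e (pow1p (q + a) f)) := by
  simp only [coeff_pow1p]
  exact isPolyFun_sum _ _ fun k _ =>
    (isPolyFun_choose_shift a k).mul (isPolyFun_const _)

lemma isPolyFun_coeff_pow1p (f : R2) (e : Fin 2 →₀ ℕ) :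
    IsPolyFun (fun q => coeff e (pow1p q f)) := by
  have := isPolyFun_coeff_pow1p_shift f e 0
  simpa using this

lemma isPolyFun_coeff_mul {A B : ℚ → R2} (e : Fin 2 →₀ ℕ)
    (hA : ∀ d, IsPolyFun fun q => coeff d (A q))
    (hB : ∀ d, IsPolyFun fun q => coeff d (B q)) :
    IsPolyFun fun q => coeff e (A q * B q) := by
  classical
  simp only [coeff_mul]
  exact isPolyFun_sum _ _ fun p _ => (hA p.1).mul (hB p.2)

lemma one_add_pow_eq_sum {f : R2} (hf : f ∈ J 1) (n N : ℕ) (hN : n < N) :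
    (1 + f) ^ n = ∑ k ∈ Finset.range N, ((n.choose k : ℚ)) • f ^ k := by
  rw [add_comm, add_pow]
  rw [← Finset.sum_subset (Finset.range_subset_range.mpr hN)
    (fun k _ hk => by
      rw [Finset.mem_range, not_lt] at hk
      rw [Nat.choose_eq_zero_of_lt (by omega), Nat.cast_zero, zero_smul])]
  refine Finset.sum_congr rfl fun k hk => ?_
  rw [one_pow, mul_one, mul_comm, ← nsmul_eq_mul, ← Nat.cast_smul_eq_nsmul ℚ]

lemma pow1p_natCast {f : R2} (hf : f ∈ J 1) (n : ℕ) :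
    pow1p (n : ℚ) f = (1 + f) ^ n := by
  apply MvPowerSeries.ext
  intro e
  set N := max (e 0 + e 1 + 1) (n + 1) with hNdef
  rw [coeff_pow1p_of_lt hf _ (show e 0 + e 1 < N by omega),
    one_add_pow_eq_sum hf n N (by omega), map_sum]
  refine Finset.sum_congr rfl fun k _ => ?_
  rw [map_smul, smul_eq_mul, Ring.choose_natCast]

end Pow1p

section Pow1pLaws

open Finset

lemma pow1p_add {f : R2} (hf : f ∈ J 1) (q q' : ℚ) :
    pow1p (q + q') f = pow1p q f * pow1p q' f := by
  have nat2 : ∀ a b : ℕ, pow1p ((a : ℚ) + (b : ℚ)) f = pow1p (a : ℚ) f * pow1p (b : ℚ) f := by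
    intro a b
    rw [← Nat.cast_add, pow1p_natCast hf, pow1p_natCast hf, pow1p_natCast hf, pow_add]
  have step1 : ∀ (q : ℚ) (b : ℕ) (e : Fin 2 →₀ ℕ),
      coeff e (pow1p (q + (b : ℚ)) f) = coeff e (pow1p q f * pow1p (b : ℚ) f) := by
    intro q b e
    refine polyFun_ext (F := fun q => coeff e (pow1p (q + (b : ℚ)) f))
      (G := fun q => coeff e (pow1p q f * pow1p (b : ℚ) f))
      (isPolyFun_coeff_pow1p_shift f e _) ?_ (fun a => by
        show coeff e (pow1p ((a : ℚ) + (b : ℚ)) f) = coeff e (pow1p (a : ℚ) f * pow1p (b : ℚ) f)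
        rw [nat2]) q
    exact isPolyFun_coeff_mul e (fun d => isPolyFun_coeff_pow1p f d)
      (fun d => isPolyFun_const _)
  apply MvPowerSeries.ext
  intro e
  refine polyFun_ext (F := fun q' => coeff e (pow1p (q + q') f))
    (G := fun q' => coeff e (pow1p q f * pow1p q' f))
    ?_ ?_ (fun b => step1 q b e) q'
  · have : ∀ q', q + q' = q' + q := fun q' => add_comm _ _
    simp only [this]
    exact isPolyFun_coeff_pow1p_shift f e q
  · exact isPolyFun_coeff_mul e (fun d => isPolyFun_const _)
      (fun d => isPolyFun_coeff_pow1p f d)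

lemma pow1p_zero {f : R2} (hf : f ∈ J 1) : pow1p 0 f = 1 := by
  have := pow1p_natCast hf 0
  simpa using this

lemma pow1p_one {f : R2} (hf : f ∈ J 1) : pow1p 1 f = 1 + f := by
  have := pow1p_natCast hf 1
  simpa using this

lemma pow1p_cancel {f : R2} (hf : f ∈ J 1) (q : ℚ) :
    pow1p (-q) f * pow1p q f = 1 := by
  rw [← pow1p_add hf, neg_add_cancel, pow1p_zero hf]

lemma pow1p_mul {f g : R2} (hf : f ∈ J 1) (hg : g ∈ J 1) (q : ℚ) :
    pow1p q f * pow1p q g = pow1p q (f + g + f * g) := by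
  have hfg : f + g + f * g ∈ J 1 :=
    Ideal.add_mem _ (Ideal.add_mem _ hf hg) (Ideal.mul_mem_right _ _ hf)
  apply MvPowerSeries.ext
  intro e
  refine polyFun_ext (F := fun q => coeff e (pow1p q f * pow1p q g))
    (G := fun q => coeff e (pow1p q (f + g + f * g)))
    (isPolyFun_coeff_mul e (fun d => isPolyFun_coeff_pow1p f d)
      (fun d => isPolyFun_coeff_pow1p g d))
    (isPolyFun_coeff_pow1p _ e) (fun a => ?_) q
  show coeff e (pow1p (a : ℚ) f * pow1p (a : ℚ) g) = coeff e (pow1p (a : ℚ) (f + g + f * g))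
  rw [pow1p_natCast hf, pow1p_natCast hg, pow1p_natCast hfg, ← mul_pow]
  congr 2
  ring

lemma pow1p_pow {f : R2} (hf : f ∈ J 1) (q : ℚ) (j : ℕ) :
    (pow1p q f) ^ j = pow1p ((j : ℚ) * q) f := by
  induction j with
  | zero => simp [pow1p_zero hf]
  | succ j ih =>
    rw [pow_succ, ih, ← pow1p_add hf]
    congr 1
    push_cast
    ring

lemma pow1p_two {f : R2} (hf : f ∈ J 1) :
    pow1p 2 f = (1 + f) * (1 + f) := by
  have h := pow1p_natCast hf 2
  rw [show ((2 : ℕ) : ℚ) = 2 by norm_num] at h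
  rw [h, sq]

end Pow1pLaws

section Cont

open Finset

lemma IsCont.comp' {f g : R2 →ₐ[ℚ] R2} (hf : IsCont f) (hg : IsCont g) :
    IsCont (f.comp g) := by
  intro d
  obtain ⟨e1, he1⟩ := hf d
  obtain ⟨e2, he2⟩ := hg e1
  exact ⟨e2, fun r hr => he1 _ (he2 r hr)⟩

lemma algHom_maps_maxIdeal {f : R2 →ₐ[ℚ] R2} (hX : ∀ i, f (X i) ∈ maxIdeal)
    {g : R2} (hg : g ∈ maxIdeal) : f g ∈ maxIdeal := by
  rw [maxIdeal] at hg
  obtain ⟨a, b, hab⟩ := Ideal.mem_span_pair.mp hg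
  rw [← hab, map_add, map_mul, map_mul]
  exact Ideal.add_mem _ (Ideal.mul_mem_left _ _ (hX 0)) (Ideal.mul_mem_left _ _ (hX 1))

lemma algHom_pow1p (Ψ : R2 →ₐ[ℚ] R2) (hcont : IsCont Ψ) (hX : ∀ i, Ψ (X i) ∈ maxIdeal)
    {f : R2} (hf : f ∈ J 1) (q : ℚ) : Ψ (pow1p q f) = pow1p q (Ψ f) := by
  have hf' : f ∈ maxIdeal := by
    have := J_le_maxIdeal_pow 1 hf
    rwa [pow_one] at this
  have hΨf : Ψ f ∈ J 1 := maxIdeal_le_J1 (algHom_maps_maxIdeal hX hf')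
  apply eq_of_sub_mem_J
  intro d
  obtain ⟨e, he⟩ := hcont d
  set N := max d e with hN
  have h1 : pow1p q f - ∑ k ∈ Finset.range N, Ring.choose q k • f ^ k ∈ J N :=
    pow1p_sub_partial hf q N
  have h2 : Ψ (pow1p q f) - Ψ (∑ k ∈ Finset.range N, Ring.choose q k • f ^ k) ∈ J d := by
    rw [← map_sub]
    refine maxIdeal_pow_le_J d (he _ ?_)
    rw [maxIdeal_pow_eq_J]
    exact J_le (le_max_right d e) h1
  have h3 : Ψ (∑ k ∈ Finset.range N, Ring.choose q k • f ^ k) =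
      ∑ k ∈ Finset.range N, Ring.choose q k • (Ψ f) ^ k := by
    rw [map_sum]
    refine Finset.sum_congr rfl fun k _ => ?_
    rw [map_smul, map_pow]
  have h4 : pow1p q (Ψ f) - ∑ k ∈ Finset.range N, Ring.choose q k • (Ψ f) ^ k ∈ J d :=
    J_le (le_max_left d e) (pow1p_sub_partial hΨf q N)
  have := Ideal.sub_mem _ h2 h4
  rw [h3] at this
  simpa using this

/-- Truncation in total degree `< d` (actually componentwise `< d`). -/
def truncP (d : ℕ) (r : R2) : R2 :=
  ∑ p ∈ Finset.range d ×ˢ Finset.range d,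
    coeff (Finsupp.single 0 p.1 + Finsupp.single 1 p.2) r •
      ((X 0 : R2) ^ p.1 * (X 1 : R2) ^ p.2)

lemma X_pow_mul_X_pow (a b : ℕ) :
    (X 0 : R2) ^ a * (X 1 : R2) ^ b =
      monomial (Finsupp.single 0 a + Finsupp.single 1 b) 1 := by
  rw [X_pow_eq, X_pow_eq, monomial_mul_monomial, one_mul]

lemma sub_truncP_mem_J (d : ℕ) (r : R2) : r - truncP d r ∈ J d := by
  classical
  intro e he
  rw [map_sub, truncP, map_sum, sub_eq_zero]
  rw [Finset.sum_eq_single_of_mem (e 0, e 1)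
    (by rw [Finset.mem_product, Finset.mem_range, Finset.mem_range]; constructor <;> omega)]
  · rw [map_smul, X_pow_mul_X_pow, coeff_monomial, if_pos (e_eq_single e), smul_eq_mul, mul_one]
    exact congrArg (fun x => coeff x r) (e_eq_single e)
  · intro p _ hne
    rw [map_smul, X_pow_mul_X_pow, coeff_monomial]
    rw [if_neg, smul_zero]
    intro hcontra
    apply hne
    have h0 := congrArg (fun g : Fin 2 →₀ ℕ => g 0) hcontra
    have h1 := congrArg (fun g : Fin 2 →₀ ℕ => g 1) hcontra
    simp only [Finsupp.add_apply, Finsupp.single_apply] at h0 h1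
    simp at h0 h1
    rw [Prod.ext_iff]
    exact ⟨h0.symm, h1.symm⟩

lemma algHom_ext_cont {f g : R2 →ₐ[ℚ] R2} (hf : IsCont f) (hg : IsCont g)
    (h : ∀ i : Fin 2, f (X i) = g (X i)) : f = g := by
  apply AlgHom.ext
  intro r
  apply eq_of_sub_mem_J
  intro d
  obtain ⟨e1, he1⟩ := hf d
  obtain ⟨e2, he2⟩ := hg d
  set N := max e1 e2 with hN
  have htr : r - truncP N r ∈ maxIdeal ^ N := by
    rw [maxIdeal_pow_eq_J]; exact sub_truncP_mem_J N r
  have hfg : f (truncP N r) = g (truncP N r) := by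
    rw [truncP, map_sum, map_sum]
    refine Finset.sum_congr rfl fun p _ => ?_
    rw [map_smul, map_smul, map_mul, map_mul, map_pow, map_pow, map_pow, map_pow, h 0, h 1]
  have m1 : f r - f (truncP N r) ∈ J d := by
    rw [← map_sub]
    refine maxIdeal_pow_le_J d (he1 _ ?_)
    exact (Ideal.pow_le_pow_right (le_max_left e1 e2) : maxIdeal ^ N ≤ maxIdeal ^ e1) htr
  have m2 : g r - g (truncP N r) ∈ J d := by
    rw [← map_sub]
    refine maxIdeal_pow_le_J d (he2 _ ?_)
    exact (Ideal.pow_le_pow_right (le_max_right e1 e2) : maxIdeal ^ N ≤ maxIdeal ^ e2) htr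
  have := Ideal.sub_mem _ m1 m2
  rw [hfg] at this
  simpa using this

end Cont

section Monomials

/-- `x^a = x₁^{a₁} x₂^{a₂}`. -/
def Mx (a : ℕ × ℕ) : R2 := (X 0 : R2) ^ a.1 * (X 1 : R2) ^ a.2

lemma Mx_eq_monomial (a : ℕ × ℕ) : Mx a = monomial (expOf a) 1 := by
  rw [Mx, X_pow_mul_X_pow, expOf]

lemma expOf_apply0 (a : ℕ × ℕ) : expOf a 0 = a.1 := by simp [expOf]
lemma expOf_apply1 (a : ℕ × ℕ) : expOf a 1 = a.2 := by simp [expOf]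

lemma Mx_mem_J1 {a : ℕ × ℕ} (ha : a ≠ 0) : Mx a ∈ J 1 := by
  intro e he
  rw [Mx_eq_monomial, coeff_monomial]
  rw [if_neg, ]
  intro hcontra
  apply ha
  have h0 := congrArg (fun g : Fin 2 →₀ ℕ => g 0) hcontra
  have h1 := congrArg (fun g : Fin 2 →₀ ℕ => g 1) hcontra
  simp only [expOf_apply0, expOf_apply1] at h0 h1
  rw [Prod.ext_iff]
  simp only [Prod.fst_zero, Prod.snd_zero]
  omega

lemma Mx_add (a b : ℕ × ℕ) : Mx (a + b) = Mx a * Mx b := by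
  rw [Mx, Mx, Mx]
  show (X 0 : R2) ^ (a.1 + b.1) * (X 1 : R2) ^ (a.2 + b.2) = _
  rw [pow_add, pow_add]
  ring

lemma monomial_one_pow (m : Fin 2 →₀ ℕ) (k : ℕ) :
    (monomial m 1 : R2) ^ k = monomial (k • m) 1 := by
  induction k with
  | zero => simp
  | succ k ih =>
    rw [pow_succ, ih, monomial_mul_monomial, mul_one, succ_nsmul]

lemma binomSeries_eq_pow1p {m : ℕ × ℕ} (hm : m ≠ 0) (q : ℚ) :
    binomSeries m q = pow1p q (Mx m) := by
  classical
  have hm' : ¬(m.1 = 0 ∧ m.2 = 0) := fun hc => hm (by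
    rw [Prod.ext_iff]; simp only [Prod.fst_zero, Prod.snd_zero]; exact hc)
  have hs : 0 < expOf m 0 + expOf m 1 := by
    rw [expOf_apply0, expOf_apply1]
    omega
  apply MvPowerSeries.ext
  intro e
  rw [coeff_pow1p]
  have hterm : ∀ k, Ring.choose q k * coeff e ((Mx m) ^ k) =
      if e = k • expOf m then Ring.choose q k else 0 := by
    intro k
    rw [Mx_eq_monomial, monomial_one_pow, coeff_monomial]
    split <;> simp
  have hcoeff : coeff e (binomSeries m q) =
      if h : ∃ k : ℕ, e = k • expOf m then Ring.choose q h.choose else 0 := rfl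
  rw [hcoeff]
  by_cases h : ∃ k : ℕ, e = k • expOf m
  · obtain ⟨k0, hk0⟩ := h
    have hch : (⟨k0, hk0⟩ : ∃ k : ℕ, e = k • expOf m).choose = k0 := by
      have hprop := (⟨k0, hk0⟩ : ∃ k : ℕ, e = k • expOf m).choose_spec
      set k1 := (⟨k0, hk0⟩ : ∃ k : ℕ, e = k • expOf m).choose
      have hdeg : k1 * (expOf m 0 + expOf m 1) = k0 * (expOf m 0 + expOf m 1) := by
        have h1 := congrArg (fun g : Fin 2 →₀ ℕ => g 0 + g 1) hprop
        have h2 := congrArg (fun g : Fin 2 →₀ ℕ => g 0 + g 1) hk0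
        simp only [Finsupp.smul_apply, smul_eq_mul] at h1 h2
        rw [Nat.mul_add, Nat.mul_add]
        omega
      exact Nat.eq_of_mul_eq_mul_right hs hdeg
    rw [dif_pos ⟨k0, hk0⟩, hch]
    have hdege : e 0 + e 1 = k0 * (expOf m 0 + expOf m 1) := by
      have h2 := congrArg (fun g : Fin 2 →₀ ℕ => g 0 + g 1) hk0
      simp only [Finsupp.smul_apply, smul_eq_mul] at h2
      rw [Nat.mul_add]
      omega
    have hk0mem : k0 ∈ Finset.range (e 0 + e 1 + 1) := by
      rw [Finset.mem_range]
      have : k0 ≤ k0 * (expOf m 0 + expOf m 1) := Nat.le_mul_of_pos_right k0 hs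
      omega
    have hdege2 : e 0 + e 1 = k0 * expOf m 0 + k0 * expOf m 1 := by
      rw [hdege, Nat.mul_add]
    rw [Finset.sum_eq_single_of_mem k0 hk0mem]
    · rw [hterm, if_pos hk0]
    · intro k _ hk
      rw [hterm, if_neg]
      intro hcontra
      apply hk
      have h1 := congrArg (fun g : Fin 2 →₀ ℕ => g 0 + g 1) hcontra
      simp only [Finsupp.smul_apply, smul_eq_mul] at h1
      have : k * (expOf m 0 + expOf m 1) = k0 * (expOf m 0 + expOf m 1) := by
        rw [Nat.mul_add, Nat.mul_add]
        omega
      exact Nat.eq_of_mul_eq_mul_right hs this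
  · rw [dif_neg h]
    symm
    refine Finset.sum_eq_zero fun k _ => ?_
    rw [hterm, if_neg (fun hc => h ⟨k, hc⟩)]

end Monomials

section Dilog

variable {lam c : ℚ} {m : ℕ × ℕ} {f : R2 →ₐ[ℚ] R2}

lemma IsDilog.X_image (h : IsDilog lam c m f) (hm : m ≠ 0) (i : Fin 2) :
    f (X i) = X i * pow1p (c * omegaForm lam (nn2z m) (nn2z (basisVec i))) (Mx m) := by
  rw [h.2 i, binomSeries_eq_pow1p hm]

lemma IsDilog.X_mem (h : IsDilog lam c m f) (i : Fin 2) : f (X i) ∈ maxIdeal := by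
  rw [h.2 i]
  exact Ideal.mul_mem_right _ _ (X_mem_maxIdeal i)

lemma omega_lin (lam c : ℚ) (m a : ℕ × ℕ) :
    (a.1 : ℚ) * (c * omegaForm lam (nn2z m) (nn2z (basisVec 0))) +
      (a.2 : ℚ) * (c * omegaForm lam (nn2z m) (nn2z (basisVec 1))) =
    c * omegaForm lam (nn2z m) (nn2z a) := by
  simp only [omegaForm, nn2z, basisVec]
  push_cast
  ring

lemma IsDilog.Mx_image (h : IsDilog lam c m f) (hm : m ≠ 0) (a : ℕ × ℕ) :
    f (Mx a) = Mx a * pow1p (c * omegaForm lam (nn2z m) (nn2z a)) (Mx m) := by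
  have hMm : Mx m ∈ J 1 := Mx_mem_J1 hm
  rw [Mx, map_mul, map_pow, map_pow, h.X_image hm 0, h.X_image hm 1,
    mul_pow, mul_pow, pow1p_pow hMm, pow1p_pow hMm]
  rw [show (X 0 : R2) ^ a.1 * pow1p ((a.1 : ℚ) * (c * omegaForm lam (nn2z m) (nn2z (basisVec 0)))) (Mx m) *
      ((X 1 : R2) ^ a.2 * pow1p ((a.2 : ℚ) * (c * omegaForm lam (nn2z m) (nn2z (basisVec 1)))) (Mx m)) =
      ((X 0 : R2) ^ a.1 * (X 1 : R2) ^ a.2) *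
      (pow1p ((a.1 : ℚ) * (c * omegaForm lam (nn2z m) (nn2z (basisVec 0)))) (Mx m) *
        pow1p ((a.2 : ℚ) * (c * omegaForm lam (nn2z m) (nn2z (basisVec 1)))) (Mx m)) by ring]
  rw [← pow1p_add hMm, omega_lin]

end Dilog

section Key

lemma key_identity (α β : ℚ) {u v : R2} (hu : u ∈ J 1) (hv : v ∈ J 1) :
    pow1p β v * pow1p (2*α) (u * (1 + v)) =
      pow1p (2*α) u * pow1p (2*α + β) (u*u*v * pow1p (-2) u) *
        pow1p (2*α + 2*β) (u*v * pow1p (-2) u * pow1p (-1) (u*u*v * pow1p (-2) u)) *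
        pow1p β (v * pow1p (-2) u * pow1p (-2) (u*u*v * pow1p (-2) u) *
          pow1p (-2) (u*v * pow1p (-2) u * pow1p (-1) (u*u*v * pow1p (-2) u))) := by
  have hp : pow1p (-2) u * ((1 + u) * (1 + u)) = 1 := by
    have h := pow1p_cancel hu 2
    rwa [pow1p_two hu] at h
  set p := pow1p (-2) u with hpdef
  have hZ : u*u*v*p ∈ J 1 :=
    Ideal.mul_mem_right _ _ (Ideal.mul_mem_right _ _ (Ideal.mul_mem_right _ _ hu))
  have hq : pow1p (-1) (u*u*v*p) * (1 + u*u*v*p) = 1 := by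
    have h := pow1p_cancel hZ 1
    rwa [pow1p_one hZ] at h
  set q := pow1p (-1) (u*u*v*p) with hqdef
  have hS : u*v*p*q ∈ J 1 :=
    Ideal.mul_mem_right _ _ (Ideal.mul_mem_right _ _ (Ideal.mul_mem_right _ _ hu))
  have ht : pow1p (-1) (u*v*p*q) * (1 + u*v*p*q) = 1 := by
    have h := pow1p_cancel hS 1
    rwa [pow1p_one hS] at h
  set t := pow1p (-1) (u*v*p*q) with htdef
  have h2Z : pow1p (-2) (u*u*v*p) = q * q := by
    rw [show (-2 : ℚ) = (-1) + (-1) by norm_num, pow1p_add hZ]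
  have h2S : pow1p (-2) (u*v*p*q) = t * t := by
    rw [show (-2 : ℚ) = (-1) + (-1) by norm_num, pow1p_add hS]
  rw [h2Z, h2S]
  rw [pow1p_add hZ (2*α) β]
  rw [show (2*α + 2*β) = (2*α + β) + β by ring]
  rw [pow1p_add hS (2*α + β) β, pow1p_add hS (2*α) β]
  have hUZ : u + u*u*v*p + u*(u*u*v*p) ∈ J 1 :=
    Ideal.add_mem _ (Ideal.add_mem _ hu hZ) (Ideal.mul_mem_right _ _ hu)
  have eA : pow1p (2*α) u * pow1p (2*α) (u*u*v*p) * pow1p (2*α) (u*v*p*q)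
      = pow1p (2*α) (u * (1 + v)) := by
    rw [pow1p_mul hu hZ, pow1p_mul hUZ hS]
    exact congrArg _ (by linear_combination (u*v) * hp + ((1+u)*u*v*p) * hq)
  have hZS : u*u*v*p + u*v*p*q + (u*u*v*p)*(u*v*p*q) ∈ J 1 :=
    Ideal.add_mem _ (Ideal.add_mem _ hZ hS) (Ideal.mul_mem_right _ _ hZ)
  have hZSS : (u*u*v*p + u*v*p*q + (u*u*v*p)*(u*v*p*q)) + u*v*p*q +
      (u*u*v*p + u*v*p*q + (u*u*v*p)*(u*v*p*q))*(u*v*p*q) ∈ J 1 :=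
    Ideal.add_mem _ (Ideal.add_mem _ hZS hS) (Ideal.mul_mem_right _ _ hZS)
  have hT : v*p*(q*q)*(t*t) ∈ J 1 :=
    Ideal.mul_mem_right _ _ (Ideal.mul_mem_right _ _ (Ideal.mul_mem_right _ _ hv))
  have eB : pow1p β (u*u*v*p) * pow1p β (u*v*p*q) * pow1p β (u*v*p*q) *
      pow1p β (v*p*(q*q)*(t*t)) = pow1p β v := by
    rw [pow1p_mul hZ hS, pow1p_mul hZS hS, pow1p_mul hZSS hT]
    exact congrArg _ (by linear_combination v*hp + (2*u*v*p + u^2*v^2*p^2*q + v*p*q + v*p)*hq +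
      (v*p*q*(q*(1+(u*u*v*p)))*(1 + t*(1+(u*v*p*q))))*ht)
  rw [← eA, ← eB]
  ring

end Key

theorem lemma_b2 (lam : ℚ) (hlam : lam ≠ 0)
    (Psi : ℚ → ℕ × ℕ → (R2 →ₐ[ℚ] R2))
    (hPsi : ∀ (c : ℚ) (n : ℕ × ℕ), n ≠ 0 → IsDilog lam c n (Psi c n))
    (n n' : ℕ × ℕ) (hn : n ≠ 0) (hn' : n' ≠ 0)
    (c : ℚ) (hc : c ≠ 0)
    (hw : omegaForm lam (nn2z n') (nn2z n) = 1 / c) :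
    (Psi c n').comp (Psi (2 * c) n) =
      (((Psi (2 * c) n).comp (Psi c (2 • n + n'))).comp
        (Psi (2 * c) (n + n'))).comp (Psi c n') := by
  rw [show (2 : ℕ) • n = n + n from two_smul ℕ n]
  have hnn' : n + n' ≠ 0 := by
    intro h
    apply hn'
    have h1 : n.1 + n'.1 = 0 := congrArg Prod.fst h
    have h2 : n.2 + n'.2 = 0 := congrArg Prod.snd h
    rw [Prod.ext_iff]
    simp only [Prod.fst_zero, Prod.snd_zero]
    omega
  have hm3 : n + n + n' ≠ 0 := by
    intro h
    apply hn'
    have h1 : n.1 + n.1 + n'.1 = 0 := congrArg Prod.fst h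
    have h2 : n.2 + n.2 + n'.2 = 0 := congrArg Prod.snd h
    rw [Prod.ext_iff]
    simp only [Prod.fst_zero, Prod.snd_zero]
    omega
  have hd4 := hPsi (2*c) n hn
  have hd1 := hPsi c n' hn'
  have hd2 := hPsi (2*c) (n+n') hnn'
  have hd3 := hPsi c (n+n+n') hm3
  -- rational arithmetic consequences of `hw`
  have hw' : c * (lam * ((n'.1:ℚ) * (n.2:ℚ) - (n'.2:ℚ) * (n.1:ℚ))) = 1 := by
    have h1 : c * omegaForm lam (nn2z n') (nn2z n) = 1 := by
      rw [hw]
      field_simp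
    simp only [omegaForm, nn2z] at h1
    push_cast at h1
    exact h1
  have homega : ∀ x y : ℕ × ℕ, c * omegaForm lam (nn2z x) (nn2z y)
      = c * (lam * ((x.1:ℚ) * (y.2:ℚ) - (x.2:ℚ) * (y.1:ℚ))) := by
    intro x y
    simp only [omegaForm, nn2z]
    push_cast
    ring
  have c1 : (((n+n').1 : ℕ) : ℚ) = (n.1:ℚ) + (n'.1:ℚ) := by
    have h : (n+n').1 = n.1 + n'.1 := rfl
    rw [h]; push_cast; ring
  have c2 : (((n+n').2 : ℕ) : ℚ) = (n.2:ℚ) + (n'.2:ℚ) := by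
    have h : (n+n').2 = n.2 + n'.2 := rfl
    rw [h]; push_cast; ring
  have d1 : (((n+n+n').1 : ℕ) : ℚ) = (n.1:ℚ) + (n.1:ℚ) + (n'.1:ℚ) := by
    have h : (n+n+n').1 = n.1 + n.1 + n'.1 := rfl
    rw [h]; push_cast; ring
  have d2 : (((n+n+n').2 : ℕ) : ℚ) = (n.2:ℚ) + (n.2:ℚ) + (n'.2:ℚ) := by
    have h : (n+n+n').2 = n.2 + n.2 + n'.2 := rfl
    rw [h]; push_cast; ring
  have A2 : c * omegaForm lam (nn2z n') (nn2z n) = 1 := by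
    rw [homega]; exact hw'
  have A4 : (2*c) * omegaForm lam (nn2z (n+n')) (nn2z n') = -2 := by
    rw [show (2*c) * omegaForm lam (nn2z (n+n')) (nn2z n')
      = 2 * (c * omegaForm lam (nn2z (n+n')) (nn2z n')) by ring, homega, c1, c2]
    linear_combination (-2) * hw'
  have A6 : c * omegaForm lam (nn2z (n+n+n')) (nn2z (n+n')) = -1 := by
    rw [homega, c1, c2, d1, d2]
    linear_combination (-1) * hw'
  have A7 : c * omegaForm lam (nn2z (n+n+n')) (nn2z n') = -2 := by
    rw [homega, d1, d2]
    linear_combination (-2) * hw'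
  have A8 : (2*c) * omegaForm lam (nn2z n) (nn2z n') = -2 := by
    rw [show (2*c) * omegaForm lam (nn2z n) (nn2z n')
      = 2 * (c * omegaForm lam (nn2z n) (nn2z n')) by ring, homega]
    linear_combination (-2) * hw'
  have A9 : (2*c) * omegaForm lam (nn2z n) (nn2z (n+n')) = -2 := by
    rw [show (2*c) * omegaForm lam (nn2z n) (nn2z (n+n'))
      = 2 * (c * omegaForm lam (nn2z n) (nn2z (n+n'))) by ring, homega, c1, c2]
    linear_combination (-2) * hw'
  have A10 : (2*c) * omegaForm lam (nn2z n) (nn2z (n+n+n')) = -2 := by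
    rw [show (2*c) * omegaForm lam (nn2z n) (nn2z (n+n+n'))
      = 2 * (c * omegaForm lam (nn2z n) (nn2z (n+n+n'))) by ring, homega, d1, d2]
    linear_combination (-2) * hw'
  have omega_addl : ∀ (a b : ℕ × ℕ) (x : ℤ × ℤ), omegaForm lam (nn2z (a+b)) x =
      omegaForm lam (nn2z a) x + omegaForm lam (nn2z b) x := by
    intro a b x
    simp only [omegaForm, nn2z]
    have e1 : (a+b).1 = a.1 + b.1 := rfl
    have e2 : (a+b).2 = a.2 + b.2 := rfl
    rw [e1, e2]
    push_cast
    ring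
  have A1 : ∀ i : Fin 2, (2*c) * omegaForm lam (nn2z n) (nn2z (basisVec i)) =
      2 * (c * omegaForm lam (nn2z n) (nn2z (basisVec i))) := fun i => by ring
  have A3 : ∀ i : Fin 2, (2*c) * omegaForm lam (nn2z (n+n')) (nn2z (basisVec i)) =
      2 * (c * omegaForm lam (nn2z n) (nn2z (basisVec i))) +
        2 * (c * omegaForm lam (nn2z n') (nn2z (basisVec i))) := fun i => by
    rw [omega_addl]; ring
  have A5 : ∀ i : Fin 2, c * omegaForm lam (nn2z (n+n+n')) (nn2z (basisVec i)) =
      2 * (c * omegaForm lam (nn2z n) (nn2z (basisVec i))) +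
        c * omegaForm lam (nn2z n') (nn2z (basisVec i)) := fun i => by
    rw [omega_addl, omega_addl]; ring
  -- membership facts
  have hu : Mx n ∈ J 1 := Mx_mem_J1 hn
  have hv : Mx n' ∈ J 1 := Mx_mem_J1 hn'
  have hwJ : Mx (n+n') ∈ J 1 := Mx_mem_J1 hnn'
  have hzJ : Mx (n+n+n') ∈ J 1 := Mx_mem_J1 hm3
  have hMw : Mx (n+n') = Mx n * Mx n' := Mx_add n n'
  have hMz : Mx (n+n+n') = Mx n * Mx n * Mx n' := by rw [Mx_add, Mx_add]
  apply algHom_ext_cont (IsCont.comp' hd1.1 hd4.1)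
    (IsCont.comp' (IsCont.comp' (IsCont.comp' hd4.1 hd3.1) hd2.1) hd1.1)
  intro i
  simp only [AlgHom.comp_apply]
  -- the left-hand side
  have L : (Psi c n') ((Psi (2*c) n) (X i)) =
      X i * pow1p (c * omegaForm lam (nn2z n') (nn2z (basisVec i))) (Mx n') *
        pow1p (2 * (c * omegaForm lam (nn2z n) (nn2z (basisVec i)))) (Mx n * (1 + Mx n')) := by
    rw [hd4.X_image hn i, A1 i, map_mul, hd1.X_image hn' i,
      algHom_pow1p _ hd1.1 hd1.X_mem hu, hd1.Mx_image hn' n, A2, pow1p_one hv]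
  -- the right-hand side, step by step
  have R1 : (Psi c n') (X i) =
      X i * pow1p (c * omegaForm lam (nn2z n') (nn2z (basisVec i))) (Mx n') :=
    hd1.X_image hn' i
  have R2 : (Psi (2*c) (n+n'))
      (X i * pow1p (c * omegaForm lam (nn2z n') (nn2z (basisVec i))) (Mx n')) =
      X i * pow1p (2 * (c * omegaForm lam (nn2z n) (nn2z (basisVec i))) +
          2 * (c * omegaForm lam (nn2z n') (nn2z (basisVec i)))) (Mx (n+n')) *
        pow1p (c * omegaForm lam (nn2z n') (nn2z (basisVec i)))
          (Mx n' * pow1p (-2) (Mx (n+n'))) := by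
    rw [map_mul, hd2.X_image hnn' i, A3 i, algHom_pow1p _ hd2.1 hd2.X_mem hv,
      hd2.Mx_image hnn' n', A4]
  -- step 3 helpers
  have R3w : (Psi c (n+n+n')) (Mx (n+n')) =
      Mx (n+n') * pow1p (-1) (Mx (n+n+n')) := by
    rw [hd3.Mx_image hm3 (n+n'), A6]
  have R3v : (Psi c (n+n+n')) (Mx n') = Mx n' * pow1p (-2) (Mx (n+n+n')) := by
    rw [hd3.Mx_image hm3 n', A7]
  have hb2 : Mx n' * pow1p (-2) (Mx (n+n')) ∈ J 1 := Ideal.mul_mem_right _ _ hv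
  have R3 : (Psi c (n+n+n'))
      (X i * pow1p (2 * (c * omegaForm lam (nn2z n) (nn2z (basisVec i))) +
          2 * (c * omegaForm lam (nn2z n') (nn2z (basisVec i)))) (Mx (n+n')) *
        pow1p (c * omegaForm lam (nn2z n') (nn2z (basisVec i)))
          (Mx n' * pow1p (-2) (Mx (n+n')))) =
      X i * pow1p (2 * (c * omegaForm lam (nn2z n) (nn2z (basisVec i))) +
          c * omegaForm lam (nn2z n') (nn2z (basisVec i))) (Mx (n+n+n')) *
        pow1p (2 * (c * omegaForm lam (nn2z n) (nn2z (basisVec i))) +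
          2 * (c * omegaForm lam (nn2z n') (nn2z (basisVec i))))
          (Mx (n+n') * pow1p (-1) (Mx (n+n+n'))) *
        pow1p (c * omegaForm lam (nn2z n') (nn2z (basisVec i)))
          (Mx n' * pow1p (-2) (Mx (n+n+n')) *
            pow1p (-2) (Mx (n+n') * pow1p (-1) (Mx (n+n+n')))) := by
    rw [map_mul, map_mul, hd3.X_image hm3 i, A5 i,
      algHom_pow1p _ hd3.1 hd3.X_mem hwJ, R3w,
      algHom_pow1p _ hd3.1 hd3.X_mem hb2, map_mul, R3v,
      algHom_pow1p _ hd3.1 hd3.X_mem hwJ, R3w]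
  -- step 4 helpers
  have R4u : (Psi (2*c) n) (Mx (n+n')) = Mx (n+n') * pow1p (-2) (Mx n) := by
    rw [hd4.Mx_image hn (n+n'), A9]
  have R4z : (Psi (2*c) n) (Mx (n+n+n')) = Mx (n+n+n') * pow1p (-2) (Mx n) := by
    rw [hd4.Mx_image hn (n+n+n'), A10]
  have R4v : (Psi (2*c) n) (Mx n') = Mx n' * pow1p (-2) (Mx n) := by
    rw [hd4.Mx_image hn n', A8]
  have hF2b : Mx (n+n') * pow1p (-1) (Mx (n+n+n')) ∈ J 1 :=
    Ideal.mul_mem_right _ _ hwJ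
  have hF3b : Mx n' * pow1p (-2) (Mx (n+n+n')) *
      pow1p (-2) (Mx (n+n') * pow1p (-1) (Mx (n+n+n'))) ∈ J 1 :=
    Ideal.mul_mem_right _ _ (Ideal.mul_mem_right _ _ hv)
  have R4 : (Psi (2*c) n)
      (X i * pow1p (2 * (c * omegaForm lam (nn2z n) (nn2z (basisVec i))) +
          c * omegaForm lam (nn2z n') (nn2z (basisVec i))) (Mx (n+n+n')) *
        pow1p (2 * (c * omegaForm lam (nn2z n) (nn2z (basisVec i))) +
          2 * (c * omegaForm lam (nn2z n') (nn2z (basisVec i))))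
          (Mx (n+n') * pow1p (-1) (Mx (n+n+n'))) *
        pow1p (c * omegaForm lam (nn2z n') (nn2z (basisVec i)))
          (Mx n' * pow1p (-2) (Mx (n+n+n')) *
            pow1p (-2) (Mx (n+n') * pow1p (-1) (Mx (n+n+n'))))) =
      X i * pow1p (2 * (c * omegaForm lam (nn2z n) (nn2z (basisVec i)))) (Mx n) *
        pow1p (2 * (c * omegaForm lam (nn2z n) (nn2z (basisVec i))) +
          c * omegaForm lam (nn2z n') (nn2z (basisVec i)))
          (Mx (n+n+n') * pow1p (-2) (Mx n)) *
        pow1p (2 * (c * omegaForm lam (nn2z n) (nn2z (basisVec i))) +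
          2 * (c * omegaForm lam (nn2z n') (nn2z (basisVec i))))
          (Mx (n+n') * pow1p (-2) (Mx n) *
            pow1p (-1) (Mx (n+n+n') * pow1p (-2) (Mx n))) *
        pow1p (c * omegaForm lam (nn2z n') (nn2z (basisVec i)))
          (Mx n' * pow1p (-2) (Mx n) *
            pow1p (-2) (Mx (n+n+n') * pow1p (-2) (Mx n)) *
            pow1p (-2) (Mx (n+n') * pow1p (-2) (Mx n) *
              pow1p (-1) (Mx (n+n+n') * pow1p (-2) (Mx n)))) := by
    rw [map_mul, map_mul, map_mul, hd4.X_image hn i, A1 i,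
      algHom_pow1p _ hd4.1 hd4.X_mem hzJ, R4z,
      algHom_pow1p _ hd4.1 hd4.X_mem hF2b, map_mul, R4u,
      algHom_pow1p _ hd4.1 hd4.X_mem hzJ, R4z,
      algHom_pow1p _ hd4.1 hd4.X_mem hF3b, map_mul, map_mul, R4v,
      algHom_pow1p _ hd4.1 hd4.X_mem hzJ, R4z,
      algHom_pow1p _ hd4.1 hd4.X_mem hF2b, map_mul, R4u,
      algHom_pow1p _ hd4.1 hd4.X_mem hzJ, R4z]
  rw [L, R1, R2, R3, R4, hMw, hMz]
  linear_combination (X i) *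
    key_identity (c * omegaForm lam (nn2z n) (nn2z (basisVec i)))
      (c * omegaForm lam (nn2z n') (nn2z (basisVec i))) hu hv

end
end

section
/- Lemma 3.4, equality (eq4): Let n, n' ∈ N⁺ and c ∈ ℚ with c ≠ 0 and ω(n', n) = 1/c. Then (∏←_{p≥0} Ψ_c[n'+2pn]) ∘ Ψ_{2c}[n] = Ψ_{2c}[n] ∘ (∏←_{p≥1} Ψ_{2c}[n'+pn]) ∘ Ψ_c[n'] as an identity of infinite products of endomorphisms of R (i.e., for every integer d ≥ 1 the two sides are congruent mod m^d after truncating each infinite product to indices p ≤ d). -/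
open MvPowerSeries

noncomputable section

namespace Eq4Aux
open Finset MvPowerSeries

abbrev Idx : Type := Fin 2 →₀ ℕ

def deg2 (e : Idx) : ℕ := e 0 + e 1

lemma deg2_add (a b : Idx) : deg2 (a + b) = deg2 a + deg2 b := by
  simp only [deg2, Finsupp.add_apply]; ring

lemma eq_zero_of_deg2 {e : Idx} (h : deg2 e = 0) : e = 0 := by
  have h' : e 0 + e 1 = 0 := h
  ext i; fin_cases i
  · simpa using by omega
  · show e 1 = 0; omega

def Ord (d : ℕ) (f : R2) : Prop := ∀ e : Idx, deg2 e < d → coeff e f = 0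

lemma Ord.zero' (d : ℕ) : Ord d (0 : R2) := fun e _ => map_zero _

lemma Ord.ordZero (f : R2) : Ord 0 f := fun _ he => absurd he (Nat.not_lt_zero _)

lemma Ord.mono {d d' : ℕ} (h : d' ≤ d) {f : R2} (hf : Ord d f) : Ord d' f :=
  fun e he => hf e (lt_of_lt_of_le he h)

lemma Ord.add {d : ℕ} {f g : R2} (hf : Ord d f) (hg : Ord d g) : Ord d (f + g) := by
  intro e he; rw [map_add, hf e he, hg e he, add_zero]

lemma Ord.sub {d : ℕ} {f g : R2} (hf : Ord d f) (hg : Ord d g) : Ord d (f - g) := by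
  intro e he; rw [map_sub, hf e he, hg e he, sub_zero]

lemma Ord.smul {d : ℕ} (a : ℚ) {f : R2} (hf : Ord d f) : Ord d (a • f) := by
  intro e he; rw [map_smul, hf e he, smul_zero]

lemma Ord.mul {a b : ℕ} {f g : R2} (hf : Ord a f) (hg : Ord b g) : Ord (a + b) (f * g) := by
  intro e he
  rw [coeff_mul]
  apply Finset.sum_eq_zero
  rintro ⟨u, v⟩ huv
  have h' : u + v = e := Finset.HasAntidiagonal.mem_antidiagonal.mp huv
  have hd : deg2 u + deg2 v < a + b := by rw [← deg2_add, h']; exact he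
  rcases lt_or_ge (deg2 u) a with h | h
  · rw [hf u h, zero_mul]
  · rw [hg v (by omega), mul_zero]

lemma Ord.pow {t : R2} (ht : Ord 1 t) : ∀ k, Ord k (t ^ k)
  | 0 => by rw [pow_zero]; exact Ord.ordZero 1
  | (k+1) => by rw [pow_succ]; exact (Ord.pow ht k).mul ht

def ordIdeal (d : ℕ) : Ideal R2 where
  carrier := {f | Ord d f}
  add_mem' := fun hf hg => hf.add hg
  zero_mem' := Ord.zero' d
  smul_mem' := fun r f hf => by
    have h : Ord (0 + d) (r * f) := (Ord.ordZero r).mul hf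
    simpa using h

lemma mem_ordIdeal {d : ℕ} {f : R2} : f ∈ ordIdeal d ↔ Ord d f := Iff.rfl

lemma maxIdeal_le_ord : maxIdeal ≤ ordIdeal 1 := by
  rw [maxIdeal, Ideal.span_le]
  rintro f hf
  have hX : ∀ s : Fin 2, Ord 1 (X s : R2) := by
    intro s e he
    have he0 : e = 0 := eq_zero_of_deg2 (by omega)
    subst he0
    rw [coeff_X, if_neg]
    intro h
    exact one_ne_zero (Finsupp.single_eq_zero.mp h.symm)
  rcases hf with rfl | hf
  · exact hX 0
  · rw [Set.mem_singleton_iff] at hf; subst hf; exact hX 1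

lemma ordIdeal_pow_le : ∀ d, (ordIdeal 1) ^ d ≤ ordIdeal d
  | 0 => by rw [pow_zero, Ideal.one_eq_top]; intro f _; exact Ord.ordZero f
  | (d+1) => by
      rw [pow_succ]
      refine le_trans (Ideal.mul_mono (ordIdeal_pow_le d) le_rfl) ?_
      exact Ideal.mul_le.mpr (fun f hf g hg => Ord.mul hf hg)

lemma pow_le_ord (d : ℕ) : maxIdeal ^ d ≤ ordIdeal d :=
  le_trans (Ideal.pow_right_mono maxIdeal_le_ord d) (ordIdeal_pow_le d)

def mkI (i j : ℕ) : Idx := Finsupp.single 0 i + Finsupp.single 1 j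

lemma mkI_apply0 (i j : ℕ) : mkI i j 0 = i := by
  simp [mkI, Finsupp.single_apply]

lemma mkI_apply1 (i j : ℕ) : mkI i j 1 = j := by
  simp [mkI, Finsupp.single_apply]

lemma mkI_self (e : Idx) : mkI (e 0) (e 1) = e := by
  ext i; fin_cases i
  · simpa using mkI_apply0 (e 0) (e 1)
  · simpa using mkI_apply1 (e 0) (e 1)

lemma deg2_mkI (i j : ℕ) : deg2 (mkI i j) = i + j := by
  rw [deg2, mkI_apply0, mkI_apply1]

lemma mkI_le {i j : ℕ} {e : Idx} : mkI i j ≤ e ↔ i ≤ e 0 ∧ j ≤ e 1 := by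
  rw [Finsupp.le_def]
  constructor
  · intro h
    exact ⟨by simpa [mkI_apply0] using h 0, by simpa [mkI_apply1] using h 1⟩
  · rintro ⟨h0, h1⟩ s
    fin_cases s
    · simpa [mkI_apply0] using h0
    · simpa [mkI_apply1] using h1

lemma monomial_mkI (i j : ℕ) : (monomial (mkI i j) 1 : R2) = X 0 ^ i * X 1 ^ j := by
  rw [X_pow_eq, X_pow_eq, monomial_mul_monomial, one_mul, mkI]

lemma X_mem_maxIdeal (s : Fin 2) : (X s : R2) ∈ maxIdeal := by
  apply Ideal.subset_span
  fin_cases s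
  · exact Set.mem_insert _ _
  · exact Set.mem_insert_of_mem _ rfl

lemma monomial_mem_pow (i j : ℕ) : (monomial (mkI i j) 1 : R2) ∈ maxIdeal ^ (i + j) := by
  rw [monomial_mkI]
  have h := Ideal.mul_mem_mul (Ideal.pow_mem_pow (X_mem_maxIdeal 0) i)
    (Ideal.pow_mem_pow (X_mem_maxIdeal 1) j)
  rwa [← pow_add] at h

lemma ord_mem_pow {d : ℕ} {f : R2} (hf : Ord d f) : f ∈ maxIdeal ^ d := by
  classical
  set g : ℕ → R2 := fun j => fun e => if j = d ∨ e 0 = 0 then f (e + mkI j (d - j)) else 0 with hg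
  have hzero : ∀ (e : Idx) (j : ℕ), j < d + 1 → j ≠ min (e 0) d ∨ deg2 e < d →
      coeff e (monomial (mkI j (d-j)) 1 * g j) = 0 := by
    intro e j hj hor
    have hde : deg2 e = e 0 + e 1 := rfl
    have hgc : ∀ (e' : Idx), coeff e' (g j) =
        if j = d ∨ e' 0 = 0 then coeff (e' + mkI j (d - j)) f else 0 := fun e' => rfl
    rw [coeff_monomial_mul]
    by_cases hle : mkI j (d - j) ≤ e
    · rw [if_pos hle, one_mul, hgc]
      obtain ⟨hj0, hj1⟩ := mkI_le.mp hle
      have hsub0 : (e - mkI j (d - j)) 0 = e 0 - j := by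
        rw [Finsupp.tsub_apply, mkI_apply0]
      rw [if_neg]
      rw [hsub0]
      omega
    · rw [if_neg hle]
  have hdecomp : f = ∑ j ∈ Finset.range (d+1), monomial (mkI j (d-j)) 1 * g j := by
    apply MvPowerSeries.ext
    intro e
    rw [map_sum]
    have hde : deg2 e = e 0 + e 1 := rfl
    by_cases hcase : d ≤ deg2 e
    · rw [Finset.sum_eq_single (min (e 0) d)]
      · have hle : mkI (min (e 0) d) (d - min (e 0) d) ≤ e := mkI_le.mpr ⟨by omega, by omega⟩
        have hgc : ∀ (e' : Idx), coeff e' (g (min (e 0) d)) =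
            if min (e 0) d = d ∨ e' 0 = 0 then
              coeff (e' + mkI (min (e 0) d) (d - min (e 0) d)) f else 0 := fun e' => rfl
        rw [coeff_monomial_mul, if_pos hle, one_mul, hgc]
        rw [if_pos, tsub_add_cancel_of_le hle]
        rw [Finsupp.tsub_apply, mkI_apply0]
        omega
      · intro j hj hne
        exact hzero e j (Finset.mem_range.mp hj) (Or.inl hne)
      · intro hnot
        exact absurd (Finset.mem_range.mpr (by omega)) hnot
    · rw [hf e (by omega), Finset.sum_eq_zero]
      intro j hj
      exact hzero e j (Finset.mem_range.mp hj) (Or.inr (by omega))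
  rw [hdecomp]
  apply Ideal.sum_mem
  intro j hj
  have hd : j + (d - j) = d := by
    have := Finset.mem_range.mp hj; omega
  apply Ideal.mul_mem_right
  have h := monomial_mem_pow j (d - j)
  rwa [hd] at h

lemma mem_pow_iff {d : ℕ} {f : R2} : f ∈ maxIdeal ^ d ↔ Ord d f :=
  ⟨fun h => pow_le_ord d h, ord_mem_pow⟩


def gens : Set R2 := {X 0, X 1}

def truncA (N : ℕ) (r : R2) : R2 :=
  ∑ p ∈ Finset.range N ×ˢ Finset.range N,
    coeff (mkI p.1 p.2) r • (monomial (mkI p.1 p.2) 1 : R2)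

lemma truncA_mem (N : ℕ) (r : R2) : truncA N r ∈ Algebra.adjoin ℚ gens := by
  unfold truncA
  apply Subalgebra.sum_mem
  intro p _
  apply Subalgebra.smul_mem
  rw [monomial_mkI]
  have h0 : (X 0 : R2) ∈ gens := Set.mem_insert _ _
  have h1 : (X 1 : R2) ∈ gens := Set.mem_insert_of_mem _ rfl
  exact mul_mem (pow_mem (Algebra.subset_adjoin h0) _) (pow_mem (Algebra.subset_adjoin h1) _)

lemma ord_sub_truncA (N : ℕ) (r : R2) : Ord N (r - truncA N r) := by
  intro e he
  have hde : deg2 e = e 0 + e 1 := rfl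
  have he0 : e 0 < N := by omega
  have he1 : e 1 < N := by omega
  have h : coeff e (truncA N r) = coeff e r := by
    rw [truncA, map_sum, Finset.sum_eq_single (e 0, e 1)]
    · rw [map_smul, mkI_self, coeff_monomial_same, smul_eq_mul, mul_one]
    · rintro ⟨i, j⟩ hp hne
      rw [map_smul, coeff_monomial, if_neg, smul_zero]
      intro h
      apply hne
      have h0 : e 0 = i := by rw [h, mkI_apply0]
      have h1 : e 1 = j := by rw [h, mkI_apply1]
      rw [Prod.ext_iff]
      exact ⟨h0.symm, h1.symm⟩
    · intro hnot
      exact absurd (Finset.mem_product.mpr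
        ⟨Finset.mem_range.mpr he0, Finset.mem_range.mpr he1⟩) hnot
  rw [map_sub, h, sub_self]

lemma algHom_eqOn_adjoin {f g : R2 →ₐ[ℚ] R2} (h : ∀ i : Fin 2, f (X i) = g (X i))
    {x : R2} (hx : x ∈ Algebra.adjoin ℚ gens) : f x = g x := by
  induction hx using Algebra.adjoin_induction with
  | mem x hx =>
      rcases hx with rfl | hx
      · exact h 0
      · rw [Set.mem_singleton_iff] at hx; subst hx; exact h 1
  | algebraMap r => rw [AlgHom.commutes, AlgHom.commutes]
  | add x y _ _ hx hy => rw [map_add, map_add, hx, hy]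
  | mul x y _ _ hx hy => rw [map_mul, map_mul, hx, hy]

lemma isCont_mul {f g : R2 →ₐ[ℚ] R2} (hf : IsCont f) (hg : IsCont g) :
    IsCont (f * g) := by
  intro d
  obtain ⟨e1, h1⟩ := hf d
  obtain ⟨e2, h2⟩ := hg e1
  exact ⟨e2, fun r hr => by rw [AlgHom.mul_apply]; exact h1 _ (h2 _ hr)⟩

lemma sub_mem_of_cont {E : R2 →ₐ[ℚ] R2} (hE : IsCont E) {k : ℕ}
    (h : ∀ i : Fin 2, E (X i) - X i ∈ maxIdeal ^ k) (r : R2) :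
    E r - r ∈ maxIdeal ^ k := by
  obtain ⟨N0, hN0⟩ := hE k
  set N := max N0 k with hN
  obtain ⟨T, hTadj, hordT⟩ : ∃ T, T ∈ Algebra.adjoin ℚ gens ∧ Ord N (r - T) :=
    ⟨truncA N r, truncA_mem N r, ord_sub_truncA N r⟩
  have h1 : E T - T ∈ maxIdeal ^ k := by
    clear hordT
    induction hTadj using Algebra.adjoin_induction with
    | mem x hx =>
        rcases hx with rfl | hx
        · exact h 0
        · rw [Set.mem_singleton_iff] at hx; subst hx; exact h 1
    | algebraMap r => rw [AlgHom.commutes, sub_self]; exact zero_mem _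
    | add x y _ _ hx hy =>
        have : E (x + y) - (x + y) = (E x - x) + (E y - y) := by rw [map_add]; ring
        rw [this]; exact add_mem hx hy
    | mul x y _ _ hx hy =>
        have : E (x * y) - x * y = E x * (E y - y) + (E x - x) * y := by
          rw [map_mul]; ring
        rw [this]
        exact add_mem (Ideal.mul_mem_left _ _ hy) (Ideal.mul_mem_right _ _ hx)
  have hrT : r - T ∈ maxIdeal ^ N := ord_mem_pow hordT
  have h2 : E (r - T) ∈ maxIdeal ^ k :=
    hN0 _ (Ideal.pow_le_pow_right (le_max_left _ _) hrT)
  have h3 : r - T ∈ maxIdeal ^ k :=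
    Ideal.pow_le_pow_right (le_max_right _ _) hrT
  have hsplit : E r - r = (E T - T) + (E (r - T) - (r - T)) := by
    rw [map_sub]; ring
  rw [hsplit]
  exact add_mem h1 (sub_mem h2 h3)

lemma algHom_ext_cont {f g : R2 →ₐ[ℚ] R2} (hf : IsCont f) (hg : IsCont g)
    (h : ∀ i : Fin 2, f (X i) = g (X i)) : f = g := by
  apply AlgHom.ext
  intro r
  rw [← sub_eq_zero]
  apply MvPowerSeries.ext
  intro e
  rw [map_zero]
  set d := deg2 e + 1 with hd
  obtain ⟨N0, hN0⟩ := hf d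
  obtain ⟨N1, hN1⟩ := hg d
  set N := max N0 N1 with hN
  set T := truncA N r with hT
  have hsplit : f r - g r = (f T - g T) + (f (r - T) - g (r - T)) := by
    rw [map_sub, map_sub]; ring
  have h1 : f T = g T := algHom_eqOn_adjoin h (truncA_mem N r)
  have hrT : r - T ∈ maxIdeal ^ N := ord_mem_pow (ord_sub_truncA N r)
  have h2 : Ord d (f (r - T)) :=
    mem_pow_iff.mp (hN0 _ (Ideal.pow_le_pow_right (le_max_left _ _) hrT))
  have h3 : Ord d (g (r - T)) :=
    mem_pow_iff.mp (hN1 _ (Ideal.pow_le_pow_right (le_max_right _ _) hrT))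
  rw [hsplit, h1, sub_self, zero_add, map_sub, h2 e (by omega), h3 e (by omega), sub_self]


lemma smeval_int_rat (p : Polynomial ℤ) (q : ℚ) :
    p.smeval q = (p.map (Int.castRingHom ℚ)).eval q := by
  induction p using Polynomial.induction_on' with
  | add p r hp hr =>
      rw [Polynomial.smeval_add, Polynomial.map_add, Polynomial.eval_add, hp, hr]
  | monomial n a =>
      rw [Polynomial.smeval_monomial, Polynomial.map_monomial, Polynomial.eval_monomial,
        zsmul_eq_mul]
      simp [mul_comm]

lemma choose_eq_eval (q : ℚ) (k : ℕ) :
    Ring.choose q k = (k.factorial : ℚ)⁻¹ * (descPochhammer ℚ k).eval q := by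
  have h := Ring.descPochhammer_eq_factorial_smul_choose q k
  rw [smeval_int_rat, descPochhammer_map] at h
  rw [h, nsmul_eq_mul, inv_mul_cancel_left₀]
  exact Nat.cast_ne_zero.mpr (Nat.factorial_ne_zero k)

def PolyIn (F : ℚ → ℚ) : Prop := ∃ P : Polynomial ℚ, ∀ q, F q = P.eval q

lemma PolyIn.const (a : ℚ) : PolyIn (fun _ => a) :=
  ⟨Polynomial.C a, fun q => (Polynomial.eval_C).symm⟩

lemma PolyIn.add {F G : ℚ → ℚ} (hF : PolyIn F) (hG : PolyIn G) :
    PolyIn (fun q => F q + G q) := by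
  obtain ⟨P, hP⟩ := hF; obtain ⟨Q, hQ⟩ := hG
  exact ⟨P + Q, fun q => by show F q + G q = _; rw [Polynomial.eval_add, hP, hQ]⟩

lemma PolyIn.mul {F G : ℚ → ℚ} (hF : PolyIn F) (hG : PolyIn G) :
    PolyIn (fun q => F q * G q) := by
  obtain ⟨P, hP⟩ := hF; obtain ⟨Q, hQ⟩ := hG
  exact ⟨P * Q, fun q => by show F q * G q = _; rw [Polynomial.eval_mul, hP, hQ]⟩

lemma PolyIn.mul_const {F : ℚ → ℚ} (a : ℚ) (hF : PolyIn F) :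
    PolyIn (fun q => F q * a) := hF.mul (PolyIn.const a)

lemma PolyIn.sum {α : Type*} (s : Finset α) (F : α → ℚ → ℚ)
    (h : ∀ a ∈ s, PolyIn (F a)) : PolyIn (fun q => ∑ a ∈ s, F a q) := by
  classical
  induction s using Finset.induction_on with
  | empty => simpa using PolyIn.const 0
  | @insert a s hnotmem ih =>
      simp only [Finset.sum_insert hnotmem]
      exact (h a (Finset.mem_insert_self _ _)).add
        (ih (fun b hb => h b (Finset.mem_insert_of_mem hb)))

lemma PolyIn.chooseShift (a : ℚ) (k : ℕ) : PolyIn (fun q => Ring.choose (q + a) k) := by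
  refine ⟨((k.factorial : ℚ)⁻¹ • descPochhammer ℚ k).comp (Polynomial.X + Polynomial.C a),
    fun q => ?_⟩
  show Ring.choose (q + a) k = _
  rw [Polynomial.eval_comp, Polynomial.eval_add, Polynomial.eval_X, Polynomial.eval_C,
    Polynomial.eval_smul, choose_eq_eval, smul_eq_mul]

lemma PolyIn.choose (k : ℕ) : PolyIn (fun q => Ring.choose q k) := by
  have h := PolyIn.chooseShift 0 k
  simpa using h

lemma PolyIn.eq_on_nat {F G : ℚ → ℚ} (hF : PolyIn F) (hG : PolyIn G)
    (h : ∀ m : ℕ, F m = G m) : ∀ q, F q = G q := by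
  obtain ⟨P, hP⟩ := hF; obtain ⟨Q, hQ⟩ := hG
  have hPQ : P = Q := by
    by_contra hne
    have hfin : {x : ℚ | (P - Q).IsRoot x}.Finite :=
      Polynomial.finite_setOf_isRoot (sub_ne_zero.mpr hne)
    have hsub : Set.range ((↑) : ℕ → ℚ) ⊆ {x : ℚ | (P - Q).IsRoot x} := by
      rintro x ⟨m, rfl⟩
      show (P - Q).eval (m : ℚ) = 0
      rw [Polynomial.eval_sub, ← hP, ← hQ, h m, sub_self]
    exact (Set.infinite_range_of_injective Nat.cast_injective) (hfin.subset hsub)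
  intro q
  rw [hP, hQ, hPQ]


def onePow (t : R2) (q : ℚ) : R2 := fun e =>
  ∑ k ∈ Finset.range (deg2 e + 1), Ring.choose q k * coeff e (t ^ k)

lemma coeff_onePow (t : R2) (q : ℚ) (e : Idx) :
    coeff e (onePow t q) =
      ∑ k ∈ Finset.range (deg2 e + 1), Ring.choose q k * coeff e (t ^ k) := rfl

lemma coeff_pow_zero {t : R2} (ht : Ord 1 t) {e : Idx} {k : ℕ} (h : deg2 e < k) :
    coeff e (t ^ k) = 0 := (Ord.pow ht k) e h

lemma coeff_onePow_ext {t : R2} (ht : Ord 1 t) (q : ℚ) (e : Idx) {K : ℕ} (hK : deg2 e ≤ K) :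
    coeff e (onePow t q) =
      ∑ k ∈ Finset.range (K + 1), Ring.choose q k * coeff e (t ^ k) := by
  rw [coeff_onePow]
  apply Finset.sum_subset
  · intro k hk
    rw [Finset.mem_range] at *
    omega
  · intro k hk hk2
    rw [Finset.mem_range] at hk hk2
    rw [coeff_pow_zero ht (by omega), mul_zero]

lemma polyIn_coeff_onePow (t : R2) (e : Idx) :
    PolyIn (fun q => coeff e (onePow t q)) :=
  PolyIn.sum (Finset.range (deg2 e + 1))
    (fun k => fun q => Ring.choose q k * coeff e (t ^ k))
    (fun k _ => PolyIn.mul_const _ (PolyIn.choose k))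

lemma PolyIn.chooseShift' (a : ℚ) (k : ℕ) : PolyIn (fun q => Ring.choose (a + q) k) := by
  obtain ⟨P, hP⟩ := PolyIn.chooseShift a k
  exact ⟨P, fun q => by show Ring.choose (a + q) k = _; rw [add_comm]; exact hP q⟩

lemma polyIn_coeff_onePow_shift (t : R2) (e : Idx) (a : ℚ) :
    PolyIn (fun q => coeff e (onePow t (a + q))) :=
  PolyIn.sum (Finset.range (deg2 e + 1))
    (fun k => fun q => Ring.choose (a + q) k * coeff e (t ^ k))
    (fun k _ => PolyIn.mul_const _ (PolyIn.chooseShift' a k))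

lemma coeff_natCast_mul (a : ℕ) (s : R2) (e : Idx) :
    coeff e ((a : R2) * s) = (a : ℚ) * coeff e s := by
  have h : ((a : ℕ) : R2) * s = (a : ℚ) • s := by
    rw [Algebra.smul_def, map_natCast (algebraMap ℚ R2) a]
  rw [h, map_smul, smul_eq_mul]

lemma onePow_natCast {t : R2} (ht : Ord 1 t) (m : ℕ) :
    onePow t (m : ℚ) = (1 + t) ^ m := by
  apply MvPowerSeries.ext
  intro e
  have hexp : (1 + t : R2) ^ m = ∑ k ∈ Finset.range (m + 1), (m.choose k : R2) * t ^ k := by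
    rw [add_comm (1 : R2) t, add_pow]
    apply Finset.sum_congr rfl
    intro k _
    rw [one_pow]
    ring
  calc coeff e (onePow t (m : ℚ))
      = ∑ k ∈ Finset.range (max (deg2 e) m + 1),
          Ring.choose (m : ℚ) k * coeff e (t ^ k) :=
        coeff_onePow_ext ht _ _ (le_max_left _ _)
    _ = ∑ k ∈ Finset.range (max (deg2 e) m + 1), (m.choose k : ℚ) * coeff e (t ^ k) := by
        apply Finset.sum_congr rfl
        intro k _
        rw [Ring.choose_natCast]
    _ = ∑ k ∈ Finset.range (m + 1), (m.choose k : ℚ) * coeff e (t ^ k) := by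
        symm
        apply Finset.sum_subset
        · intro x hx
          rw [Finset.mem_range] at *
          omega
        · intro k hk hk2
          rw [Finset.mem_range] at hk hk2
          rw [Nat.choose_eq_zero_of_lt (by omega), Nat.cast_zero, zero_mul]
    _ = coeff e ((1 + t) ^ m) := by
        rw [hexp, map_sum]
        exact Finset.sum_congr rfl fun k _ => (coeff_natCast_mul _ _ _).symm

lemma onePow_zero (t : R2) : onePow t (0 : ℚ) = 1 := by
  apply MvPowerSeries.ext
  intro e
  rw [coeff_onePow, Finset.sum_eq_single 0]
  · rw [pow_zero, Ring.choose_zero_right, one_mul]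
  · intro k hk hne
    have h : Ring.choose (0 : ℚ) k = 0 := by
      have h2 := Ring.choose_natCast (R := ℚ) 0 k
      rw [Nat.cast_zero] at h2
      rw [h2, Nat.choose_eq_zero_of_lt (by omega), Nat.cast_zero]
    rw [h, zero_mul]
  · intro h
    exact absurd (Finset.mem_range.mpr (by omega)) h

theorem onePow_add {t : R2} (ht : Ord 1 t) (q q' : ℚ) :
    onePow t q * onePow t q' = onePow t (q + q') := by
  have hnat : ∀ a b : ℕ, onePow t (a : ℚ) * onePow t (b : ℚ) = onePow t ((a : ℚ) + (b : ℚ)) := by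
    intro a b
    rw [onePow_natCast ht, onePow_natCast ht, ← pow_add,
      show ((a : ℚ) + b) = ((a + b : ℕ) : ℚ) by push_cast; ring, onePow_natCast ht]
  apply MvPowerSeries.ext
  intro e
  have step1 : ∀ (x : ℚ) (b : ℕ),
      coeff e (onePow t x * onePow t (b : ℚ)) = coeff e (onePow t (x + b)) := by
    intro x b
    refine PolyIn.eq_on_nat (F := fun y => coeff e (onePow t y * onePow t (b : ℚ)))
      (G := fun y => coeff e (onePow t (y + b))) ?_ ?_ ?_ x
    · have hrw : (fun y => coeff e (onePow t y * onePow t (b : ℚ))) = fun y =>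
          ∑ p ∈ Finset.HasAntidiagonal.antidiagonal e, coeff p.1 (onePow t y) * coeff p.2 (onePow t (b : ℚ)) :=
        funext fun y => coeff_mul _ _ _
      rw [hrw]
      exact PolyIn.sum _ _ (fun p _ => PolyIn.mul_const _ (polyIn_coeff_onePow t p.1))
    · have hrw : (fun y => coeff e (onePow t (y + b))) =
          fun y => coeff e (onePow t ((b : ℚ) + y)) := funext fun y => by rw [add_comm]
      rw [hrw]
      exact polyIn_coeff_onePow_shift t e (b : ℚ)
    · intro m
      show coeff e (onePow t (m : ℚ) * onePow t (b : ℚ)) = coeff e (onePow t ((m : ℚ) + b))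
      rw [hnat m b]
  refine PolyIn.eq_on_nat (F := fun y => coeff e (onePow t q * onePow t y))
    (G := fun y => coeff e (onePow t (q + y))) ?_ ?_ (fun m => step1 q m) q'
  · have hrw : (fun y => coeff e (onePow t q * onePow t y)) = fun y =>
        ∑ p ∈ Finset.HasAntidiagonal.antidiagonal e, coeff p.1 (onePow t q) * coeff p.2 (onePow t y) :=
      funext fun y => coeff_mul _ _ _
    rw [hrw]
    refine PolyIn.sum _ _ (fun p _ => ?_)
    exact (PolyIn.const (coeff p.1 (onePow t q))).mul (polyIn_coeff_onePow t p.2)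
  · exact polyIn_coeff_onePow_shift t e q

theorem onePow_mul_arg {f g : R2} (hf : Ord 1 f) (hg : Ord 1 g) (q : ℚ) :
    onePow f q * onePow g q = onePow (f + g + f * g) q := by
  have hfg : Ord 1 (f + g + f * g) :=
    (hf.add hg).add ((Ord.mul hf hg).mono (by omega))
  apply MvPowerSeries.ext
  intro e
  refine PolyIn.eq_on_nat (F := fun y => coeff e (onePow f y * onePow g y))
    (G := fun y => coeff e (onePow (f + g + f * g) y)) ?_ (polyIn_coeff_onePow _ _) ?_ q
  · have hrw : (fun y => coeff e (onePow f y * onePow g y)) = fun y =>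
        ∑ p ∈ Finset.HasAntidiagonal.antidiagonal e, coeff p.1 (onePow f y) * coeff p.2 (onePow g y) :=
      funext fun y => coeff_mul _ _ _
    rw [hrw]
    exact PolyIn.sum _ _ (fun p _ => (polyIn_coeff_onePow f p.1).mul (polyIn_coeff_onePow g p.2))
  · intro m
    show coeff e (onePow f (m : ℚ) * onePow g (m : ℚ)) =
      coeff e (onePow (f + g + f * g) (m : ℚ))
    rw [onePow_natCast hf, onePow_natCast hg, onePow_natCast hfg, ← mul_pow]
    congr 2
    ring

lemma onePow_pow {t : R2} (ht : Ord 1 t) (q : ℚ) : ∀ k : ℕ, (onePow t q) ^ k = onePow t (k * q)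
  | 0 => by rw [pow_zero, Nat.cast_zero, zero_mul, onePow_zero]
  | (k+1) => by
      rw [pow_succ, onePow_pow ht q k, onePow_add ht]
      have h : (k : ℚ) * q + q = ((k + 1 : ℕ) : ℚ) * q := by push_cast; ring
      rw [h]

lemma map_onePow {F : R2 →ₐ[ℚ] R2} (hF : IsCont F) {t : R2} (ht : Ord 1 t)
    (htF : Ord 1 (F t)) (q : ℚ) : F (onePow t q) = onePow (F t) q := by
  apply MvPowerSeries.ext
  intro e
  set d := deg2 e + 1 with hd
  obtain ⟨N0, hN0⟩ := hF d
  set K := max N0 d with hKdef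
  set S : R2 := ∑ k ∈ Finset.range (K + 1), Ring.choose q k • t ^ k with hS
  have hcoeffS : ∀ (u : R2) (e' : Idx),
      coeff e' (∑ k ∈ Finset.range (K + 1), Ring.choose q k • u ^ k) =
        ∑ k ∈ Finset.range (K + 1), Ring.choose q k * coeff e' (u ^ k) := by
    intro u e'
    rw [map_sum]
    exact Finset.sum_congr rfl fun k _ => by rw [map_smul, smul_eq_mul]
  have htail : Ord (K + 1) (onePow t q - S) := by
    intro e' he'
    rw [map_sub, hS, hcoeffS, coeff_onePow_ext ht q e' (by omega : deg2 e' ≤ K), sub_self]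
  have hFS : F S = ∑ k ∈ Finset.range (K + 1), Ring.choose q k • (F t) ^ k := by
    rw [hS, map_sum]
    exact Finset.sum_congr rfl fun k _ => by rw [map_smul, map_pow]
  have htail2 : Ord (K + 1) (onePow (F t) q - F S) := by
    intro e' he'
    rw [map_sub, hFS, hcoeffS, coeff_onePow_ext htF q e' (by omega : deg2 e' ≤ K), sub_self]
  have hm : F (onePow t q) - F S ∈ maxIdeal ^ d := by
    rw [← map_sub]
    apply hN0
    apply Ideal.pow_le_pow_right (le_trans (le_max_left _ _) (Nat.le_succ _))
    exact ord_mem_pow htail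
  have h1 : coeff e (F (onePow t q)) = coeff e (F S) := by
    have h := (mem_pow_iff.mp hm) e (by omega)
    rw [map_sub] at h
    linarith [h]
  have h2 : coeff e (onePow (F t) q) = coeff e (F S) := by
    have h := htail2 e (by omega)
    rw [map_sub] at h
    linarith [h]
  rw [h1, h2]


lemma onePow_one {t : R2} (ht : Ord 1 t) : onePow t (1 : ℚ) = 1 + t := by
  have h := onePow_natCast ht 1
  rw [Nat.cast_one, pow_one] at h
  exact h

lemma onePow_twist {x w : R2} (hx : Ord 1 x) (hw : Ord 1 w) (q : ℚ) :
    onePow (x * onePow w (-1)) q = onePow (w + x) q * onePow w (-q) := by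
  set s := x * onePow w (-1) with hsdef
  have hs : Ord 1 s := by
    have h := Ord.mul hx (Ord.ordZero (onePow w (-1)))
    simpa using h
  have h1 : onePow w (-1) * onePow w 1 = 1 := by
    rw [onePow_add hw]
    norm_num [onePow_zero]
  have h2 : s * w = x - s := by
    have h3 : s * (1 + w) = x := by
      calc s * (1 + w) = x * (onePow w (-1) * (1 + w)) := by rw [hsdef]; ring
        _ = x * (onePow w (-1) * onePow w 1) := by rw [onePow_one hw]
        _ = x := by rw [h1, mul_one]
    linear_combination h3
  have key : s + w + s * w = w + x := by linear_combination h2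
  calc onePow s q = onePow s q * onePow w q * onePow w (-q) := by
        rw [mul_assoc, onePow_add hw]
        norm_num [onePow_zero]
    _ = onePow (s + w + s * w) q * onePow w (-q) := by rw [onePow_mul_arg hs hw]
    _ = onePow (w + x) q * onePow w (-q) := by rw [key]

def xp (m : ℕ × ℕ) : R2 := monomial (expOf m) 1

lemma expOf_eq (m : ℕ × ℕ) : expOf m = mkI m.1 m.2 := rfl

lemma expOf_add (a b : ℕ × ℕ) : expOf (a + b) = expOf a + expOf b := by
  rw [expOf_eq, expOf_eq, expOf_eq]
  ext i
  fin_cases i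
  · simp [mkI_apply0, Finsupp.add_apply]
  · simp [mkI_apply1, Finsupp.add_apply]

lemma deg2_expOf (m : ℕ × ℕ) : deg2 (expOf m) = m.1 + m.2 := by
  rw [expOf_eq, deg2_mkI]

lemma one_le_deg2_expOf {m : ℕ × ℕ} (hm : m ≠ 0) : 1 ≤ deg2 (expOf m) := by
  rw [deg2_expOf]
  by_contra h
  apply hm
  have h1 : m.1 = 0 := by omega
  have h2 : m.2 = 0 := by omega
  rw [Prod.ext_iff]
  exact ⟨h1, h2⟩

lemma ord_xp_ge {m : ℕ × ℕ} (k : ℕ) (hk : k ≤ deg2 (expOf m)) : Ord k (xp m) := by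
  intro e he
  rw [xp, coeff_monomial, if_neg]
  intro h
  rw [h] at he
  omega

lemma ord_xp {m : ℕ × ℕ} (hm : m ≠ 0) : Ord 1 (xp m) :=
  ord_xp_ge 1 (one_le_deg2_expOf hm)

lemma xp_mul (a b : ℕ × ℕ) : xp a * xp b = xp (a + b) := by
  rw [xp, xp, xp, monomial_mul_monomial, one_mul, expOf_add]

lemma xp_pow (a : ℕ × ℕ) : ∀ k : ℕ, (xp a) ^ k = monomial (k • expOf a) 1
  | 0 => by rw [pow_zero, zero_smul]; rfl
  | (k+1) => by
      rw [pow_succ, xp_pow a k, xp, monomial_mul_monomial, one_mul, succ_nsmul]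

lemma deg2_smul (k : ℕ) (v : Idx) : deg2 (k • v) = k * deg2 v := by
  simp only [deg2, Finsupp.smul_apply, smul_eq_mul]
  ring

lemma binomSeries_eq (n : ℕ × ℕ) (hn : n ≠ 0) (q : ℚ) :
    binomSeries n q = onePow (xp n) q := by
  classical
  have hdeg : 1 ≤ deg2 (expOf n) := one_le_deg2_expOf hn
  apply MvPowerSeries.ext
  intro e
  have hrfl : coeff e (binomSeries n q) =
      if h : ∃ k : ℕ, e = k • expOf n then Ring.choose q h.choose else 0 := by
    rw [coeff_apply, binomSeries]
  rw [coeff_onePow, hrfl]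
  by_cases hex : ∃ k : ℕ, e = k • expOf n
  · rw [dif_pos hex]
    set k0 := hex.choose with hk0def
    have hk0 : e = k0 • expOf n := hex.choose_spec
    have hk0deg : deg2 e = k0 * deg2 (expOf n) := by rw [hk0, deg2_smul]
    have hk0le : k0 ≤ deg2 e := by nlinarith
    rw [Finset.sum_eq_single k0]
    · rw [xp_pow, coeff_monomial, if_pos hk0, mul_one]
    · intro k hk hne
      rw [xp_pow, coeff_monomial, if_neg, mul_zero]
      intro h
      apply hne
      have : k * deg2 (expOf n) = k0 * deg2 (expOf n) := by
        rw [← deg2_smul, ← h, ← hk0deg]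
      exact Nat.eq_of_mul_eq_mul_right (by omega) this
    · intro h
      exact absurd (Finset.mem_range.mpr (by omega)) h
  · rw [dif_neg hex, Finset.sum_eq_zero]
    intro k _
    rw [xp_pow, coeff_monomial, if_neg, mul_zero]
    intro h
    exact hex ⟨k, h⟩


lemma Ord.mul_right {t s : R2} (ht : Ord 1 t) : Ord 1 (t * s) := by
  simpa using Ord.mul ht (Ord.ordZero s)

lemma sum_ne_zero_left {u : ℕ × ℕ} (hu : u ≠ 0) (v : ℕ × ℕ) : u + v ≠ 0 := by
  intro h
  apply hu
  have h1 : u.1 + v.1 = 0 := by have := congrArg Prod.fst h; simpa using this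
  have h2 : u.2 + v.2 = 0 := by have := congrArg Prod.snd h; simpa using this
  rw [Prod.ext_iff]
  constructor <;> simp only [Prod.fst_zero, Prod.snd_zero] <;> omega


lemma ord_X (i : Fin 2) : Ord 1 (X i : R2) := by
  intro e he
  have he0 : e = 0 := eq_zero_of_deg2 (by omega)
  subst he0
  rw [coeff_X, if_neg]
  intro h
  exact one_ne_zero (Finsupp.single_eq_zero.mp h.symm)

lemma ord_onePow_sub_one {m : ℕ × ℕ} (hm : m ≠ 0) (q : ℚ) :
    Ord (deg2 (expOf m)) (onePow (xp m) q - 1) := by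
  intro e he
  rw [map_sub, coeff_onePow, Finset.sum_eq_single 0]
  · rw [pow_zero, Ring.choose_zero_right, one_mul, sub_self]
  · intro k hk hne
    rw [xp_pow, coeff_monomial, if_neg, mul_zero]
    intro h
    rw [h, deg2_smul] at he
    have h1 := one_le_deg2_expOf hm
    have hk1 : 1 ≤ k := Nat.one_le_iff_ne_zero.mpr hne
    nlinarith
  · intro habs
    exact absurd (Finset.mem_range.mpr (by omega)) habs

lemma prodBwd_single (f : ℕ → (R2 →ₐ[ℚ] R2)) (a : ℕ) : prodBwd f a a = f a := by
  have h : a + 1 - a = 1 := by omega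
  rw [prodBwd, h]
  simp [show List.range 1 = [0] from rfl]

lemma prodBwd_succ (f : ℕ → (R2 →ₐ[ℚ] R2)) {a b : ℕ} (hab : a ≤ b + 1) :
    prodBwd f a (b + 1) = f (b + 1) * prodBwd f a b := by
  rw [prodBwd, prodBwd]
  have h : b + 1 + 1 - a = (b + 1 - a) + 1 := by omega
  rw [h, List.range_succ, List.reverse_append]
  simp only [List.reverse_cons, List.reverse_nil, List.nil_append, List.singleton_append,
    List.map_cons, List.prod_cons]
  have h2 : a + (b + 1 - a) = b + 1 := by omega
  rw [h2]

lemma prodBwd_empty (f : ℕ → (R2 →ₐ[ℚ] R2)) {a b : ℕ} (h : b + 1 ≤ a) : prodBwd f a b = 1 := by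
  rw [prodBwd]
  have h2 : b + 1 - a = 0 := by omega
  rw [h2]
  simp

lemma prodBwd_split (f : ℕ → (R2 →ₐ[ℚ] R2)) (a m : ℕ) (ha : a ≤ m) :
    ∀ k : ℕ, prodBwd f a (m + k) = prodBwd f (m + 1) (m + k) * prodBwd f a m
  | 0 => by rw [Nat.add_zero, prodBwd_empty f (a := m + 1) (b := m) (by omega), one_mul]
  | (k+1) => by
      rw [show m + (k + 1) = (m + k) + 1 from rfl, prodBwd_succ f (by omega),
        prodBwd_split f a m ha k, ← mul_assoc, ← prodBwd_succ f (by omega)]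

def ApproxId (d : ℕ) (h : R2 →ₐ[ℚ] R2) : Prop := ∀ s : R2, h s - s ∈ maxIdeal ^ d

lemma ApproxId.mul {d : ℕ} {h1 h2 : R2 →ₐ[ℚ] R2} (H1 : ApproxId d h1) (H2 : ApproxId d h2) :
    ApproxId d (h1 * h2) := by
  intro s
  have h : (h1 * h2) s - s = (h1 (h2 s) - h2 s) + (h2 s - s) := by
    rw [AlgHom.mul_apply]; ring
  rw [h]
  exact add_mem (H1 _) (H2 _)

lemma approxId_prodBwd (f : ℕ → (R2 →ₐ[ℚ] R2)) (a d : ℕ) :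
    ∀ j : ℕ, (∀ p, a ≤ p → p ≤ a + j → ApproxId d (f p)) → ApproxId d (prodBwd f a (a + j))
  | 0, h => by
      rw [Nat.add_zero, prodBwd_single]
      exact h a le_rfl (by omega)
  | (j+1), h => by
      rw [show a + (j + 1) = (a + j) + 1 from rfl, prodBwd_succ f (by omega)]
      exact (h _ (by omega) (by omega)).mul
        (approxId_prodBwd f a d j (fun p h1 h2 => h p h1 (by omega)))

lemma deg2_index {n n' : ℕ × ℕ} (hn : n ≠ 0) (p : ℕ) :
    p ≤ deg2 (expOf (n' + p • n)) := by
  rw [deg2_expOf]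
  have h1 : 1 ≤ n.1 + n.2 := by
    by_contra h
    apply hn
    rw [Prod.ext_iff]
    constructor <;> simp only [Prod.fst_zero, Prod.snd_zero] <;> omega
  have h2 : (n' + p • n).1 = n'.1 + p * n.1 := by
    simp [Prod.fst_add, Prod.smul_fst, smul_eq_mul]
  have h3 : (n' + p • n).2 = n'.2 + p * n.2 := by
    simp [Prod.snd_add, Prod.smul_snd, smul_eq_mul]
  rw [h2, h3]
  nlinarith

section PsiLemmas

variable (lam : ℚ) (Psi : ℚ → ℕ × ℕ → (R2 →ₐ[ℚ] R2))
variable (hPsi : ∀ (c : ℚ) (n : ℕ × ℕ), n ≠ 0 → IsDilog lam c n (Psi c n))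

def omega' (a b : ℕ × ℕ) : ℚ := omegaForm lam (nn2z a) (nn2z b)

lemma omega'_cast (a b : ℕ × ℕ) :
    omega' lam a b = lam * ((a.1 : ℚ) * (b.2 : ℚ) - (a.2 : ℚ) * (b.1 : ℚ)) := by
  show omegaForm lam (nn2z a) (nn2z b) = _
  simp only [omegaForm, nn2z]
  push_cast
  ring

lemma omega'_self (a : ℕ × ℕ) : omega' lam a a = 0 := by
  rw [omega'_cast]; ring

include hPsi

lemma psi_cont {c' : ℚ} {m : ℕ × ℕ} (hm : m ≠ 0) : IsCont (Psi c' m) :=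
  (hPsi c' m hm).1

lemma psi_X {c' : ℚ} {m : ℕ × ℕ} (hm : m ≠ 0) (i : Fin 2) :
    Psi c' m (X i) = X i * onePow (xp m) (c' * omega' lam m (basisVec i)) := by
  rw [(hPsi c' m hm).2 i, binomSeries_eq m hm]
  rfl

lemma psi_xp {c' : ℚ} {m : ℕ × ℕ} (hm : m ≠ 0) (a : ℕ × ℕ) :
    Psi c' m (xp a) = xp a * onePow (xp m) (c' * omega' lam m a) := by
  have hxp : xp a = X 0 ^ a.1 * X 1 ^ a.2 := by
    rw [xp, expOf_eq, monomial_mkI]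
  rw [hxp, map_mul, map_pow, map_pow, psi_X lam Psi hPsi hm 0, psi_X lam Psi hPsi hm 1,
    mul_pow, mul_pow, onePow_pow (ord_xp hm), onePow_pow (ord_xp hm)]
  have hre : ∀ q1 q2 : ℚ, (X 0 : R2) ^ a.1 * onePow (xp m) q1 * ((X 1 : R2) ^ a.2 * onePow (xp m) q2)
      = ((X 0 : R2) ^ a.1 * (X 1 : R2) ^ a.2) * (onePow (xp m) q1 * onePow (xp m) q2) := by
    intros; ring
  rw [hre, onePow_add (ord_xp hm), ← hxp]
  have harg : (a.1 : ℚ) * (c' * omega' lam m (basisVec 0)) + (a.2 : ℚ) * (c' * omega' lam m (basisVec 1))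
      = c' * omega' lam m a := by
    show (a.1 : ℚ) * (c' * omegaForm lam (nn2z m) (nn2z (1, 0)))
        + (a.2 : ℚ) * (c' * omegaForm lam (nn2z m) (nn2z (0, 1)))
        = c' * omegaForm lam (nn2z m) (nn2z a)
    simp only [omegaForm, nn2z]
    push_cast
    ring
  rw [harg]


theorem psi_sum {m : ℕ × ℕ} (hm : m ≠ 0) (c1 c2 : ℚ) :
    Psi c1 m * Psi c2 m = Psi (c1 + c2) m := by
  apply algHom_ext_cont
    (isCont_mul (psi_cont lam Psi hPsi hm) (psi_cont lam Psi hPsi hm))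
    (psi_cont lam Psi hPsi hm)
  intro i
  have hord := ord_xp hm
  have hfix : Psi c1 m (xp m) = xp m := by
    rw [psi_xp lam Psi hPsi hm m]
    have h0 : c1 * omega' lam m m = 0 := by rw [omega'_self]; ring
    rw [h0, onePow_zero, mul_one]
  rw [AlgHom.mul_apply, psi_X lam Psi hPsi hm i, map_mul, psi_X lam Psi hPsi hm i,
    map_onePow (psi_cont lam Psi hPsi hm) hord (by rw [hfix]; exact hord), hfix,
    psi_X lam Psi hPsi hm i, mul_assoc, onePow_add hord]
  have hs : c1 * omega' lam m (basisVec i) + c2 * omega' lam m (basisVec i)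
      = (c1 + c2) * omega' lam m (basisVec i) := by ring
  rw [hs]

theorem psi_pentagon {u v : ℕ × ℕ} (hu : u ≠ 0) (hv : v ≠ 0) (c' : ℚ)
    (huv : c' * omega' lam u v = 1) :
    Psi c' u * Psi c' v = Psi c' v * Psi c' (u + v) * Psi c' u := by
  have hw : u + v ≠ 0 := sum_ne_zero_left hu v
  have hU := ord_xp hu
  have hV := ord_xp hv
  have hW := ord_xp hw
  have hVW : Ord 1 (xp v + xp (u + v)) := hV.add hW
  have hWU : Ord 1 (xp (u + v) + xp u) := hW.add hU
  -- scalar facts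
  have hvu : c' * omega' lam v u = -1 := by
    rw [omega'_cast] at huv ⊢
    linear_combination -huv
  have hwu : c' * omega' lam (u + v) u = -1 := by
    rw [omega'_cast] at huv ⊢
    simp only [Prod.fst_add, Prod.snd_add]
    push_cast
    linear_combination -huv
  have hvw : c' * omega' lam v (u + v) = -1 := by
    rw [omega'_cast] at huv ⊢
    simp only [Prod.fst_add, Prod.snd_add]
    push_cast
    linear_combination -huv
  -- elementwise actions
  have hUV2 : xp u * xp v = xp (u + v) := xp_mul u v
  have hPuV : Psi c' u (xp v) = xp v + xp (u + v) := by
    rw [psi_xp lam Psi hPsi hu v, huv, onePow_one hU, mul_add, mul_one, xp_mul, add_comm v u]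
  have hPwU : Psi c' (u + v) (xp u) = xp u * onePow (xp (u + v)) (-1) := by
    rw [psi_xp lam Psi hPsi hw u, hwu]
  have hPvW : Psi c' v (xp (u + v)) = xp (u + v) * onePow (xp v) (-1) := by
    rw [psi_xp lam Psi hPsi hv (u + v), hvw]
  have hPvU : Psi c' v (xp u) = xp u * onePow (xp v) (-1) := by
    rw [psi_xp lam Psi hPsi hv u, hvu]
  have hPvWU : Psi c' v (xp (u + v) + xp u) = (xp (u + v) + xp u) * onePow (xp v) (-1) := by
    rw [map_add, hPvW, hPvU]
    ring
  apply algHom_ext_cont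
    (isCont_mul (psi_cont lam Psi hPsi hu) (psi_cont lam Psi hPsi hv))
    (isCont_mul (isCont_mul (psi_cont lam Psi hPsi hv) (psi_cont lam Psi hPsi hw))
      (psi_cont lam Psi hPsi hu))
  intro i
  -- LHS normal form
  have hL : (Psi c' u * Psi c' v) (X i) =
      X i * onePow (xp u) (c' * omega' lam u (basisVec i))
          * onePow (xp v + xp (u + v)) (c' * omega' lam v (basisVec i)) := by
    rw [AlgHom.mul_apply, psi_X lam Psi hPsi hv i, map_mul, psi_X lam Psi hPsi hu i,
      map_onePow (psi_cont lam Psi hPsi hu) hV (by rw [hPuV]; exact hVW), hPuV]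
  -- middle step: Psi w (Psi u (X i))
  have hC : c' * omega' lam (u + v) (basisVec i)
      = c' * omega' lam u (basisVec i) + c' * omega' lam v (basisVec i) := by
    rw [omega'_cast, omega'_cast, omega'_cast]
    simp only [Prod.fst_add, Prod.snd_add]
    push_cast
    ring
  have hstep2 : Psi c' (u + v) (Psi c' u (X i)) =
      X i * onePow (xp (u + v)) (c' * omega' lam v (basisVec i))
          * onePow (xp (u + v) + xp u) (c' * omega' lam u (basisVec i)) := by
    rw [psi_X lam Psi hPsi hu i, map_mul, psi_X lam Psi hPsi hw i,
      map_onePow (psi_cont lam Psi hPsi hw) hU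
        (by rw [hPwU]; exact Ord.mul_right hU), hPwU,
      onePow_twist hU hW (c' * omega' lam u (basisVec i)), hC]
    have h1 : onePow (xp (u + v))
          (c' * omega' lam u (basisVec i) + c' * omega' lam v (basisVec i))
        * onePow (xp (u + v)) (-(c' * omega' lam u (basisVec i)))
        = onePow (xp (u + v)) (c' * omega' lam v (basisVec i)) := by
      rw [onePow_add hW]
      have h2 : c' * omega' lam u (basisVec i) + c' * omega' lam v (basisVec i)
          + -(c' * omega' lam u (basisVec i)) = c' * omega' lam v (basisVec i) := by ring
      rw [h2]
    calc X i * onePow (xp (u + v))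
            (c' * omega' lam u (basisVec i) + c' * omega' lam v (basisVec i))
          * (onePow (xp (u + v) + xp u) (c' * omega' lam u (basisVec i))
            * onePow (xp (u + v)) (-(c' * omega' lam u (basisVec i))))
        = (onePow (xp (u + v))
            (c' * omega' lam u (basisVec i) + c' * omega' lam v (basisVec i))
          * onePow (xp (u + v)) (-(c' * omega' lam u (basisVec i))))
          * (X i * onePow (xp (u + v) + xp u) (c' * omega' lam u (basisVec i))) := by ring
      _ = onePow (xp (u + v)) (c' * omega' lam v (basisVec i))
          * (X i * onePow (xp (u + v) + xp u) (c' * omega' lam u (basisVec i))) := by rw [h1]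
      _ = X i * onePow (xp (u + v)) (c' * omega' lam v (basisVec i))
          * onePow (xp (u + v) + xp u) (c' * omega' lam u (basisVec i)) := by ring
  -- RHS normal form
  have hR : (Psi c' v * Psi c' (u + v) * Psi c' u) (X i) =
      X i * onePow (xp u) (c' * omega' lam u (basisVec i))
          * onePow (xp v + xp (u + v)) (c' * omega' lam v (basisVec i)) := by
    rw [AlgHom.mul_apply, AlgHom.mul_apply, hstep2, map_mul, map_mul,
      psi_X lam Psi hPsi hv i,
      map_onePow (psi_cont lam Psi hPsi hv) hW
        (by rw [hPvW]; exact Ord.mul_right hW), hPvW,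
      map_onePow (psi_cont lam Psi hPsi hv) hWU
        (by rw [hPvWU]; exact Ord.mul_right hWU), hPvWU,
      onePow_twist hW hV (c' * omega' lam v (basisVec i)),
      onePow_twist hWU hV (c' * omega' lam u (basisVec i))]
    have hargRw : xp v + (xp (u + v) + xp u) = xp u + xp v + xp u * xp v := by
      rw [hUV2]; ring
    rw [hargRw, ← onePow_mul_arg hU hV]
    have hVB : onePow (xp v) (c' * omega' lam v (basisVec i))
        * onePow (xp v) (-(c' * omega' lam v (basisVec i))) = 1 := by
      rw [onePow_add hV]
      have h2 : c' * omega' lam v (basisVec i) + -(c' * omega' lam v (basisVec i)) = 0 := by ring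
      rw [h2, onePow_zero]
    have hVA : onePow (xp v) (c' * omega' lam u (basisVec i))
        * onePow (xp v) (-(c' * omega' lam u (basisVec i))) = 1 := by
      rw [onePow_add hV]
      have h2 : c' * omega' lam u (basisVec i) + -(c' * omega' lam u (basisVec i)) = 0 := by ring
      rw [h2, onePow_zero]
    calc X i * onePow (xp v) (c' * omega' lam v (basisVec i))
          * (onePow (xp v + xp (u + v)) (c' * omega' lam v (basisVec i))
            * onePow (xp v) (-(c' * omega' lam v (basisVec i))))
          * (onePow (xp u) (c' * omega' lam u (basisVec i))
              * onePow (xp v) (c' * omega' lam u (basisVec i))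
            * onePow (xp v) (-(c' * omega' lam u (basisVec i))))
        = X i * onePow (xp u) (c' * omega' lam u (basisVec i))
          * onePow (xp v + xp (u + v)) (c' * omega' lam v (basisVec i))
          * ((onePow (xp v) (c' * omega' lam v (basisVec i))
              * onePow (xp v) (-(c' * omega' lam v (basisVec i))))
            * (onePow (xp v) (c' * omega' lam u (basisVec i))
              * onePow (xp v) (-(c' * omega' lam u (basisVec i))))) := by ring
      _ = X i * onePow (xp u) (c' * omega' lam u (basisVec i))
          * onePow (xp v + xp (u + v)) (c' * omega' lam v (basisVec i)) := by
          rw [hVB, hVA, one_mul, mul_one]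
  rw [hL, hR]


lemma psi_maps_pow {c' : ℚ} {m : ℕ × ℕ} (hm : m ≠ 0) (d : ℕ) {r : R2}
    (hr : r ∈ maxIdeal ^ d) : Psi c' m r ∈ maxIdeal ^ d := by
  have hXmem : ∀ i : Fin 2, Psi c' m (X i) ∈ maxIdeal := by
    intro i
    rw [psi_X lam Psi hPsi hm i]
    exact Ideal.mul_mem_right _ _ (X_mem_maxIdeal i)
  have hmaple : Ideal.map (Psi c' m).toRingHom maxIdeal ≤ maxIdeal := by
    rw [maxIdeal, Ideal.map_span]
    apply Ideal.span_le.mpr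
    rintro y ⟨x, hx, rfl⟩
    rcases hx with rfl | hx
    · exact hXmem 0
    · rw [Set.mem_singleton_iff] at hx
      subst hx
      exact hXmem 1
  have h1 : Psi c' m r ∈ Ideal.map (Psi c' m).toRingHom (maxIdeal ^ d) :=
    Ideal.mem_map_of_mem _ hr
  rw [Ideal.map_pow] at h1
  exact Ideal.pow_right_mono hmaple d h1

lemma psi_near_id {c' : ℚ} {m : ℕ × ℕ} (hm : m ≠ 0) {d : ℕ}
    (hdeg : d ≤ deg2 (expOf m)) : ApproxId d (Psi c' m) := by
  apply sub_mem_of_cont (psi_cont lam Psi hPsi hm)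
  intro i
  rw [psi_X lam Psi hPsi hm i]
  have h : X i * onePow (xp m) (c' * omega' lam m (basisVec i)) - X i
      = X i * (onePow (xp m) (c' * omega' lam m (basisVec i)) - 1) := by ring
  rw [h]
  apply ord_mem_pow
  have h2 := Ord.mul (ord_X i) (ord_onePow_sub_one hm (c' * omega' lam m (basisVec i)))
  exact h2.mono (by omega)

theorem psi_base {c : ℚ} {n a : ℕ × ℕ} (ha : a ≠ 0) (hn : n ≠ 0)
    (h1 : c * omega' lam a n = 1) :
    Psi c a * Psi (2 * c) n
      = Psi (2 * c) n * (Psi c (a + n + n) * (Psi (2 * c) (a + n) * Psi c a)) := by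
  have hne_an : a + n ≠ 0 := sum_ne_zero_left ha n
  have hp1 : Psi c a * Psi c n = Psi c n * Psi c (a + n) * Psi c a :=
    psi_pentagon lam Psi hPsi ha hn c h1
  have h2 : c * omega' lam (a + n) n = 1 := by
    rw [omega'_cast] at h1 ⊢
    simp only [Prod.fst_add, Prod.snd_add]
    push_cast
    linear_combination h1
  have hp2 : Psi c (a + n) * Psi c n = Psi c n * Psi c (a + n + n) * Psi c (a + n) :=
    psi_pentagon lam Psi hPsi hne_an hn c h2
  have hsn : Psi c n * Psi c n = Psi (2 * c) n := by
    have h := psi_sum lam Psi hPsi hn c c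
    rwa [show c + c = 2 * c by ring] at h
  have hsan : Psi c (a + n) * Psi c (a + n) = Psi (2 * c) (a + n) := by
    have h := psi_sum lam Psi hPsi hne_an c c
    rwa [show c + c = 2 * c by ring] at h
  calc Psi c a * Psi (2 * c) n
      = Psi c a * (Psi c n * Psi c n) := by rw [hsn]
    _ = Psi c a * Psi c n * Psi c n := (mul_assoc _ _ _).symm
    _ = Psi c n * Psi c (a + n) * Psi c a * Psi c n := by rw [hp1]
    _ = Psi c n * Psi c (a + n) * (Psi c a * Psi c n) := by rw [mul_assoc]
    _ = Psi c n * Psi c (a + n) * (Psi c n * Psi c (a + n) * Psi c a) := by rw [hp1]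
    _ = Psi c n * ((Psi c (a + n) * Psi c n) * (Psi c (a + n) * Psi c a)) := by
        simp only [mul_assoc]
    _ = Psi c n * ((Psi c n * Psi c (a + n + n) * Psi c (a + n)) * (Psi c (a + n) * Psi c a)) := by
        rw [hp2]
    _ = (Psi c n * Psi c n) * (Psi c (a + n + n) * ((Psi c (a + n) * Psi c (a + n)) * Psi c a)) := by
        simp only [mul_assoc]
    _ = Psi (2 * c) n * (Psi c (a + n + n) * (Psi (2 * c) (a + n) * Psi c a)) := by
        rw [hsn, hsan]

theorem main_claim (n n' : ℕ × ℕ) (hn : n ≠ 0) (hn' : n' ≠ 0) (c : ℚ) (hc : c ≠ 0)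
    (hw : omega' lam n' n = 1 / c) :
    ∀ P : ℕ, prodBwd (fun p => Psi c (n' + (2 * p) • n)) 0 P * Psi (2 * c) n
      = Psi (2 * c) n * (Psi c (n' + (2 * P + 2) • n)
          * (prodBwd (fun p => Psi (2 * c) (n' + p • n)) 1 (2 * P + 1) * Psi c n')) := by
  have hw' : c * omega' lam n' n = 1 := by rw [hw]; field_simp
  have hne : ∀ k : ℕ, n' + k • n ≠ 0 := fun k => sum_ne_zero_left hn' _
  have hkey : ∀ k : ℕ, c * omega' lam (n' + k • n) n = 1 := by
    intro k
    have h := hw'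
    rw [omega'_cast] at h ⊢
    simp only [Prod.fst_add, Prod.snd_add, Prod.smul_fst, Prod.smul_snd, smul_eq_mul]
    push_cast
    linear_combination h
  have hstep : ∀ k : ℕ, (n' + k • n) + n = n' + (k + 1) • n := by
    intro k
    rw [add_assoc, succ_nsmul]
  have hbase : ∀ k : ℕ, Psi c (n' + k • n) * Psi (2 * c) n
      = Psi (2 * c) n * (Psi c (n' + (k + 2) • n)
          * (Psi (2 * c) (n' + (k + 1) • n) * Psi c (n' + k • n))) := by
    intro k
    have h := psi_base lam Psi hPsi (hne k) hn (hkey k)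
    rw [hstep k, hstep (k + 1)] at h
    exact h
  have hmerge : ∀ k : ℕ, Psi c (n' + k • n) * Psi c (n' + k • n) = Psi (2 * c) (n' + k • n) := by
    intro k
    have h := psi_sum lam Psi hPsi (hne k) c c
    rwa [show c + c = 2 * c by ring] at h
  intro P
  induction P with
  | zero =>
      simp only [Nat.mul_zero, Nat.zero_add, prodBwd_single, zero_smul, add_zero]
      have h0 := hbase 0
      simp only [Nat.zero_add, zero_smul, add_zero] at h0
      exact h0
  | succ P ih =>
      rw [show 2 * (P + 1) + 2 = (2 * P + 2) + 2 by ring,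
        show 2 * (P + 1) + 1 = ((2 * P + 1) + 1) + 1 by ring,
        prodBwd_succ (fun p => Psi (2 * c) (n' + p • n)) (by omega),
        prodBwd_succ (fun p => Psi (2 * c) (n' + p • n)) (by omega),
        prodBwd_succ (fun p => Psi c (n' + (2 * p) • n)) (by omega)]
      rw [show 2 * (P + 1) = (2 * P + 2) by ring, mul_assoc, ih, ← mul_assoc,
        hbase (2 * P + 2)]
      rw [show ((2 * P + 1) + 1) + 1 = (2 * P + 2) + 1 by ring,
        show (2 * P + 1) + 1 = 2 * P + 2 by ring]
      calc (Psi (2 * c) n * (Psi c (n' + ((2 * P + 2) + 2) • n)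
              * (Psi (2 * c) (n' + ((2 * P + 2) + 1) • n) * Psi c (n' + (2 * P + 2) • n))))
            * (Psi c (n' + (2 * P + 2) • n)
              * (prodBwd (fun p => Psi (2 * c) (n' + p • n)) 1 (2 * P + 1) * Psi c n'))
          = Psi (2 * c) n * (Psi c (n' + ((2 * P + 2) + 2) • n)
              * (Psi (2 * c) (n' + ((2 * P + 2) + 1) • n)
                * ((Psi c (n' + (2 * P + 2) • n) * Psi c (n' + (2 * P + 2) • n))
                  * (prodBwd (fun p => Psi (2 * c) (n' + p • n)) 1 (2 * P + 1) * Psi c n')))) := by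
            simp only [mul_assoc]
        _ = Psi (2 * c) n * (Psi c (n' + ((2 * P + 2) + 2) • n)
              * (Psi (2 * c) (n' + ((2 * P + 2) + 1) • n)
                * (Psi (2 * c) (n' + (2 * P + 2) • n)
                  * (prodBwd (fun p => Psi (2 * c) (n' + p • n)) 1 (2 * P + 1) * Psi c n')))) := by
            rw [hmerge (2 * P + 2)]
        _ = Psi (2 * c) n * (Psi c (n' + ((2 * P + 2) + 2) • n)
              * (Psi (2 * c) (n' + ((2 * P + 2) + 1) • n)
                * (Psi (2 * c) (n' + (2 * P + 2) • n)
                  * prodBwd (fun p => Psi (2 * c) (n' + p • n)) 1 (2 * P + 1))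
                * Psi c n')) := by
            simp only [mul_assoc]

end PsiLemmas

end Eq4Aux

theorem lemma_3_4_eq4 (lam : ℚ) (hlam : lam ≠ 0)
    (Psi : ℚ → ℕ × ℕ → (R2 →ₐ[ℚ] R2))
    (hPsi : ∀ (c : ℚ) (n : ℕ × ℕ), n ≠ 0 → IsDilog lam c n (Psi c n))
    (n n' : ℕ × ℕ) (hn : n ≠ 0) (hn' : n' ≠ 0)
    (c : ℚ) (hc : c ≠ 0)
    (hw : omegaForm lam (nn2z n') (nn2z n) = 1 / c) :
    ∀ d : ℕ, 1 ≤ d →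
      ModEq d
        ((prodBwd (fun p => Psi c (n' + (2 * p) • n)) 0 d).comp (Psi (2 * c) n))
        (((Psi (2 * c) n).comp (prodBwd (fun p => Psi (2 * c) (n' + p • n)) 1 d)).comp
          (Psi c n')) := by
  intro d hd
  have hw2 : Eq4Aux.omega' lam n' n = 1 / c := hw
  have hclaim := Eq4Aux.main_claim lam Psi hPsi n n' hn hn' c hc hw2 d
  have hsplit : prodBwd (fun p => Psi (2 * c) (n' + p • n)) 1 (2 * d + 1)
      = prodBwd (fun p => Psi (2 * c) (n' + p • n)) (d + 1) (2 * d + 1)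
        * prodBwd (fun p => Psi (2 * c) (n' + p • n)) 1 d := by
    have h := Eq4Aux.prodBwd_split (fun p => Psi (2 * c) (n' + p • n)) 1 d hd (d + 1)
    rw [show d + (d + 1) = 2 * d + 1 by omega] at h
    exact h
  have hE : Eq4Aux.ApproxId d (Psi c (n' + (2 * d + 2) • n)
      * prodBwd (fun p => Psi (2 * c) (n' + p • n)) (d + 1) (2 * d + 1)) := by
    have h1 : Eq4Aux.ApproxId d (Psi c (n' + (2 * d + 2) • n)) :=
      Eq4Aux.psi_near_id lam Psi hPsi (Eq4Aux.sum_ne_zero_left hn' _)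
        (le_trans (by omega) (Eq4Aux.deg2_index hn (2 * d + 2)))
    have h2 : Eq4Aux.ApproxId d
        (prodBwd (fun p => Psi (2 * c) (n' + p • n)) (d + 1) (2 * d + 1)) := by
      have h := Eq4Aux.approxId_prodBwd (fun p => Psi (2 * c) (n' + p • n)) (d + 1) d d
        (fun p hp1 hp2 => Eq4Aux.psi_near_id lam Psi hPsi (Eq4Aux.sum_ne_zero_left hn' _)
          (le_trans (by omega) (Eq4Aux.deg2_index hn p)))
      rwa [show (d + 1) + d = 2 * d + 1 by omega] at h
    exact h1.mul h2
  intro i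
  have hLfun : (prodBwd (fun p => Psi c (n' + (2 * p) • n)) 0 d).comp (Psi (2 * c) n)
      = Psi (2 * c) n * ((Psi c (n' + (2 * d + 2) • n)
          * prodBwd (fun p => Psi (2 * c) (n' + p • n)) (d + 1) (2 * d + 1))
        * (prodBwd (fun p => Psi (2 * c) (n' + p • n)) 1 d * Psi c n')) := by
    have h1 : (prodBwd (fun p => Psi c (n' + (2 * p) • n)) 0 d).comp (Psi (2 * c) n)
        = prodBwd (fun p => Psi c (n' + (2 * p) • n)) 0 d * Psi (2 * c) n := rfl
    rw [h1, hclaim, hsplit]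
    simp only [mul_assoc]
  have hRfun : ((Psi (2 * c) n).comp (prodBwd (fun p => Psi (2 * c) (n' + p • n)) 1 d)).comp
        (Psi c n')
      = Psi (2 * c) n * (prodBwd (fun p => Psi (2 * c) (n' + p • n)) 1 d * Psi c n') := by
    have h1 : ((Psi (2 * c) n).comp (prodBwd (fun p => Psi (2 * c) (n' + p • n)) 1 d)).comp
          (Psi c n')
        = Psi (2 * c) n * prodBwd (fun p => Psi (2 * c) (n' + p • n)) 1 d * Psi c n' := rfl
    rw [h1, mul_assoc]
  rw [hLfun, hRfun]
  simp only [AlgHom.mul_apply]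
  rw [← map_sub]
  exact Eq4Aux.psi_maps_pow lam Psi hPsi hn d (hE _)

end
end

section
/- Lemma 4.2: Let l be a non-negative integer, let n, n' ∈ N⁺, and let c ∈ ℚ with c ≠ 0 and ω(n', n) = 1/c. Then Ψ_c[n'] ∘ (∏→_{p=0}^{l} Ψ_{2c}[n+pn']) = Ψ_{2c}[n] ∘ (∏→_{p=1}^{l} (Ψ_c[2n+(2p−1)n'] ∘ Ψ_{4c}[n+pn'])) ∘ Ψ_c[2n+(2l+1)n'] ∘ Ψ_{2c}[n+(l+1)n'] ∘ Ψ_c[n'] as ℚ-algebra endomorphisms of R. -/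
open MvPowerSeries

noncomputable section

namespace SD

/-- total degree of an exponent -/
def deg (s : Fin 2 →₀ ℕ) : ℕ := s 0 + s 1

lemma deg_add (s t : Fin 2 →₀ ℕ) : deg (s + t) = deg s + deg t := by
  simp [deg, Finsupp.add_apply]; ring

lemma deg_eq_zero_iff {s : Fin 2 →₀ ℕ} : deg s = 0 ↔ s = 0 := by
  constructor
  · intro h
    ext i
    have h0 : s 0 = 0 ∧ s 1 = 0 := by unfold deg at h; omega
    fin_cases i
    · simpa using h0.1
    · simpa using h0.2
  · rintro rfl; simp [deg]

/-- the decomposition exponent -/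
def eTo (j d : ℕ) : Fin 2 →₀ ℕ := Finsupp.single 0 j + Finsupp.single 1 (d - j)

lemma eTo_apply0 (j d : ℕ) : eTo j d 0 = j := by simp [eTo]
lemma eTo_apply1 (j d : ℕ) : eTo j d 1 = d - j := by simp [eTo]

lemma deg_eTo {j d : ℕ} (h : j ≤ d) : deg (eTo j d) = d := by
  simp [deg, eTo_apply0, eTo_apply1]; omega

lemma monomial_eTo_mem (j d : ℕ) (h : j ≤ d) :
    (monomial (eTo j d) 1 : R2) ∈ maxIdeal ^ d := by
  have h0 : (X 0 : R2) ∈ maxIdeal := Ideal.subset_span (by simp)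
  have h1 : (X 1 : R2) ∈ maxIdeal := Ideal.subset_span (by simp)
  have : (monomial (eTo j d) 1 : R2) = (X 0) ^ j * (X 1) ^ (d - j) := by
    rw [X_pow_eq, X_pow_eq, monomial_mul_monomial, one_mul, eTo]
  rw [this]
  have := Ideal.mul_mem_mul (Ideal.pow_mem_pow h0 j) (Ideal.pow_mem_pow h1 (d - j))
  rwa [← pow_add, Nat.add_sub_cancel' h] at this

lemma coeff_eq_zero_of_mem {f : R2} {d : ℕ} (hf : f ∈ maxIdeal ^ d) :
    ∀ s, deg s < d → (coeff s) f = 0 := by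
  classical
  induction d generalizing f with
  | zero => intro s h; omega
  | succ d ih =>
    have : maxIdeal ^ (d+1) = maxIdeal ^ d * maxIdeal := by ring
    rw [this] at hf
    induction hf using Submodule.mul_induction_on' with
    | mem_mul_mem a ha b hb =>
      intro s hs
      rw [coeff_mul]
      apply Finset.sum_eq_zero
      rintro ⟨u, v⟩ huv
      rw [Finset.HasAntidiagonal.mem_antidiagonal] at huv
      have hduv : deg u + deg v = deg s := by rw [← deg_add, huv]
      by_cases hu : deg u < d
      · rw [ih ha u hu, zero_mul]
      · have hv : deg v < 1 := by omega
        have hv0 : v = 0 := deg_eq_zero_iff.mp (by omega)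
        subst hv0
        have hb0 : (coeff 0) b = 0 := by
          have : maxIdeal ≤ Ideal.span {(X 0 : R2), X 1} := le_rfl
          have hb' := hb
          rw [maxIdeal, Ideal.mem_span_pair] at hb'
          obtain ⟨p, q, rfl⟩ := hb'
          simp [coeff_zero_eq_constantCoeff, map_add, map_mul]
        rw [hb0, mul_zero]
    | add x hx y hy ihx ihy =>
      intro s hs
      rw [map_add, ihx s hs, ihy s hs, add_zero]


/-- quotient component for the decomposition -/
def quotComp (f : R2) (j d : ℕ) : R2 := fun t =>
  if min ((eTo j d + t) 0) d = j then (coeff (eTo j d + t)) f else 0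

lemma le_of_deg_ge {s : Fin 2 →₀ ℕ} {d : ℕ} (h : d ≤ deg s) :
    eTo (min (s 0) d) d ≤ s := by
  intro i
  fin_cases i
  · simp [eTo_apply0]
  · show eTo (min (s 0) d) d 1 ≤ s 1
    rw [eTo_apply1]
    unfold deg at h; omega

lemma mem_of_coeff_eq_zero {f : R2} {d : ℕ} (hf : ∀ s, deg s < d → (coeff s) f = 0) :
    f ∈ maxIdeal ^ d := by
  classical
  have key : f = ∑ j ∈ Finset.range (d + 1), (monomial (eTo j d) 1 : R2) * quotComp f j d := by
    apply MvPowerSeries.ext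
    intro s
    rw [map_sum]
    have hterm : ∀ j ∈ Finset.range (d+1),
        (coeff s) ((monomial (eTo j d) 1 : R2) * quotComp f j d) =
        if eTo j d ≤ s ∧ min (s 0) d = j then (coeff s) f else 0 := by
      intro j hj
      rw [coeff_monomial_mul]
      by_cases hle : eTo j d ≤ s
      · rw [if_pos hle]
        have hst : eTo j d + (s - eTo j d) = s := add_tsub_cancel_of_le hle
        have : (coeff (s - eTo j d)) (quotComp f j d) =
            (if min (s 0) d = j then (coeff s) f else 0) := by
          show (quotComp f j d) (s - eTo j d) = _
          unfold quotComp
          rw [hst]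
        rw [this, one_mul]
        by_cases hm : min (s 0) d = j
        · rw [if_pos hm, if_pos ⟨hle, hm⟩]
        · rw [if_neg hm, if_neg (by tauto)]
      · rw [if_neg hle, if_neg (by tauto)]
    rw [Finset.sum_congr rfl hterm]
    by_cases hs : d ≤ deg s
    · rw [Finset.sum_eq_single (min (s 0) d)]
      · rw [if_pos ⟨le_of_deg_ge hs, rfl⟩]
      · intro j hj hne
        rw [if_neg]
        rintro ⟨-, h2⟩
        exact hne h2.symm
      · intro h
        exact absurd (by simp [Nat.lt_succ_iff] : min (s 0) d ∈ Finset.range (d+1)) h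
    · have : ∀ j ∈ Finset.range (d+1), (if eTo j d ≤ s ∧ min (s 0) d = j
          then (coeff s) f else 0) = 0 := by
        intro j hj
        rw [if_neg]
        rintro ⟨h1, h2⟩
        have : deg (eTo j d) ≤ deg s := by
          unfold deg; have := h1 0; have := h1 1; omega
        rw [deg_eTo (by simp at hj; omega)] at this
        omega
      rw [Finset.sum_congr rfl this, Finset.sum_const_zero, hf s (by omega)]
  rw [key]
  apply Ideal.sum_mem
  intro j hj
  simp only [Finset.mem_range, Nat.lt_succ_iff] at hj
  exact Ideal.mul_mem_right _ _ (monomial_eTo_mem j d hj)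


/-! ### Part 2 : formal rational powers -/

/-- `OP u q` is the formal power `(1+u)^q`, defined coefficientwise. -/
def OP (u : R2) (q : ℚ) : R2 := fun t =>
  (coeff t) (∑ k ∈ Finset.range (deg t + 1), Ring.choose q k • u ^ k)

variable {u α β γ : R2} {q q' : ℚ}

lemma mem_maxIdeal_of_cc (h : constantCoeff u = 0) : u ∈ maxIdeal := by
  rw [← pow_one maxIdeal]
  apply mem_of_coeff_eq_zero
  intro s hs
  have : s = 0 := deg_eq_zero_iff.mp (by omega)
  rw [this, coeff_zero_eq_constantCoeff_apply, h]

lemma coeff_pow_eq_zero (h : constantCoeff u = 0) {t : Fin 2 →₀ ℕ} {k : ℕ}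
    (hk : deg t < k) : (coeff t) (u ^ k) = 0 := by
  refine coeff_eq_zero_of_mem ?_ t hk
  exact Ideal.pow_mem_pow (mem_maxIdeal_of_cc h) k

lemma coeff_OP (h : constantCoeff u = 0) {t : Fin 2 →₀ ℕ} {N : ℕ}
    (hN : deg t < N) :
    (coeff t) (OP u q) = (coeff t) (∑ k ∈ Finset.range N, Ring.choose q k • u ^ k) := by
  have : (coeff t) (OP u q) =
      (coeff t) (∑ k ∈ Finset.range (deg t + 1), Ring.choose q k • u ^ k) := rfl
  rw [this, map_sum, map_sum]
  apply Finset.sum_subset (Finset.range_subset_range.mpr (by omega : deg t + 1 ≤ N))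
  intro k hk hk'
  simp only [Finset.mem_range] at hk hk'
  rw [map_smul, coeff_pow_eq_zero h (by omega), smul_zero]

lemma OP_sub_sum_mem (h : constantCoeff u = 0) (N : ℕ) :
    OP u q - ∑ k ∈ Finset.range N, Ring.choose q k • u ^ k ∈ maxIdeal ^ N := by
  apply mem_of_coeff_eq_zero
  intro s hs
  rw [map_sub, coeff_OP h (q := q) hs, sub_self]

lemma constantCoeff_OP (h : constantCoeff u = 0) :
    constantCoeff (OP u q) = 1 := by
  have h0 : deg (0 : Fin 2 →₀ ℕ) < 1 := by simp [deg]
  have := coeff_OP h (q := q) h0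
  rw [coeff_zero_eq_constantCoeff_apply] at this
  rw [this]
  simp [Ring.choose_zero_right]

lemma smeval_int_eq_eval_map (p : Polynomial ℤ) (x : ℚ) :
    (p.map (Int.castRingHom ℚ)).eval x = p.smeval x := by
  rw [Polynomial.eval_map, Polynomial.eval₂_eq_sum, Polynomial.smeval_eq_sum]
  unfold Polynomial.sum
  apply Finset.sum_congr rfl
  intro k _
  show (Int.castRingHom ℚ) (p.coeff k) * x ^ k = (p.coeff k) • x ^ k
  rw [zsmul_eq_mul]
  simp

/-- `φ : ℚ → ℚ` is (the evaluation of) a polynomial. -/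
def PolyFun (φ : ℚ → ℚ) : Prop := ∃ p : Polynomial ℚ, ∀ x, φ x = p.eval x

lemma PolyFun.const (a : ℚ) : PolyFun (fun _ => a) := ⟨Polynomial.C a, by simp⟩

lemma PolyFun.add {φ ψ : ℚ → ℚ} (hφ : PolyFun φ) (hψ : PolyFun ψ) :
    PolyFun (fun x => φ x + ψ x) := by
  obtain ⟨p, hp⟩ := hφ; obtain ⟨r, hr⟩ := hψ
  exact ⟨p + r, by simp [hp, hr]⟩

lemma PolyFun.mul {φ ψ : ℚ → ℚ} (hφ : PolyFun φ) (hψ : PolyFun ψ) :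
    PolyFun (fun x => φ x * ψ x) := by
  obtain ⟨p, hp⟩ := hφ; obtain ⟨r, hr⟩ := hψ
  exact ⟨p * r, by simp [hp, hr]⟩

lemma PolyFun.sum {ι : Type*} (s : Finset ι) (φ : ι → ℚ → ℚ)
    (h : ∀ i ∈ s, PolyFun (φ i)) : PolyFun (fun x => ∑ i ∈ s, φ i x) := by
  classical
  induction s using Finset.induction with
  | empty => simpa using PolyFun.const 0
  | insert _ _ hni ih =>
    rename_i a s
    have h1 := h a (Finset.mem_insert_self a s)
    have h2 := ih (fun i hi => h i (Finset.mem_insert_of_mem hi))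
    obtain ⟨p, hp⟩ := h1; obtain ⟨r, hr⟩ := h2
    refine ⟨p + r, fun x => ?_⟩
    show ∑ i ∈ insert a s, φ i x = _
    rw [Finset.sum_insert hni, Polynomial.eval_add, ← hp x, ← hr x]

lemma PolyFun.comp_add {φ : ℚ → ℚ} (hφ : PolyFun φ) (r : ℚ) :
    PolyFun (fun x => φ (x + r)) := by
  obtain ⟨p, hp⟩ := hφ
  exact ⟨p.comp (Polynomial.X + Polynomial.C r), by simp [hp]⟩

lemma polyFun_choose (k : ℕ) : PolyFun (fun x => Ring.choose x k) := by
  refine ⟨(k.factorial : ℚ)⁻¹ • (descPochhammer ℤ k).map (Int.castRingHom ℚ), fun x => ?_⟩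
  have h1 : (descPochhammer ℤ k).smeval x = (k.factorial : ℚ) * Ring.choose x k := by
    rw [Ring.descPochhammer_eq_factorial_smul_choose, nsmul_eq_mul]
  rw [Polynomial.eval_smul, smul_eq_mul, smeval_int_eq_eval_map, h1,
    inv_mul_cancel_left₀ (by positivity)]

lemma polyFun_coeff_OP (u : R2) (t : Fin 2 →₀ ℕ) :
    PolyFun (fun q => (coeff t) (OP u q)) := by
  have : (fun q => (coeff t) (OP u q)) =
      fun q => ∑ k ∈ Finset.range (deg t + 1), Ring.choose q k * (coeff t) (u ^ k) := by
    funext q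
    have : (coeff t) (OP u q) =
        (coeff t) (∑ k ∈ Finset.range (deg t + 1), Ring.choose q k • u ^ k) := rfl
    rw [this, map_sum]
    exact Finset.sum_congr rfl fun k _ => by rw [map_smul, smul_eq_mul]
  rw [this]
  exact PolyFun.sum _ _ fun k _ => (polyFun_choose k).mul (PolyFun.const _)

lemma eq_of_polyFun_of_nat {φ ψ : ℚ → ℚ} (hφ : PolyFun φ) (hψ : PolyFun ψ)
    (h : ∀ m : ℕ, φ m = ψ m) : ∀ x, φ x = ψ x := by
  obtain ⟨p, hp⟩ := hφ; obtain ⟨r, hr⟩ := hψ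
  have : p - r = 0 := by
    apply Polynomial.eq_zero_of_infinite_isRoot
    apply Set.Infinite.mono (s := Set.range (Nat.cast : ℕ → ℚ))
    · rintro x ⟨m, rfl⟩
      simp only [Set.mem_setOf_eq, Polynomial.IsRoot, Polynomial.eval_sub]
      rw [← hp, ← hr, h m, sub_self]
    · exact Set.infinite_range_of_injective Nat.cast_injective
  intro x
  have := congrArg (Polynomial.eval x) this
  simp only [Polynomial.eval_sub, Polynomial.eval_zero] at this
  rw [hp, hr]
  linarith


lemma OP_natCast (h : constantCoeff u = 0) (m : ℕ) :
    OP u (m : ℚ) = (1 + u) ^ m := by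
  have key : (1 + u) ^ m = ∑ k ∈ Finset.range (m + 1), ((m.choose k : ℚ)) • u ^ k := by
    rw [add_comm, add_pow]
    refine Finset.sum_congr rfl fun k _ => ?_
    have : ((m.choose k : ℚ)) • (u ^ k) = u ^ k * (m.choose k : R2) := by
      rw [Algebra.smul_def, map_natCast, mul_comm]
    rw [one_pow, mul_one, this]
  apply MvPowerSeries.ext
  intro t
  have hN : deg t < deg t + 1 + m := by omega
  rw [coeff_OP h hN, key, map_sum, map_sum]
  rw [Finset.sum_subset (Finset.range_subset_range.mpr (by omega : m + 1 ≤ deg t + 1 + m))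
    (fun k hk hk' => by
      simp only [Finset.mem_range] at hk hk'
      rw [map_smul, Nat.choose_eq_zero_of_lt (by omega), Nat.cast_zero, zero_smul])]
  refine Finset.sum_congr rfl fun k _ => ?_
  rw [map_smul, map_smul, Ring.choose_natCast]

lemma OP_zero (h : constantCoeff u = 0) : OP u 0 = 1 := by
  have := OP_natCast h 0
  simpa using this

lemma OP_one (h : constantCoeff u = 0) : OP u 1 = 1 + u := by
  have := OP_natCast h 1
  simpa using this

lemma polyFun_coeff_OP_mul (u v : R2) (q' : ℚ) (t : Fin 2 →₀ ℕ) :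
    PolyFun (fun q => (coeff t) (OP u q * OP v q')) := by
  classical
  have : (fun q => (coeff t) (OP u q * OP v q')) = fun q =>
      ∑ p ∈ Finset.HasAntidiagonal.antidiagonal t, (coeff p.1) (OP u q) * (coeff p.2) (OP v q') := by
    funext q
    rw [coeff_mul]
  rw [this]
  exact PolyFun.sum _ _ fun p _ => (polyFun_coeff_OP u p.1).mul (PolyFun.const _)

lemma OP_add_nat (h : constantCoeff u = 0) (q : ℚ) (m : ℕ) :
    OP u q * OP u (m : ℚ) = OP u (q + m) := by
  apply MvPowerSeries.ext
  intro t
  have hnat : ∀ j : ℕ, OP u (j : ℚ) * OP u (m : ℚ) = OP u ((j : ℚ) + m) := by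
    intro j
    rw [OP_natCast h, OP_natCast h, ← pow_add]
    have : ((j : ℚ) + m) = ((j + m : ℕ) : ℚ) := by push_cast; ring
    rw [this, OP_natCast h]
  exact eq_of_polyFun_of_nat (polyFun_coeff_OP_mul u u (m : ℚ) t)
    (PolyFun.comp_add (polyFun_coeff_OP u t) (m : ℚ))
    (fun j => congrArg (coeff t) (hnat j)) q

lemma OP_add (h : constantCoeff u = 0) (q q' : ℚ) :
    OP u q * OP u q' = OP u (q + q') := by
  apply MvPowerSeries.ext
  intro t
  have hphi : PolyFun (fun x => (coeff t) (OP u q * OP u x)) := by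
    have : (fun x => (coeff t) (OP u q * OP u x)) = fun x =>
        ∑ p ∈ Finset.HasAntidiagonal.antidiagonal t, (coeff p.1) (OP u q) * (coeff p.2) (OP u x) := by
      funext x; rw [coeff_mul]
    rw [this]
    exact PolyFun.sum _ _ fun p _ => (PolyFun.const _).mul (polyFun_coeff_OP u p.2)
  have hpsi : PolyFun (fun x => (coeff t) (OP u (q + x))) := by
    have : (fun x => (coeff t) (OP u (q + x))) = fun x => (coeff t) (OP u (x + q)) := by
      funext x; rw [add_comm]
    rw [this]
    exact (polyFun_coeff_OP u t).comp_add q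
  exact eq_of_polyFun_of_nat hphi hpsi
    (fun m => congrArg (coeff t) (OP_add_nat h q m)) q'

lemma OP_mul_base (h1 : constantCoeff α = 0) (h2 : constantCoeff β = 0)
    (hγ : γ = α + β + α * β) (q : ℚ) : OP γ q = OP α q * OP β q := by
  have h3 : constantCoeff γ = 0 := by
    rw [hγ]; simp [map_add, map_mul, h1, h2]
  have hfac : (1 + γ) = (1 + α) * (1 + β) := by rw [hγ]; ring
  apply MvPowerSeries.ext
  intro t
  have hnat : ∀ j : ℕ, OP γ (j : ℚ) = OP α (j : ℚ) * OP β (j : ℚ) := by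
    intro j
    rw [OP_natCast h1, OP_natCast h2, OP_natCast h3, hfac, mul_pow]
  have hpsi : PolyFun (fun q => (coeff t) (OP α q * OP β q)) := by
    have : (fun q => (coeff t) (OP α q * OP β q)) = fun q =>
        ∑ p ∈ Finset.HasAntidiagonal.antidiagonal t, (coeff p.1) (OP α q) * (coeff p.2) (OP β q) := by
      funext q; rw [coeff_mul]
    rw [this]
    exact PolyFun.sum _ _ fun p _ => (polyFun_coeff_OP α p.1).mul (polyFun_coeff_OP β p.2)
  exact eq_of_polyFun_of_nat (polyFun_coeff_OP γ t) hpsi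
    (fun j => congrArg (coeff t) (hnat j)) q


lemma OP_pow (h : constantCoeff u = 0) (k : ℕ) (q : ℚ) :
    OP u q ^ k = OP u (k * q) := by
  induction k with
  | zero => simp [OP_zero h]
  | succ k ih =>
    rw [pow_succ, ih, OP_add h,
      (by push_cast; ring : ((k : ℚ)) * q + q = (((k+1) : ℕ) : ℚ) * q)]

lemma OP_inv_cancel (h : constantCoeff u = 0) (q : ℚ) :
    OP u q * OP u (-q) = 1 := by
  rw [OP_add h, add_neg_cancel, OP_zero h]

lemma OP_cancel (h : constantCoeff u = 0) (q : ℚ) {x y : R2}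
    (hxy : x * OP u q = y * OP u q) : x = y := by
  have h1 : OP u q * OP u (-q) = 1 := OP_inv_cancel h q
  calc x = x * (OP u q * OP u (-q)) := by rw [h1, mul_one]
    _ = x * OP u q * OP u (-q) := by ring
    _ = y * OP u q * OP u (-q) := by rw [hxy]
    _ = y := by rw [mul_assoc, h1, mul_one]

lemma OP_pentagon {A B : R2} (hA : constantCoeff A = 0)
    (hB : constantCoeff B = 0) (a b : ℚ) :
    OP B b * OP (A + A * B) a =
      OP A a * (OP (A * B * OP A (-1)) (a + b) *
        OP (B * OP A (-1) * OP (A * B * OP A (-1)) (-1)) b) := by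
  set u := A * B * OP A (-1) with hu
  set B' := B * OP A (-1) * OP u (-1) with hB'
  have hcu : constantCoeff u = 0 := by
    rw [hu, map_mul, map_mul, hA, zero_mul, zero_mul]
  have hcB' : constantCoeff B' = 0 := by
    rw [hB', map_mul, map_mul, hB, zero_mul, zero_mul]
  have hmulA : OP A (-1) * (1 + A) = 1 := by
    rw [← OP_one hA, OP_add hA]; norm_num [OP_zero hA]
  have hi : A + A * B = u + A + u * A := by
    have h2 : u * (1 + A) = A * B * (OP A (-1) * (1 + A)) := by rw [hu]; ring
    have h3 : u + u * A = A * B := by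
      rw [(by ring : u + u * A = u * (1 + A)), h2, hmulA, mul_one]
    linear_combination -h3
  have hgam : ∀ q, OP (A + A * B) q = OP u q * OP A q := by
    intro q
    exact OP_mul_base hcu hA (by rw [hi]) q
  have hone_gam : (1 + A) * (1 + u) = 1 + (A + A * B) := by
    rw [hi]; ring
  have hii : ∀ q, OP (A + B + A * B) q = OP B' q * OP (A + A * B) q := by
    intro q
    apply OP_mul_base hcB' (by simp [map_add, map_mul, hA, hB]) ?_ q
    have hmulu : OP u (-1) * (1 + u) = 1 := by
      rw [← OP_one hcu, OP_add hcu]; norm_num [OP_zero hcu]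
    have hBres : B' * (1 + (A + A * B)) = B := by
      rw [← hone_gam, hB']
      calc B * OP A (-1) * OP u (-1) * ((1 + A) * (1 + u))
          = B * ((OP A (-1) * (1 + A)) * (OP u (-1) * (1 + u))) := by ring
        _ = B := by rw [hmulA, hmulu]; ring
    linear_combination -hBres
  have hiii : ∀ q, OP (A + B + A * B) q = OP A q * OP B q :=
    fun q => OP_mul_base hA hB (by ring) q
  have hkey : OP u b * OP B' b = OP B b := by
    apply OP_cancel hA b
    have h5 := hii b
    rw [hiii b, hgam b] at h5
    calc OP u b * OP B' b * OP A b = OP B' b * (OP u b * OP A b) := by ring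
      _ = OP B' b * OP (A + A * B) b := by rw [hgam b]
      _ = OP A b * OP B b := by rw [← hii b, hiii b]
      _ = OP B b * OP A b := by ring
  calc OP B b * OP (A + A * B) a = (OP u b * OP B' b) * (OP u a * OP A a) := by
        rw [hkey, hgam a]
    _ = OP A a * ((OP u a * OP u b) * OP B' b) := by ring
    _ = OP A a * (OP u (a + b) * OP B' b) := by rw [OP_add hcu]


/-! ### Part 3 : continuity and extensionality -/

lemma fin2_decomp (s : Fin 2 →₀ ℕ) :
    s = Finsupp.single 0 (s 0) + Finsupp.single 1 (s 1) := by
  ext i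
  fin_cases i
  · simp
  · simp

lemma expOf_apply0 (m : ℕ × ℕ) : expOf m 0 = m.1 := by simp [expOf]
lemma expOf_apply1 (m : ℕ × ℕ) : expOf m 1 = m.2 := by simp [expOf]

lemma expOf_pair_eq (s : Fin 2 →₀ ℕ) : expOf (s 0, s 1) = s := by
  rw [expOf]
  exact (fin2_decomp s).symm

lemma monomial_expOf_eq (m : ℕ × ℕ) (r : ℚ) :
    (monomial (expOf m) r : R2) = MvPowerSeries.C r * X 0 ^ m.1 * X 1 ^ m.2 := by
  rw [X_pow_eq, X_pow_eq, ← monomial_zero_eq_C_apply, monomial_mul_monomial,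
    monomial_mul_monomial]
  simp [expOf]

lemma isCont_comp {f g : R2 →ₐ[ℚ] R2} (hf : IsCont f) (hg : IsCont g) :
    IsCont (f.comp g) := by
  intro d
  obtain ⟨e1, he1⟩ := hf d
  obtain ⟨e2, he2⟩ := hg e1
  exact ⟨e2, fun r hr => he1 _ (he2 _ hr)⟩

/-- truncation of a power series below total degree `e` -/
def truncAt (r : R2) (e : ℕ) : R2 :=
  ∑ ab ∈ Finset.range e ×ˢ Finset.range e, (monomial (expOf ab) ((coeff (expOf ab)) r) : R2)

lemma coeff_truncAt (r : R2) (e : ℕ) {s : Fin 2 →₀ ℕ} (h0 : s 0 < e) (h1 : s 1 < e) :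
    (coeff s) (truncAt r e) = (coeff s) r := by
  classical
  rw [truncAt, map_sum]
  rw [Finset.sum_eq_single (s 0, s 1)]
  · rw [expOf_pair_eq, coeff_monomial_same]
  · intro ab _ hne
    apply coeff_monomial_ne
    intro he
    apply hne
    have e0 := congrArg (fun t => t 0) he
    have e1 := congrArg (fun t => t 1) he
    simp only [expOf_apply0, expOf_apply1] at e0 e1
    rw [Prod.ext_iff]
    exact ⟨e0.symm, e1.symm⟩
  · intro hmem
    exact absurd (by simp [h0, h1] : (s 0, s 1) ∈ Finset.range e ×ˢ Finset.range e) hmem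

lemma sub_truncAt_mem (r : R2) (e : ℕ) : r - truncAt r e ∈ maxIdeal ^ e := by
  apply mem_of_coeff_eq_zero
  intro s hs
  have h0 : s 0 < e := by unfold deg at hs; omega
  have h1 : s 1 < e := by unfold deg at hs; omega
  rw [map_sub, coeff_truncAt r e h0 h1, sub_self]

lemma ext_cont {f g : R2 →ₐ[ℚ] R2} (hf : IsCont f) (hg : IsCont g)
    (h : ∀ i : Fin 2, f (X i) = g (X i)) : f = g := by
  have hmono : ∀ (m : ℕ × ℕ) (r : ℚ), f (monomial (expOf m) r) = g (monomial (expOf m) r) := by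
    intro m r
    rw [monomial_expOf_eq, c_eq_algebraMap]
    simp only [map_mul, map_pow, AlgHom.commutes, h 0, h 1]
  have htr : ∀ (r : R2) (e : ℕ), f (truncAt r e) = g (truncAt r e) := by
    intro r e
    rw [truncAt, map_sum, map_sum]
    exact Finset.sum_congr rfl fun ab _ => hmono ab _
  apply AlgHom.ext
  intro r
  apply MvPowerSeries.ext
  intro s
  obtain ⟨e1, he1⟩ := hf (deg s + 1)
  obtain ⟨e2, he2⟩ := hg (deg s + 1)
  set e := max e1 e2 with he
  have hmem := sub_truncAt_mem r e
  have hf' : f (r - truncAt r e) ∈ maxIdeal ^ (deg s + 1) := by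
    apply he1
    exact Ideal.pow_le_pow_right (le_max_left e1 e2) hmem
  have hg' : g (r - truncAt r e) ∈ maxIdeal ^ (deg s + 1) := by
    apply he2
    exact Ideal.pow_le_pow_right (le_max_right e1 e2) hmem
  have key : f r - g r = f (r - truncAt r e) - g (r - truncAt r e) := by
    rw [map_sub, map_sub, htr r e]
    ring
  have : (coeff s) (f r - g r) = 0 := by
    rw [key, map_sub, coeff_eq_zero_of_mem hf' s (by omega),
      coeff_eq_zero_of_mem hg' s (by omega), sub_self]
  rw [map_sub, sub_eq_zero] at this
  exact this

/-- a continuous algebra endomorphism commutes with formal powers -/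
lemma map_OP {f : R2 →ₐ[ℚ] R2} (hf : IsCont f) {u : R2}
    (hu : constantCoeff u = 0) (hfu : constantCoeff (f u) = 0) (q : ℚ) :
    f (OP u q) = OP (f u) q := by
  apply MvPowerSeries.ext
  intro t
  obtain ⟨e, he⟩ := hf (deg t + 1)
  set N := max e (deg t + 1) with hN
  set S := ∑ k ∈ Finset.range N, Ring.choose q k • u ^ k with hS
  have h1 : f (OP u q - S) ∈ maxIdeal ^ (deg t + 1) := by
    apply he
    exact Ideal.pow_le_pow_right (le_max_left _ _) (OP_sub_sum_mem hu N)
  have hfS : f S = ∑ k ∈ Finset.range N, Ring.choose q k • (f u) ^ k := by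
    rw [hS, map_sum]
    exact Finset.sum_congr rfl fun k _ => by rw [map_smul, map_pow]
  have h2 : OP (f u) q - ∑ k ∈ Finset.range N, Ring.choose q k • (f u) ^ k
      ∈ maxIdeal ^ (deg t + 1) := by
    exact Ideal.pow_le_pow_right (le_max_right _ _) (OP_sub_sum_mem hfu N)
  have e1 : (coeff t) (f (OP u q)) = (coeff t) (f S) := by
    have := coeff_eq_zero_of_mem h1 t (by omega)
    rw [map_sub, map_sub] at this
    linarith
  have e2 : (coeff t) (OP (f u) q) =
      (coeff t) (∑ k ∈ Finset.range N, Ring.choose q k • (f u) ^ k) := by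
    have := coeff_eq_zero_of_mem h2 t (by omega)
    rw [map_sub] at this
    linarith
  rw [e1, e2, hfS]


/-! ### Part 4 : the dilogarithm automorphisms -/

/-- the monomial `x^m` -/
def M (m : ℕ × ℕ) : R2 := monomial (expOf m) 1

lemma expOf_eq_zero_iff {m : ℕ × ℕ} : expOf m = 0 ↔ m = 0 := by
  constructor
  · intro h
    have h0 := congrArg (fun t => t 0) h
    have h1 := congrArg (fun t => t 1) h
    simp only [expOf_apply0, expOf_apply1] at h0 h1
    rw [Prod.ext_iff]
    exact ⟨h0, h1⟩
  · rintro rfl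
    ext i
    fin_cases i <;> simp [expOf]

lemma cc_M {m : ℕ × ℕ} (hm : m ≠ 0) : constantCoeff (M m) = 0 := by
  rw [M, ← coeff_zero_eq_constantCoeff_apply, coeff_monomial_ne]
  intro h
  exact hm (expOf_eq_zero_iff.mp h.symm)

lemma M_pow (m : ℕ × ℕ) (k : ℕ) : M m ^ k = monomial (k • expOf m) 1 := by
  induction k with
  | zero => simp [monomial_zero_one]
  | succ k ih =>
    rw [pow_succ, ih, M, monomial_mul_monomial, one_mul, succ_nsmul]

lemma expOf_add (m m' : ℕ × ℕ) : expOf (m + m') = expOf m + expOf m' := by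
  ext i
  fin_cases i <;> simp [expOf]

lemma M_add (m m' : ℕ × ℕ) : M (m + m') = M m * M m' := by
  rw [M, M, M, monomial_mul_monomial, one_mul, expOf_add]

lemma deg_expOf (m : ℕ × ℕ) : deg (expOf m) = m.1 + m.2 := by
  simp [deg, expOf_apply0, expOf_apply1]

lemma deg_nsmul (k : ℕ) (e : Fin 2 →₀ ℕ) : deg (k • e) = k * deg e := by
  simp [deg, Finsupp.smul_apply]
  ring

lemma binom_eq {m : ℕ × ℕ} (hm : m ≠ 0) (q : ℚ) : binomSeries m q = OP (M m) q := by
  classical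
  have hdegm : 1 ≤ deg (expOf m) := by
    rcases Nat.eq_zero_or_pos (deg (expOf m)) with h | h
    · exact absurd (expOf_eq_zero_iff.mp (deg_eq_zero_iff.mp h)) hm
    · omega
  have hinj : ∀ k k' : ℕ, k • expOf m = k' • expOf m → k = k' := by
    intro k k' h
    have := congrArg deg h
    rw [deg_nsmul, deg_nsmul] at this
    exact Nat.eq_of_mul_eq_mul_right hdegm this
  apply MvPowerSeries.ext
  intro t
  have hOP : (coeff t) (OP (M m) q) =
      ∑ k ∈ Finset.range (deg t + 1), Ring.choose q k *
        (if t = k • expOf m then 1 else 0) := by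
    have : (coeff t) (OP (M m) q) =
        (coeff t) (∑ k ∈ Finset.range (deg t + 1), Ring.choose q k • M m ^ k) := rfl
    rw [this, map_sum]
    refine Finset.sum_congr rfl fun k _ => ?_
    rw [map_smul, M_pow, coeff_monomial, smul_eq_mul]
  have hbin : (coeff t) (binomSeries m q) =
      (if h : ∃ k : ℕ, t = k • expOf m then Ring.choose q h.choose else 0) := rfl
  rw [hOP, hbin]
  by_cases h : ∃ k : ℕ, t = k • expOf m
  · rw [dif_pos h]
    set k0 := h.choose with hk0
    have hspec : t = k0 • expOf m := h.choose_spec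
    have hk0le : k0 ∈ Finset.range (deg t + 1) := by
      rw [Finset.mem_range]
      have : deg t = k0 * deg (expOf m) := by rw [hspec, deg_nsmul]
      nlinarith
    rw [Finset.sum_eq_single k0]
    · rw [if_pos hspec, mul_one]
    · intro k _ hk
      rw [if_neg, mul_zero]
      intro ht
      exact hk (hinj k k0 (by rw [← ht, ← hspec]))
    · intro hk
      exact absurd hk0le hk
  · rw [dif_neg h, eq_comm]
    apply Finset.sum_eq_zero
    intro k _
    rw [if_neg (fun ht => h ⟨k, ht⟩), mul_zero]

/-- abbreviation for the pairing -/
def om (lam : ℚ) (w m : ℕ × ℕ) : ℚ := omegaForm lam (nn2z w) (nn2z m)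

lemma psi_X {lam κ : ℚ} {w : ℕ × ℕ} {f : R2 →ₐ[ℚ] R2} (hd : IsDilog lam κ w f)
    (hw : w ≠ 0) (i : Fin 2) :
    f (X i) = X i * OP (M w) (κ * om lam w (basisVec i)) := by
  rw [hd.2 i, binom_eq hw]
  rfl

lemma psi_M {lam κ : ℚ} {w : ℕ × ℕ} {f : R2 →ₐ[ℚ] R2} (hd : IsDilog lam κ w f)
    (hw : w ≠ 0) (m : ℕ × ℕ) :
    f (M m) = M m * OP (M w) (κ * om lam w m) := by
  have hM : M m = X 0 ^ m.1 * X 1 ^ m.2 := by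
    rw [M, monomial_expOf_eq, map_one, one_mul]
  have hcc := cc_M hw
  rw [hM, map_mul, map_pow, map_pow, psi_X hd hw 0, psi_X hd hw 1,
    mul_pow, mul_pow, OP_pow hcc, OP_pow hcc]
  have : X 0 ^ m.1 * OP (M w) ((m.1 : ℚ) * (κ * om lam w (basisVec 0))) *
      (X 1 ^ m.2 * OP (M w) ((m.2 : ℚ) * (κ * om lam w (basisVec 1)))) =
      (X 0 ^ m.1 * X 1 ^ m.2) * (OP (M w) ((m.1 : ℚ) * (κ * om lam w (basisVec 0))) *
        OP (M w) ((m.2 : ℚ) * (κ * om lam w (basisVec 1)))) := by ring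
  rw [this, OP_add hcc, ← hM]
  have harg : (m.1 : ℚ) * (κ * om lam w (basisVec 0)) + (m.2 : ℚ) * (κ * om lam w (basisVec 1)) =
      κ * om lam w m := by
    simp only [om, omegaForm, nn2z, basisVec, Matrix.cons_val_zero, Matrix.cons_val_one,
      Matrix.head_cons]
    push_cast
    ring
  rw [harg]


/-! ### Part 5 : group relations -/

variable {lam : ℚ}

lemma om_self (a : ℕ × ℕ) : om lam a a = 0 := by
  simp only [om, omegaForm]; ring

lemma om_skew (a b : ℕ × ℕ) : om lam a b = - om lam b a := by
  simp only [om, omegaForm]; ring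

lemma om_add_left (a b m : ℕ × ℕ) : om lam (a + b) m = om lam a m + om lam b m := by
  simp only [om, omegaForm, nn2z, Prod.fst_add, Prod.snd_add]
  push_cast
  ring

lemma om_add_right (a b m : ℕ × ℕ) : om lam m (a + b) = om lam m a + om lam m b := by
  simp only [om, omegaForm, nn2z, Prod.fst_add, Prod.snd_add]
  push_cast
  ring

lemma om_smul_right (k : ℕ) (a m : ℕ × ℕ) : om lam m (k • a) = k * om lam m a := by
  have h1 : (k • a).1 = k * a.1 := rfl
  have h2 : (k • a).2 = k * a.2 := rfl
  simp only [om, omegaForm, nn2z, h1, h2]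
  push_cast
  ring

lemma add_ne_zero_left {x y : ℕ × ℕ} (hx : x ≠ 0) : x + y ≠ 0 := by
  intro h
  apply hx
  have h1 : x.1 + y.1 = 0 := congrArg Prod.fst h
  have h2 : x.2 + y.2 = 0 := congrArg Prod.snd h
  have hx1 : x.1 = 0 := by omega
  have hx2 : x.2 = 0 := by omega
  rw [Prod.ext_iff]
  exact ⟨hx1, hx2⟩

lemma psi_comp_add {κ κ' : ℚ} {w : ℕ × ℕ} {f g h : R2 →ₐ[ℚ] R2}
    (hf : IsDilog lam κ w f) (hg : IsDilog lam κ' w g) (hh : IsDilog lam (κ + κ') w h)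
    (hw : w ≠ 0) : f.comp g = h := by
  apply ext_cont (isCont_comp hf.1 hg.1) hh.1
  intro i
  have hcc := cc_M hw
  have hfM : f (M w) = M w := by
    rw [psi_M hf hw w, om_self, mul_zero, OP_zero hcc, mul_one]
  have e1 : (f.comp g) (X i) = X i * OP (M w) (κ * om lam w (basisVec i)) *
      OP (M w) (κ' * om lam w (basisVec i)) := by
    rw [AlgHom.comp_apply, psi_X hg hw i, map_mul, psi_X hf hw i,
      map_OP hf.1 hcc (by rw [hfM]; exact hcc), hfM]
  rw [e1, psi_X hh hw i, mul_assoc, OP_add hcc,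
    (by ring : κ * om lam w (basisVec i) + κ' * om lam w (basisVec i) =
      (κ + κ') * om lam w (basisVec i))]

lemma psi_pentagon {κ : ℚ} {w w' : ℕ × ℕ} {f g f' : R2 →ₐ[ℚ] R2}
    (hf : IsDilog lam κ w f) (hg : IsDilog lam κ (w + w') g) (hf' : IsDilog lam κ w' f')
    (hw : w ≠ 0) (hw' : w' ≠ 0) (hww' : κ * om lam w' w = 1) :
    f'.comp f = (f.comp g).comp f' := by
  have hww0 : w + w' ≠ 0 := add_ne_zero_left hw
  have hA : constantCoeff (M w) = 0 := cc_M hw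
  have hB : constantCoeff (M w') = 0 := cc_M hw'
  have hW : constantCoeff (M (w + w')) = 0 := cc_M hww0
  have hWAB : M (w + w') = M w * M w' := M_add w w'
  have h2 : κ * om lam w w' = -1 := by
    rw [om_skew, mul_neg, hww']
  have h3 : κ * om lam (w + w') w' = -1 := by
    rw [om_add_left, om_self, mul_add, h2]
    ring
  have h4 : κ * om lam w (w + w') = -1 := by
    rw [om_add_right, om_self, mul_add, h2]
    ring
  apply ext_cont (isCont_comp hf'.1 hf.1) (isCont_comp (isCont_comp hf.1 hg.1) hf'.1)
  intro i
  set a := κ * om lam w (basisVec i) with hadef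
  set b := κ * om lam w' (basisVec i) with hbdef
  have habi : κ * om lam (w + w') (basisVec i) = a + b := by
    rw [om_add_left, mul_add]
  have hf'A : f' (M w) = M w * (1 + M w') := by
    rw [psi_M hf' hw' w, hww', OP_one hB]
  have hfW : f (M (w + w')) = M (w + w') * OP (M w) (-1) := by
    rw [psi_M hf hw (w + w'), h4]
  have hfB : f (M w') = M w' * OP (M w) (-1) := by
    rw [psi_M hf hw w', h2]
  have hgB : g (M w') = M w' * OP (M (w + w')) (-1) := by
    rw [psi_M hg hww0 w', h3]
  have hccf'A : constantCoeff (f' (M w)) = 0 := by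
    rw [hf'A, map_mul, hA, zero_mul]
  have hccfW : constantCoeff (f (M (w + w'))) = 0 := by
    rw [hfW, map_mul, hW, zero_mul]
  have hccgB : constantCoeff (g (M w')) = 0 := by
    rw [hgB, map_mul, hB, zero_mul]
  have hccfgB : constantCoeff (f (g (M w'))) = 0 := by
    rw [hgB, map_mul, hfB, map_mul, map_mul, hB, zero_mul, zero_mul]
  have hLHS : (f'.comp f) (X i) = X i * OP (M w') b * OP (M w + M w * M w') a := by
    rw [AlgHom.comp_apply, psi_X hf hw i, map_mul, psi_X hf' hw' i,
      map_OP hf'.1 hA hccf'A, hf'A,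
      (by ring : M w * (1 + M w') = M w + M w * M w')]
  have hstep2 : g (X i * OP (M w') b) = X i * OP (M (w + w')) (a + b) * OP (g (M w')) b := by
    rw [map_mul, psi_X hg hww0 i, habi, map_OP hg.1 hB hccgB]
  have hfgB : f (g (M w')) =
      M w' * OP (M w) (-1) * OP (M w * M w' * OP (M w) (-1)) (-1) := by
    rw [hgB, map_mul, hfB, map_OP hf.1 hW hccfW, hfW, hWAB]
  have hstep3 : f (X i * OP (M (w + w')) (a + b) * OP (g (M w')) b) =
      X i * OP (M w) a * (OP (M w * M w' * OP (M w) (-1)) (a + b) *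
        OP (M w' * OP (M w) (-1) * OP (M w * M w' * OP (M w) (-1)) (-1)) b) := by
    rw [map_mul, map_mul, psi_X hf hw i, map_OP hf.1 hW hccfW, hfW,
      map_OP hf.1 hccgB hccfgB, hfgB, hWAB]
    ring
  have hRHS : ((f.comp g).comp f') (X i) = X i * OP (M w) a *
      (OP (M w * M w' * OP (M w) (-1)) (a + b) *
        OP (M w' * OP (M w) (-1) * OP (M w * M w' * OP (M w) (-1)) (-1)) b) := by
    have : ((f.comp g).comp f') (X i) = f (g (f' (X i))) := rfl
    rw [this, psi_X hf' hw' i, hstep2, hstep3]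
  rw [hLHS, hRHS]
  linear_combination (X i : R2) * OP_pentagon hA hB a b


/-! ### Part 6 : assembling the relation -/

lemma mul_eq_comp (f g : R2 →ₐ[ℚ] R2) : f * g = f.comp g := rfl

lemma prodFwd_self (f : ℕ → (R2 →ₐ[ℚ] R2)) (a : ℕ) : prodFwd f a a = f a := by
  unfold prodFwd
  have h : a + 1 - a = 1 := by omega
  rw [h]
  show ([f (a+0)]).prod = f a
  simp

lemma prodFwd_one_zero (f : ℕ → (R2 →ₐ[ℚ] R2)) : prodFwd f 1 0 = 1 := rfl

lemma prodFwd_succ (f : ℕ → (R2 →ₐ[ℚ] R2)) (a b : ℕ) (h : a ≤ b + 1) :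
    prodFwd f a (b + 1) = prodFwd f a b * f (b + 1) := by
  unfold prodFwd
  have h1 : b + 1 + 1 - a = (b + 1 - a) + 1 := by omega
  rw [h1, List.range_succ, List.map_append, List.prod_append]
  have h2 : a + (b + 1 - a) = b + 1 := by omega
  simp [h2]

lemma step_monoid {Mo : Type*} [Monoid Mo] (X Q H χ L A B F4 : Mo)
    (hBC : L * χ = χ * (A * (B * L))) (hχχ : χ * χ = F4) :
    (X * (Q * (H * (χ * L)))) * χ = X * ((Q * (H * F4)) * (A * (B * L))) := by
  simp only [mul_assoc]
  rw [hBC, ← mul_assoc χ χ, hχχ]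

/-- the base case : the `c`-deformed pentagon relation -/
lemma BC (lam c : ℚ) (Psi : ℚ → ℕ × ℕ → (R2 →ₐ[ℚ] R2))
    (hPsi : ∀ (κ : ℚ) (m : ℕ × ℕ), m ≠ 0 → IsDilog lam κ m (Psi κ m))
    (n n' : ℕ × ℕ) (hn : n ≠ 0) (hn' : n' ≠ 0)
    (hw1 : c * om lam n' n = 1) :
    Psi c n' * Psi (2*c) n =
      Psi (2*c) n * (Psi c (2•n + n') * (Psi (2*c) (n + n') * Psi c n')) := by
  have hnn' : n + n' ≠ 0 := add_ne_zero_left hn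
  have h2n : (2:ℕ)•n ≠ 0 := by rw [two_smul]; exact add_ne_zero_left hn
  have h2nn' : (2:ℕ)•n + n' ≠ 0 := add_ne_zero_left h2n
  have heq : n + (n + n') = 2•n + n' := by rw [two_smul, add_assoc]
  have hw2 : c * om lam (n + n') n = 1 := by
    rw [om_add_left, om_self, zero_add, hw1]
  have hDc : IsDilog lam c n (Psi c n) := hPsi c n hn
  have hDG : IsDilog lam c (n + n') (Psi c (n + n')) := hPsi c (n + n') hnn'
  have hDL : IsDilog lam c n' (Psi c n') := hPsi c n' hn'
  have hD2 : IsDilog lam (c + c) n (Psi (2*c) n) := by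
    rw [(by ring : c + c = 2*c)]
    exact hPsi (2*c) n hn
  have hD2G : IsDilog lam (c + c) (n + n') (Psi (2*c) (n + n')) := by
    rw [(by ring : c + c = 2*c)]
    exact hPsi (2*c) (n + n') hnn'
  have hDH : IsDilog lam c (n + (n + n')) (Psi c (2•n + n')) := by
    rw [heq]
    exact hPsi c (2•n + n') h2nn'
  have A1 : Psi c n * Psi c n = Psi (2*c) n := psi_comp_add hDc hDc hD2 hn
  have A2 : Psi c (n + n') * Psi c (n + n') = Psi (2*c) (n + n') :=
    psi_comp_add hDG hDG hD2G hnn'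
  have P1 : Psi c n' * Psi c n = Psi c n * Psi c (n + n') * Psi c n' :=
    psi_pentagon hDc hDG hDL hn hn' hw1
  have P2 : Psi c (n + n') * Psi c n = Psi c n * Psi c (2•n + n') * Psi c (n + n') :=
    psi_pentagon hDc hDH hDG hn hnn' hw2
  set L := Psi c n' with hL
  set F := Psi c n with hF
  set G := Psi c (n + n') with hG
  set H := Psi c (2•n + n') with hH
  calc L * Psi (2*c) n
      = (L * F) * F := by rw [← A1, ← mul_assoc]
    _ = ((F * G) * L) * F := by rw [P1]
    _ = (F * G) * (L * F) := by rw [mul_assoc]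
    _ = (F * G) * ((F * G) * L) := by rw [P1]
    _ = F * ((G * F) * (G * L)) := by simp only [mul_assoc]
    _ = F * ((F * H * G) * (G * L)) := by rw [P2]
    _ = (F * F) * (H * ((G * G) * L)) := by simp only [mul_assoc]
    _ = Psi (2*c) n * (H * (Psi (2*c) (n + n') * L)) := by rw [A1, A2]


lemma main_rel (lam c : ℚ) (Psi : ℚ → ℕ × ℕ → (R2 →ₐ[ℚ] R2))
    (hPsi : ∀ (κ : ℚ) (m : ℕ × ℕ), m ≠ 0 → IsDilog lam κ m (Psi κ m))
    (n n' : ℕ × ℕ) (hn : n ≠ 0) (hn' : n' ≠ 0) (hw1 : c * om lam n' n = 1) (l : ℕ) :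
    Psi c n' * prodFwd (fun p => Psi (2*c) (n + p • n')) 0 l =
      Psi (2*c) n *
        (prodFwd (fun p => Psi c (2•n + (2*p-1)•n') * Psi (4*c) (n + p•n')) 1 l *
          (Psi c (2•n + (2*l+1)•n') * (Psi (2*c) (n + (l+1)•n') * Psi c n'))) := by
  induction l with
  | zero =>
    rw [prodFwd_self, prodFwd_one_zero, one_mul]
    have e1 : n + (0:ℕ) • n' = n := by rw [zero_smul, add_zero]
    have e2 : (2*0+1 : ℕ) = 1 := rfl
    have e3 : (0+1 : ℕ) = 1 := rfl
    rw [e1, e2, one_smul]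
    exact BC lam c Psi hPsi n n' hn hn' hw1
  | succ l ih =>
    have hm : n + (l+1) • n' ≠ 0 := add_ne_zero_left hn
    have hwm : c * om lam n' (n + (l+1) • n') = 1 := by
      rw [om_add_right, om_smul_right, om_self, mul_zero, add_zero]
      exact hw1
    have hBCm := BC lam c Psi hPsi (n + (l+1) • n') n' hm hn' hwm
    have hchi : Psi (2*c) (n + (l+1)•n') * Psi (2*c) (n + (l+1)•n') =
        Psi (4*c) (n + (l+1)•n') := by
      apply psi_comp_add (hPsi (2*c) _ hm) (hPsi (2*c) _ hm) ?_ hm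
      rw [(by ring : 2*c + 2*c = 4*c)]
      exact hPsi (4*c) _ hm
    rw [prodFwd_succ _ 0 l (by omega), ← mul_assoc, ih, prodFwd_succ _ 1 l (by omega)]
    have w1 : (2*(l+1)-1 : ℕ) = 2*l+1 := by omega
    rw [w1]
    have w2 : (2:ℕ)•(n + (l+1)•n') + n' = 2•n + (2*(l+1)+1)•n' := by
      rw [smul_add, smul_smul, add_assoc, ← succ_nsmul]
    rw [← w2]
    have w3 : (n + (l+1)•n') + n' = n + (l+1+1)•n' := by
      rw [add_assoc, ← succ_nsmul]
    rw [← w3]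
    exact step_monoid _ _ _ _ _ _ _ _ hBCm hchi

end SD

theorem lemma_4_2 (l : ℕ) (lam : ℚ) (hlam : lam ≠ 0)
    (Psi : ℚ → ℕ × ℕ → (R2 →ₐ[ℚ] R2))
    (hPsi : ∀ (c : ℚ) (n : ℕ × ℕ), n ≠ 0 → IsDilog lam c n (Psi c n))
    (n n' : ℕ × ℕ) (hn : n ≠ 0) (hn' : n' ≠ 0)
    (c : ℚ) (hc : c ≠ 0)
    (hw : omegaForm lam (nn2z n') (nn2z n) = 1 / c) :
    (Psi c n').comp (prodFwd (fun p => Psi (2 * c) (n + p • n')) 0 l) =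
      ((((Psi (2 * c) n).comp
            (prodFwd
              (fun p => (Psi c (2 • n + (2 * p - 1) • n')).comp
                (Psi (4 * c) (n + p • n'))) 1 l)).comp
          (Psi c (2 • n + (2 * l + 1) • n'))).comp
        (Psi (2 * c) (n + (l + 1) • n'))).comp (Psi c n') := by
  have hw1 : c * SD.om lam n' n = 1 := by
    unfold SD.om
    rw [hw, mul_one_div, div_self hc]
  have key := SD.main_rel lam c Psi hPsi n n' hn hn' hw1 l
  show Psi c n' * prodFwd (fun p => Psi (2 * c) (n + p • n')) 0 l =
      (((Psi (2 * c) n *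
            prodFwd
              (fun p => Psi c (2 • n + (2 * p - 1) • n') *
                Psi (4 * c) (n + p • n')) 1 l) *
          Psi c (2 • n + (2 * l + 1) • n')) *
        Psi (2 * c) (n + (l + 1) • n')) * Psi c n'
  simp only [mul_assoc]
  exact key

end
end
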